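/- arXiv:math/0605680 — 9 statements merged into one kernel-verified Lean document; each statement's English description precedes it below -/
import Mathlib

section
/- Let A be an associative algebra graded by an abelian group G, and let M̃ = ⊕_{g∈G} M̃_g be a graded-simple A-module which, as an ungraded A-module, has a maximal submodule with simple quotient φ: M̃ → M. Set M_g = φ(M̃_g). Then {M_g | g ∈ G} is a thin covering of the simple module M, each restriction φ_g: M̃_g → M_g is a bijection, and M̃ is graded-isomorphic to ⊕_{g∈G} M_g. -/
/-- A `G`-covering of the `A`-module `M`, where `𝒜` is the `G`-grading of `A`. -/
def IsCovering {G A M : Type*} [AddCommGroup G] [Ring A] [Algebra ℂ A]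
    [AddCommGroup M] [Module ℂ M] [Module A M] [IsScalarTower ℂ A M]
    (𝒜 : G → Submodule ℂ A) (C : G → Submodule ℂ M) : Prop :=
  (⨆ g, C g) = ⊤ ∧ ∀ g h : G, ∀ a ∈ 𝒜 g, ∀ m ∈ C h, a • m ∈ C (g + h)

/-- `C ⪯ D` : `C` is equivalent (via the shift `k`) to a covering contained
componentwise in `D`. -/
def CoveringLE {G M : Type*} [AddCommGroup G] [AddCommGroup M] [Module ℂ M]
    (C D : G → Submodule ℂ M) : Prop :=
  ∃ k : G, ∀ g, C (g + k) ≤ D g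

/-- A thin covering is a minimal element of the preordered set of coverings. -/
def IsThinCovering {G A M : Type*} [AddCommGroup G] [Ring A] [Algebra ℂ A]
    [AddCommGroup M] [Module ℂ M] [Module A M] [IsScalarTower ℂ A M]
    (𝒜 : G → Submodule ℂ A) (C : G → Submodule ℂ M) : Prop :=
  IsCovering 𝒜 C ∧
    ∀ D : G → Submodule ℂ M, IsCovering 𝒜 D → CoveringLE D C → CoveringLE C D

/-- Theorem 1.4 (Billig–Lau): let `M̃ = ⊕_g ℳ g` be a graded-simple module over
the `G`-graded algebra `A`, and suppose that as an ungraded module it has a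
maximal submodule, with simple quotient `φ : M̃ → M`.  Then the images
`M_g = φ(ℳ g)` form a thin covering of `M`, each restriction
`φ_g : ℳ g → M_g` is bijective, and (via these bijections, which intertwine the
homogeneous actions since `φ` is `A`-linear) `M̃` is graded-isomorphic to the
graded module `⊕_g M_g` associated with this thin covering. -/
theorem thin_covering_from_graded_simple
    {G A M' M : Type*} [AddCommGroup G] [DecidableEq G] [Ring A] [Algebra ℂ A]
    [AddCommGroup M'] [Module ℂ M'] [Module A M'] [IsScalarTower ℂ A M']
    [AddCommGroup M] [Module ℂ M] [Module A M] [IsScalarTower ℂ A M]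
    (𝒜 : G → Submodule ℂ A)
    (hmul : ∀ g h : G, ∀ a ∈ 𝒜 g, ∀ b ∈ 𝒜 h, a * b ∈ 𝒜 (g + h))
    (hone : (1 : A) ∈ 𝒜 (0 : G)) (hsup : (⨆ g, 𝒜 g) = ⊤)
    (ℳ : G → Submodule ℂ M') (hint : DirectSum.IsInternal ℳ)
    (hact : ∀ g h : G, ∀ a ∈ 𝒜 g, ∀ m ∈ ℳ h, a • m ∈ ℳ (g + h))
    (hgrsimple : ∀ N : G → Submodule ℂ M', (∀ g, N g ≤ ℳ g) →
      (∀ g h : G, ∀ a ∈ 𝒜 g, ∀ m ∈ N h, a • m ∈ N (g + h)) →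
      (∃ g, N g ≠ ⊥) → ∀ g, N g = ℳ g)
    (φ : M' →ₗ[A] M) (hφ : Function.Surjective φ)
    (hM : IsSimpleModule A M) :
    IsThinCovering 𝒜 (fun g => (ℳ g).map (φ.restrictScalars ℂ)) ∧
      ∀ g : G, Set.InjOn φ (ℳ g) := by

  have hMnt : Nontrivial M := IsSimpleModule.nontrivial A M
  
  have hsupM' : (⨆ g, ℳ g) = ⊤ := hint.submodule_iSup_eq_top
  -- each graded piece meets the kernel trivially
  have hker : ∀ g, ℳ g ⊓ LinearMap.ker (φ.restrictScalars ℂ) = ⊥ := by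
    by_contra h
    push_neg at h
    obtain ⟨g0, hg0⟩ := h
    have hall := hgrsimple (fun g => ℳ g ⊓ LinearMap.ker (φ.restrictScalars ℂ)) (fun g => inf_le_left)
      (fun g h a ha m hm => ⟨hact g h a ha m hm.1, by
        have : φ m = 0 := hm.2
        show φ (a • m) = 0
        rw [map_smul, this, smul_zero]⟩)
      ⟨g0, hg0⟩
    have hle : (⊤ : Submodule ℂ M') ≤ LinearMap.ker (φ.restrictScalars ℂ) := by
      rw [← hsupM']
      refine iSup_le fun g => ?_
      rw [← hall g]
      exact inf_le_right
    obtain ⟨y, hy⟩ := exists_ne (0 : M)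
    obtain ⟨x, rfl⟩ := hφ y
    exact hy (hle trivial)
  have hinj : ∀ g : G, Set.InjOn φ (ℳ g) := by
    intro g x hx y hy hxy
    have : x - y ∈ ℳ g ⊓ LinearMap.ker (φ.restrictScalars ℂ) := by
      refine ⟨sub_mem hx hy, ?_⟩
      show φ (x - y) = 0
      rw [map_sub, hxy, sub_self]
    rw [hker g] at this
    exact sub_eq_zero.mp this
  have hcov : IsCovering 𝒜 (fun g => (ℳ g).map (φ.restrictScalars ℂ)) := by
    constructor
    · rw [← Submodule.map_iSup, hsupM', Submodule.map_top, LinearMap.range_eq_top]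
      exact hφ
    · rintro g h a ha m ⟨x, hx, rfl⟩
      exact ⟨a • x, hact g h a ha x hx, by simp only [LinearMap.coe_restrictScalars, map_smul]⟩
  refine ⟨⟨hcov, ?_⟩, hinj⟩
  rintro D ⟨hDsup, hDact⟩ ⟨k, hk⟩
  -- pull D back to a graded submodule of M'
  set N : G → Submodule ℂ M' := fun g => ℳ g ⊓ (D (g + k)).comap (φ.restrictScalars ℂ) with hN
  have hNact : ∀ g h : G, ∀ a ∈ 𝒜 g, ∀ m ∈ N h, a • m ∈ N (g + h) := by
    intro g h a ha m hm
    refine ⟨hact g h a ha m hm.1, ?_⟩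
    have : φ m ∈ D (h + k) := hm.2
    have h2 := hDact g (h + k) a ha _ this
    show φ (a • m) ∈ D (g + h + k)
    rw [map_smul, add_assoc]
    exact h2
  have hDne : ∃ g, D g ≠ ⊥ := by
    by_contra hD
    push_neg at hD
    have : (⊤ : Submodule ℂ M) = ⊥ := by
      rw [← hDsup]; simp [hD]
    exact absurd this.symm bot_ne_top
  obtain ⟨g1, hg1⟩ := hDne
  have hNne : ∃ g, N g ≠ ⊥ := by
    obtain ⟨x, hx, hx0⟩ := Submodule.exists_mem_ne_zero_of_ne_bot hg1
    have hx' : x ∈ D (g1 - k + k) := by rwa [sub_add_cancel]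
    have := hk (g1 - k) hx'
    obtain ⟨m, hm, rfl⟩ := this
    refine ⟨g1 - k, fun hbot => ?_⟩
    have hmN : m ∈ N (g1 - k) := ⟨hm, by
      simpa only [SetLike.mem_coe, Submodule.mem_comap, sub_add_cancel] using hx'⟩
    rw [hbot] at hmN
    simp only [Submodule.mem_bot] at hmN
    subst hmN
    exact hx0 (map_zero (φ.restrictScalars ℂ))
  have hall := hgrsimple N (fun g => inf_le_left) hNact hNne
  refine ⟨-k, fun g => ?_⟩
  have h1 : ℳ (g + -k) ≤ (D (g + -k + k)).comap (φ.restrictScalars ℂ) := by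
    rw [← hall (g + -k)]; exact inf_le_right
  have h2 : (ℳ (g + -k)).map (φ.restrictScalars ℂ) ≤ D (g + -k + k) := Submodule.map_le_iff_le_comap.mpr h1
  simpa only [neg_add_cancel_right] using h2
end

section
/- Let A be a ℂ-algebra, M a finite-dimensional simple A-module with action ρ, and let η₁, ..., η_r be pairwise commuting automorphisms of A of finite orders s₁, ..., s_r. Suppose T₁, ..., T_r are invertible operators on M with ρ(η_j(a)) = T_j ρ(a) T_j⁻¹ for all a ∈ A and all j. Then for each pair i, j there is a scalar q_{ij} ∈ ℂ* with T_i T_j = q_{ij} T_j T_i, and q_{ij}^{gcd(s_i, s_j)} = 1. In particular, t_i ↦ T_i defines a representation of a cyclotomic quantum torus. -/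
/-!
Each `T i` is `η i`-semilinear for the `A`-action, so `T i * T j` and `T j * T i` are both
semilinear for `η i * η j = η j * η i`; their ratio commutes with `A` and is a scalar `q i j`
by Schur's lemma. Likewise `T i ^ s i` is semilinear for `η i ^ s i = 1`, hence a nonzero
scalar, and commuting it past `T j` gives `q i j ^ s i = 1`. Since `q j i = (q i j)⁻¹`, also
`q i j ^ s j = 1`, and the two combine to `q i j ^ gcd (s i) (s j) = 1`.
-/

section QCommute

variable {K B : Type*} [Field K] [Ring B] [Algebra K B]

theorem pow_mul_eq_smul_mul_pow {a b : B} {c : K} (h : a * b = c • (b * a)) (n : ℕ) :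
    a ^ n * b = c ^ n • (b * a ^ n) := by
  induction n with
  | zero => simp
  | succ n ih =>
    rw [pow_succ, mul_assoc, h, mul_smul_comm, ← mul_assoc, ih, smul_mul_assoc, smul_smul,
      mul_assoc, ← pow_succ, ← pow_succ']

variable [Module.IsTorsionFree K B]

theorem eq_one_of_smul_eq_self {c : K} {x : B} (hx : x ≠ 0) (h : c • x = x) : c = 1 :=
  smul_left_injective K hx (by simpa using h)

theorem mul_eq_one_of_mul_eq_smul_mul {a b : B} {c d : K} (hab : a * b = c • (b * a))
    (hba : b * a = d • (a * b)) (h0 : a * b ≠ 0) : c * d = 1 :=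
  eq_one_of_smul_eq_self h0 (by rw [mul_smul, ← hba, ← hab])

theorem pow_eq_one_of_mul_eq_smul_mul {a b : B} {c lam : K} {n : ℕ} (h : a * b = c • (b * a))
    (ha : a ^ n = lam • 1) (hlam : lam ≠ 0) (hb : b ≠ 0) : c ^ n = 1 := by
  have h' := pow_mul_eq_smul_mul_pow h n
  rw [ha, smul_one_mul, mul_smul_one] at h'
  exact eq_one_of_smul_eq_self (smul_ne_zero hlam hb) h'.symm

end QCommute

section Twisted

variable {K A M : Type*} [Field K] [Ring A] [Algebra K A]
  [AddCommGroup M] [Module K M] [Module A M]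

/-- For invertible `f` this is the relation `ρ(σ a) = f ρ(a) f⁻¹` of the paper. -/
def IsTwistedBy (σ : A ≃ₐ[K] A) (f : Module.End K M) : Prop :=
  ∀ (a : A) (u : M), f (a • u) = σ a • f u

theorem IsTwistedBy.mul {σ τ : A ≃ₐ[K] A} {f g : Module.End K M} (hf : IsTwistedBy σ f)
    (hg : IsTwistedBy τ g) : IsTwistedBy (σ * τ) (f * g) := fun a u => by
  rw [Module.End.mul_apply, hg, hf, AlgEquiv.mul_apply, Module.End.mul_apply]

theorem IsTwistedBy.pow {σ : A ≃ₐ[K] A} {f : Module.End K M} (hf : IsTwistedBy σ f) (n : ℕ) :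
    IsTwistedBy (σ ^ n) (f ^ n) := by
  induction n with
  | zero => intro a u; rfl
  | succ n ih => rw [pow_succ, pow_succ]; exact ih.mul hf

theorem IsTwistedBy.inv {σ : A ≃ₐ[K] A} {g : (Module.End K M)ˣ}
    (hg : IsTwistedBy σ (g : Module.End K M)) : IsTwistedBy σ⁻¹ (↑g⁻¹ : Module.End K M) := fun a u => by
  apply (Module.End.isUnit_iff _).1 g.isUnit |>.injective
  rw [hg, ← Module.End.mul_apply, ← Module.End.mul_apply, Units.mul_inv, Module.End.one_apply,
    Module.End.one_apply, ← AlgEquiv.mul_apply, mul_inv_cancel, AlgEquiv.one_apply]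

variable [IsScalarTower K A M] [IsAlgClosed K] [FiniteDimensional K M]

theorem IsTwistedBy.exists_eq_smul_one [IsSimpleModule A M] {f : Module.End K M}
    (hf : IsTwistedBy (1 : A ≃ₐ[K] A) f) : ∃ c : K, f = c • 1 := by
  obtain ⟨c, hc⟩ := (IsSimpleModule.algebraMap_end_bijective_of_isAlgClosed (A := A) K).2
    { f with map_smul' := hf }
  exact ⟨c, LinearMap.ext fun u => (LinearMap.congr_fun hc u).symm⟩

theorem IsTwistedBy.exists_eq_smul [IsSimpleModule A M] {σ : A ≃ₐ[K] A}
    {f g : Module.End K M} (hf : IsTwistedBy σ f) (hg : IsTwistedBy σ g) (hgu : IsUnit g) :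
    ∃ c : K, f = c • g := by
  obtain ⟨g, rfl⟩ := hgu
  have hratio : IsTwistedBy (1 : A ≃ₐ[K] A) (f * (↑g⁻¹ : Module.End K M)) :=
    mul_inv_cancel σ ▸ hf.mul hg.inv
  obtain ⟨c, hc⟩ := hratio.exists_eq_smul_one
  refine ⟨c, ?_⟩
  rw [← smul_one_mul, ← hc, mul_assoc, Units.inv_mul, mul_one]

end Twisted

theorem quantum_torus_from_commuting_twists_general
    {A M : Type*} [Ring A] [Algebra ℂ A]
    [AddCommGroup M] [Module ℂ M] [Module A M] [IsScalarTower ℂ A M]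
    [FiniteDimensional ℂ M] (hM : IsSimpleModule A M)
    {r : ℕ} (η : Fin r → A ≃ₐ[ℂ] A) (s : Fin r → ℕ)
    (hcomm : ∀ i j, η i * η j = η j * η i)
    (hord : ∀ i, orderOf (η i) = s i)
    (T : Fin r → M ≃ₗ[ℂ] M)
    (hT : ∀ i, ∀ (a : A) (u : M), T i (a • u) = η i a • T i u) :
    ∃ q : Fin r → Fin r → ℂˣ,
      (∀ i, q i i = 1) ∧ (∀ i j, q i j = (q j i)⁻¹) ∧
      (∀ i j, ((T i : M →ₗ[ℂ] M) * (T j : M →ₗ[ℂ] M)) =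
          (q i j : ℂ) • ((T j : M →ₗ[ℂ] M) * (T i : M →ₗ[ℂ] M))) ∧
      ∀ i j, (q i j) ^ Nat.gcd (s i) (s j) = 1 := by
  have : Nontrivial M := IsSimpleModule.nontrivial A M
  have ht (i : Fin r) : IsTwistedBy (η i) (T i : Module.End ℂ M) := hT i
  have hunit (i : Fin r) : IsUnit (T i : Module.End ℂ M) :=
    (Module.End.isUnit_iff _).2 (T i).bijective
  have hq (i j : Fin r) : ∃ c : ℂ, (T i : Module.End ℂ M) * T j = c • (T j * T i) :=
    ((ht i).mul (ht j)).exists_eq_smul (hcomm i j ▸ (ht j).mul (ht i)) ((hunit j).mul (hunit i))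
  choose c hc using hq
  have hinv (i j : Fin r) : c i j * c j i = 1 :=
    mul_eq_one_of_mul_eq_smul_mul (hc i j) (hc j i) ((hunit i).mul (hunit j)).ne_zero
  have hpow (i j : Fin r) : c i j ^ s i = 1 := by
    have hsi : IsTwistedBy (1 : A ≃ₐ[ℂ] A) ((T i : Module.End ℂ M) ^ s i) := by
      rw [← pow_orderOf_eq_one (η i), hord i]
      exact (ht i).pow (s i)
    obtain ⟨lam, hlam⟩ := hsi.exists_eq_smul_one
    have hlam0 : lam ≠ 0 := by
      rintro rfl
      exact ((hunit i).pow (s i)).ne_zero (by simpa using hlam)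
    exact pow_eq_one_of_mul_eq_smul_mul (hc i j) hlam hlam0 (hunit j).ne_zero
  let q i j : ℂˣ := ⟨c i j, c j i, hinv i j, hinv j i⟩
  refine ⟨q, fun i => Units.ext ?_, fun i j => rfl, hc, fun i j => ?_⟩
  · exact eq_one_of_smul_eq_self ((hunit i).mul (hunit i)).ne_zero (hc i i).symm
  · refine pow_gcd_eq_one.2 ⟨Units.ext (hpow i j), ?_⟩
    rw [show q i j = (q j i)⁻¹ from rfl, inv_pow, inv_eq_one]
    exact Units.ext (hpow j i)

/-- Lemma 3.2 (Billig–Lau): let `M` be a finite-dimensional simple module over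
a ℂ-algebra `A`, let `η₁, …, η_r` be pairwise commuting automorphisms of `A` of
finite orders `s₁, …, s_r`, and let `T₁, …, T_r` be invertible operators on `M`
with `ρ(η_j(a)) = T_j ρ(a) T_j⁻¹`.  Then there are scalars `q i j ∈ ℂ*` with
`T_i T_j = q_{ij} T_j T_i`, `q_{ii} = 1`, `q_{ij} = q_{ji}⁻¹`, and
`q_{ij}^{gcd(s_i, s_j)} = 1`; thus `t_i ↦ T_i` is a representation of a
cyclotomic quantum torus. -/
theorem quantum_torus_from_commuting_twists
    {A M : Type*} [Ring A] [Algebra ℂ A]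
    [AddCommGroup M] [Module ℂ M] [Module A M] [IsScalarTower ℂ A M]
    [FiniteDimensional ℂ M] (hM : IsSimpleModule A M)
    {r : ℕ} (η : Fin r → A ≃ₐ[ℂ] A) (s : Fin r → ℕ)
    (hcomm : ∀ i j, η i * η j = η j * η i)
    (hs : ∀ i, 0 < s i) (hord : ∀ i, orderOf (η i) = s i)
    (T : Fin r → M ≃ₗ[ℂ] M)
    (hT : ∀ i, ∀ (a : A) (u : M), T i (a • u) = η i a • T i u) :
    ∃ q : Fin r → Fin r → ℂˣ,
      (∀ i, q i i = 1) ∧ (∀ i j, q i j = (q j i)⁻¹) ∧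
      (∀ i j, ((T i : M →ₗ[ℂ] M) * (T j : M →ₗ[ℂ] M)) =
          (q i j : ℂ) • ((T j : M →ₗ[ℂ] M) * (T i : M →ₗ[ℂ] M))) ∧
      ∀ i j, (q i j) ^ Nat.gcd (s i) (s j) = 1 :=
  quantum_torus_from_commuting_twists_general hM η s hcomm hord T hT
end

section
/- Every finite-dimensional diagonalizable module over a cyclotomic quantum torus R_q is completely reducible, and all finite-dimensional diagonalizable simple R_q-modules have the same dimension. Moreover, any two such simple modules differ by a twist by a rescaling automorphism t_j ↦ α_j t_j (α_j ∈ ℂ*). -/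
open Polynomial
section helpers
variable {A : Type*} [Ring A] [Algebra ℂ A]

lemma qcomm_pow_right {a b : A} {z : ℂ} (h : a * b = z • (b * a)) (m : ℕ) :
    a * b ^ m = z ^ m • (b ^ m * a) := by
  induction m with
  | zero => simp
  | succ k ih =>
    rw [pow_succ, ← mul_assoc, ih, smul_mul_assoc, mul_assoc, h, mul_smul_comm, smul_smul,
      pow_succ, ← mul_assoc]

lemma qcomm_inv_right {a t t' : A} {z : ℂ} (hz : z ≠ 0) (h1 : t * t' = 1) (h2 : t' * t = 1)
    (h : a * t = z • (t * a)) : a * t' = z⁻¹ • (t' * a) := by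
  have key : t' * a = z • (a * t') := by
    calc t' * a = t' * (a * (t * t')) := by rw [h1, mul_one]
    _ = t' * ((a * t) * t') := by rw [mul_assoc]
    _ = t' * ((z • (t * a)) * t') := by rw [h]
    _ = z • ((t' * t) * (a * t')) := by
        rw [smul_mul_assoc, mul_smul_comm, mul_assoc, mul_assoc]
    _ = z • (a * t') := by rw [h2, one_mul]
  rw [key, smul_smul, inv_mul_cancel₀ hz, one_smul]

lemma commute_aeval {s c : A} (h : Commute s c) (p : ℂ[X]) : Commute s (aeval c p) := by
  induction p using Polynomial.induction_on with
  | C a => simpa using (Algebra.commute_algebraMap_right a s)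
  | add p q hp hq => simpa [map_add] using hp.add_right hq
  | monomial n a hn =>
    simp only [map_mul, aeval_C, aeval_X_pow]
    exact (Algebra.commute_algebraMap_right a s).mul_right (h.pow_right (n + 1))
end helpers

/-- Diagonalizability of a complex linear endomorphism. -/
def IsDiagonalizable {U : Type*} [AddCommGroup U] [Module ℂ U]
    (f : Module.End ℂ U) : Prop :=
  (⨆ μ : ℂ, f.eigenspace μ) = ⊤

section endhelpers
variable {U : Type*} [AddCommGroup U] [Module ℂ U]

lemma pow_mem_inv {W : Submodule ℂ U} {f : Module.End ℂ U}
    (hf : ∀ u ∈ W, f u ∈ W) : ∀ (a : ℕ), ∀ u ∈ W, (f ^ a) u ∈ W := by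
  intro a
  induction a with
  | zero => intro u hu; simpa using hu
  | succ k ih =>
    intro u hu
    rw [pow_succ, Module.End.mul_apply]
    exact ih _ (hf u hu)

lemma symm_inv {W : Submodule ℂ U} [FiniteDimensional ℂ U] (T : U ≃ₗ[ℂ] U)
    (hT : ∀ u ∈ W, T u ∈ W) : ∀ u ∈ W, T.symm u ∈ W := by
  intro u hu
  have hinj : Function.Injective ((T : U →ₗ[ℂ] U).restrict hT) := by
    intro x y hxy
    have := congrArg Subtype.val hxy
    simp only [LinearMap.restrict_apply] at this
    exact Subtype.ext (T.injective this)
  obtain ⟨⟨x, hx⟩, hxe⟩ :=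
    (LinearMap.injective_iff_surjective.mp hinj) ⟨u, hu⟩
  have : T x = u := congrArg Subtype.val hxe
  rw [← this, T.symm_apply_apply]
  exact hx

lemma aeval_mem_inv {W : Submodule ℂ U} {f : Module.End ℂ U}
    (hf : ∀ u ∈ W, f u ∈ W) (p : ℂ[X]) : ∀ u ∈ W, (aeval f p) u ∈ W := by
  induction p using Polynomial.induction_on with
  | C a => intro u hu; simpa [Module.algebraMap_end_apply] using W.smul_mem a hu
  | add p q hp hq => intro u hu; rw [map_add, LinearMap.add_apply]; exact W.add_mem (hp u hu) (hq u hu)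
  | monomial n a hn =>
    intro u hu
    simp only [map_mul, aeval_C, aeval_X_pow, Module.End.mul_apply,
      Module.algebraMap_end_apply]
    exact W.smul_mem a (pow_mem_inv hf (n+1) u hu)

lemma IsDiagonalizable.pow {f : Module.End ℂ U} (h : IsDiagonalizable f) (n : ℕ) :
    IsDiagonalizable (f ^ n) := by
  rw [IsDiagonalizable, eq_top_iff, ← h]
  apply iSup_le
  intro μ
  refine le_trans ?_ (le_iSup _ (μ ^ n))
  intro v hv
  rw [Module.End.mem_eigenspace_iff] at hv ⊢
  induction n with
  | zero => simp
  | succ k ih => rw [pow_succ, Module.End.mul_apply, hv, map_smul, ih, smul_smul, ← pow_succ']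
end endhelpers
section spectral
variable {U : Type*} [AddCommGroup U] [Module ℂ U] [FiniteDimensional ℂ U]

omit [FiniteDimensional ℂ U] in
lemma ext_of_eigen {C : Module.End ℂ U} (hdiag : IsDiagonalizable C)
    {A B : Module.End ℂ U} (h : ∀ (ν : ℂ), ∀ v ∈ C.eigenspace ν, A v = B v) : A = B := by
  have : ∀ ν : ℂ, C.eigenspace ν ≤ LinearMap.ker (A - B) := by
    intro ν v hv
    rw [LinearMap.mem_ker, LinearMap.sub_apply, sub_eq_zero]
    exact h ν v hv
  have htop : (⊤ : Submodule ℂ U) ≤ LinearMap.ker (A - B) := by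
    rw [← hdiag]; exact iSup_le this
  ext v
  have := htop (Submodule.mem_top : v ∈ ⊤)
  rw [LinearMap.mem_ker, LinearMap.sub_apply, sub_eq_zero] at this
  exact this

lemma spectral_step {C : Module.End ℂ U} (hdiag : IsDiagonalizable C)
    {W : Submodule ℂ U} (hWC : ∀ u ∈ W, C u ∈ W) {π : Module.End ℂ U}
    (hmem : ∀ u, π u ∈ W) (hid : ∀ u ∈ W, π u = u) :
    ∃ π' : Module.End ℂ U, (∀ u, π' u ∈ W) ∧ (∀ u ∈ W, π' u = u) ∧
      (C * π' = π' * C) ∧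
      ∀ s : Module.End ℂ U, Commute s C → Commute s π → Commute s π' := by
  classical
  set S : Finset ℂ := (minpoly ℂ C).roots.toFinset with hS
  have hmp : minpoly ℂ C ≠ 0 := minpoly.ne_zero (IsIntegral.of_finite ℂ C)
  have hroot : ∀ {ν : ℂ} {v : U}, v ∈ C.eigenspace ν → v ≠ 0 → ν ∈ S := by
    intro ν v hv hvne
    have hev : C.HasEigenvalue ν := Module.End.hasEigenvalue_of_hasEigenvector ⟨hv, hvne⟩
    have := Module.End.isRoot_of_hasEigenvalue hev
    rw [hS, Multiset.mem_toFinset, mem_roots hmp]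
    exact this
  have heig : ∀ (p : ℂ[X]) (ν : ℂ), ∀ v ∈ C.eigenspace ν, (aeval C p) v = p.eval ν • v := by
    intro p ν v hv
    by_cases hvz : v = 0
    · simp [hvz]
    · exact Module.End.aeval_apply_of_hasEigenvector ⟨hv, hvz⟩
  have hinj : Set.InjOn id (S : Set ℂ) := fun a _ c _ h => h
  have hes : ∀ {ν : ℂ}, ν ∈ S → (Lagrange.basis S id ν).eval ν = 1 := by
    intro ν h
    have := Lagrange.eval_basis_self (v := (id : ℂ → ℂ)) hinj h
    simpa using this
  have hene : ∀ {μ ν : ℂ}, μ ≠ ν → ν ∈ S → (Lagrange.basis S id μ).eval ν = 0 := by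
    intro μ ν h hν
    have := Lagrange.eval_basis_of_ne (v := (id : ℂ → ℂ)) (s := S) h hν
    simpa using this
  set b : ℂ → Module.End ℂ U := fun μ => aeval C (Lagrange.basis S id μ) with hb
  have hbv : ∀ (μ ν : ℂ), ∀ v ∈ C.eigenspace ν, b μ v = (Lagrange.basis S id μ).eval ν • v :=
    fun μ ν v hv => heig _ ν v hv
  -- key operator identities
  have hsum : ∑ μ ∈ S, b μ * b μ = 1 := by
    apply ext_of_eigen hdiag
    intro ν v hv
    by_cases hvz : v = 0
    · simp [hvz]
    have hνS : ν ∈ S := hroot hv hvz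
    rw [LinearMap.sum_apply]
    have : ∀ μ ∈ S, (b μ * b μ) v
        = ((Lagrange.basis S id μ).eval ν * (Lagrange.basis S id μ).eval ν) • v := by
      intro μ _
      rw [Module.End.mul_apply, hbv μ ν v hv, map_smul, hbv μ ν v hv, smul_smul]
    rw [Finset.sum_congr rfl this, Finset.sum_eq_single ν]
    · rw [hes hνS]; simp
    · intro μ hμS hμν
      rw [hene hμν hνS]; simp
    · intro h; exact absurd hνS h
  have hCb : ∀ μ ∈ S, C * b μ = μ • b μ := by
    intro μ _
    apply ext_of_eigen hdiag
    intro ν v hv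
    by_cases hvz : v = 0
    · simp [hvz]
    have hνS : ν ∈ S := hroot hv hvz
    have hCv : C v = ν • v := Module.End.mem_eigenspace_iff.mp hv
    rw [Module.End.mul_apply, hbv μ ν v hv, map_smul, hCv, LinearMap.smul_apply, hbv μ ν v hv]
    by_cases hμν : μ = ν
    · subst hμν; rw [smul_comm]
    · rw [hene hμν hνS]; simp
  have hbC : ∀ μ, b μ * C = C * b μ := fun μ => (commute_aeval (Commute.refl C) _).symm
  refine ⟨∑ μ ∈ S, b μ * π * b μ, ?_, ?_, ?_, ?_⟩
  · intro u
    rw [LinearMap.sum_apply]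
    apply Submodule.sum_mem
    intro μ _
    rw [Module.End.mul_apply, Module.End.mul_apply]
    exact aeval_mem_inv hWC _ _ (hmem _)
  · intro w hw
    have : ∀ μ ∈ S, (b μ * π * b μ) w = (b μ * b μ) w := by
      intro μ _
      rw [Module.End.mul_apply, Module.End.mul_apply, Module.End.mul_apply,
        hid _ (aeval_mem_inv hWC _ _ hw)]
    rw [LinearMap.sum_apply, Finset.sum_congr rfl this, ← LinearMap.sum_apply, hsum,
      Module.End.one_apply]
  · rw [Finset.mul_sum, Finset.sum_mul]
    apply Finset.sum_congr rfl
    intro μ hμ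
    calc C * (b μ * π * b μ) = (C * b μ) * π * b μ := by noncomm_ring
    _ = (μ • b μ) * π * b μ := by rw [hCb μ hμ]
    _ = μ • (b μ * π * b μ) := by rw [smul_mul_assoc, smul_mul_assoc]
    _ = b μ * π * (μ • b μ) := by rw [mul_smul_comm]
    _ = b μ * π * (C * b μ) := by rw [hCb μ hμ]
    _ = b μ * π * (b μ * C) := by rw [hbC]
    _ = b μ * π * b μ * C := by noncomm_ring
  · intro s hsC hsπ
    have hsb : ∀ μ, Commute s (b μ) := fun μ => commute_aeval hsC _
    rw [Commute, SemiconjBy, Finset.mul_sum, Finset.sum_mul]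
    apply Finset.sum_congr rfl
    intro μ _
    calc s * (b μ * π * b μ) = (s * b μ) * π * b μ := by noncomm_ring
    _ = (b μ * s) * π * b μ := by rw [hsb μ]
    _ = b μ * (s * π) * b μ := by noncomm_ring
    _ = b μ * (π * s) * b μ := by rw [hsπ]
    _ = b μ * π * (s * b μ) := by noncomm_ring
    _ = b μ * π * (b μ * s) := by rw [hsb μ]
    _ = b μ * π * b μ * s := by noncomm_ring
end spectral
section maschke
variable {A : Type*} [Ring A] [Algebra ℂ A]

lemma conj_shift {t t' p : A} (h2 : t' * t = 1) (a : ℕ) :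
    t * (t ^ a * p * t' ^ a) = (t ^ (a+1) * p * t' ^ (a+1)) * t := by
  have hr : (t ^ (a+1) * p * t' ^ (a+1)) * t = t ^ (a+1) * p * (t' ^ a * (t' * t)) := by
    rw [pow_succ t' a]; noncomm_ring
  rw [hr, h2, mul_one, pow_succ' t a]; noncomm_ring

lemma conj_comm {t t' p s' : A} {z : ℂˣ} (h1 : t * t' = 1) (h2 : t' * t = 1)
    (hs : s' * t = (z:ℂ) • (t * s')) (hp : s' * p = p * s') (a : ℕ) :
    s' * (t ^ a * p * t' ^ a) = (t ^ a * p * t' ^ a) * s' := by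
  have hst : s' * t ^ a = (z:ℂ) ^ a • (t ^ a * s') := qcomm_pow_right hs a
  have hst' : s' * t' = ((z:ℂ))⁻¹ • (t' * s') := qcomm_inv_right (Units.ne_zero z) h1 h2 hs
  have hst'a : s' * t' ^ a = ((z:ℂ)⁻¹) ^ a • (t' ^ a * s') := qcomm_pow_right hst' a
  calc s' * (t ^ a * p * t' ^ a) = (s' * t ^ a) * (p * t' ^ a) := by noncomm_ring
  _ = ((z:ℂ) ^ a • (t ^ a * s')) * (p * t' ^ a) := by rw [hst]
  _ = (z:ℂ) ^ a • (t ^ a * ((s' * p) * t' ^ a)) := by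
      rw [smul_mul_assoc, mul_assoc, ← mul_assoc s' p]
  _ = (z:ℂ) ^ a • (t ^ a * (p * (s' * t' ^ a))) := by rw [hp, mul_assoc p s']
  _ = (z:ℂ) ^ a • (t ^ a * (p * (((z:ℂ)⁻¹) ^ a • (t' ^ a * s')))) := by rw [hst'a]
  _ = ((z:ℂ) ^ a * ((z:ℂ)⁻¹) ^ a) • (t ^ a * (p * (t' ^ a * s'))) := by
      rw [mul_smul_comm, mul_smul_comm, smul_smul]
  _ = (t ^ a * p * t' ^ a) * s' := by
      rw [← mul_pow, mul_inv_cancel₀ (Units.ne_zero z), one_pow, one_smul]; noncomm_ring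
end maschke

section maschkeEnd
variable {U : Type*} [AddCommGroup U] [Module ℂ U] [FiniteDimensional ℂ U]

lemma equiv_mul_symm (T : U ≃ₗ[ℂ] U) :
    (T : Module.End ℂ U) * (T.symm : Module.End ℂ U) = 1 := by
  ext x; simp

lemma equiv_symm_mul (T : U ≃ₗ[ℂ] U) :
    (T.symm : Module.End ℂ U) * (T : Module.End ℂ U) = 1 := by
  ext x; simp

lemma pow_mul_symm_pow (T : U ≃ₗ[ℂ] U) (a : ℕ) :
    ((T : Module.End ℂ U) ^ a) * ((T.symm : Module.End ℂ U) ^ a) = 1 := by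
  induction a with
  | zero => simp
  | succ k ih =>
    have h : (T : Module.End ℂ U) ^ (k+1) * (T.symm : Module.End ℂ U) ^ (k+1)
        = (T : Module.End ℂ U) * (((T : Module.End ℂ U) ^ k * (T.symm : Module.End ℂ U) ^ k)
            * (T.symm : Module.End ℂ U)) := by
      rw [pow_succ' (T : Module.End ℂ U) k, pow_succ (T.symm : Module.End ℂ U) k]; noncomm_ring
    rw [h, ih, one_mul, equiv_mul_symm]

lemma maschke_step (T : U ≃ₗ[ℂ] U) {n : ℕ} (hn : 0 < n) {W : Submodule ℂ U}
    {π : Module.End ℂ U}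
    (hT : ∀ u ∈ W, T u ∈ W) (hTs : ∀ u ∈ W, T.symm u ∈ W)
    (hmem : ∀ u, π u ∈ W) (hid : ∀ u ∈ W, π u = u)
    (hC : ((T : Module.End ℂ U) ^ n) * π = π * ((T : Module.End ℂ U) ^ n)) :
    ∃ P : Module.End ℂ U, (∀ u, P u ∈ W) ∧ (∀ u ∈ W, P u = u) ∧
      ((T : Module.End ℂ U) * P = P * (T : Module.End ℂ U)) ∧
      ∀ (s : Module.End ℂ U) (z : ℂˣ),
        s * (T : Module.End ℂ U) = (z : ℂ) • ((T : Module.End ℂ U) * s) →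
        s * π = π * s → s * P = P * s := by
  set t : Module.End ℂ U := (T : Module.End ℂ U) with ht
  set t' : Module.End ℂ U := (T.symm : Module.End ℂ U) with ht'
  have h1 : t * t' = 1 := equiv_mul_symm T
  have h2 : t' * t = 1 := equiv_symm_mul T
  have hT' : ∀ u ∈ W, t u ∈ W := by intro u hu; exact hT u hu
  have hTs' : ∀ u ∈ W, t' u ∈ W := by intro u hu; exact hTs u hu
  set f : ℕ → Module.End ℂ U := fun a => t ^ a * π * t' ^ a with hf
  have hfn : f n = f 0 := by
    have : t ^ n * π * t' ^ n = π * (t ^ n * t' ^ n) := by rw [hC]; noncomm_ring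
    rw [hf]; simp only
    rw [this, pow_mul_symm_pow, mul_one]
    simp
  refine ⟨(n : ℂ)⁻¹ • ∑ a ∈ Finset.range n, f a, ?_, ?_, ?_, ?_⟩
  · intro u
    rw [LinearMap.smul_apply, LinearMap.sum_apply]
    apply Submodule.smul_mem
    apply Submodule.sum_mem
    intro a _
    rw [hf]; simp only
    rw [Module.End.mul_apply, Module.End.mul_apply]
    exact pow_mem_inv hT' a _ (hmem _)
  · intro w hw
    have hterm : ∀ a ∈ Finset.range n, f a w = w := by
      intro a _
      rw [hf]; simp only
      rw [Module.End.mul_apply, Module.End.mul_apply, hid _ (pow_mem_inv hTs' a w hw),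
        ← Module.End.mul_apply, pow_mul_symm_pow, Module.End.one_apply]
    rw [LinearMap.smul_apply, LinearMap.sum_apply, Finset.sum_congr rfl hterm,
      Finset.sum_const, Finset.card_range, ← Nat.cast_smul_eq_nsmul ℂ, smul_smul,
      inv_mul_cancel₀ (Nat.cast_ne_zero.mpr hn.ne'), one_smul]
  · rw [mul_smul_comm, smul_mul_assoc]
    congr 1
    rw [Finset.mul_sum, Finset.sum_mul]
    have hshift : ∀ a, t * f a = f (a+1) * t := fun a => conj_shift h2 a
    rw [Finset.sum_congr rfl (fun a _ => hshift a), ← Finset.sum_mul, ← Finset.sum_mul]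
    congr 1
    have e1 := Finset.sum_range_succ' f n
    have e2 := Finset.sum_range_succ f n
    rw [e2] at e1
    rw [hfn] at e1
    exact (add_right_cancel e1).symm
  · intro s z hs hsπ
    rw [mul_smul_comm, smul_mul_assoc]
    congr 1
    rw [Finset.mul_sum, Finset.sum_mul]
    exact Finset.sum_congr rfl (fun a _ => conj_comm h1 h2 hs hsπ a)
end maschkeEnd
section partA
variable {U : Type*} [AddCommGroup U] [Module ℂ U] [FiniteDimensional ℂ U]

lemma partA {r : ℕ} (q : Fin r → Fin r → ℂˣ)
    (hqroot : ∀ i j, ∃ n : ℕ, 0 < n ∧ (q i j) ^ n = 1)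
    (TU : Fin r → U ≃ₗ[ℂ] U)
    (hrelU : ∀ i j, ((TU i : Module.End ℂ U) * TU j) =
        (q i j : ℂ) • ((TU j : Module.End ℂ U) * TU i))
    (hdiagU : ∀ i, IsDiagonalizable (TU i : Module.End ℂ U))
    (W : Submodule ℂ U) (hW : ∀ i, ∀ u ∈ W, TU i u ∈ W) :
    ∃ W' : Submodule ℂ U, (∀ i, ∀ u ∈ W', TU i u ∈ W') ∧ IsCompl W W' := by
  classical
  -- a common exponent n with (q i j)^n = 1
  choose m hm1 hm2 using fun p : Fin r × Fin r => hqroot p.1 p.2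
  set n : ℕ := ∏ p : Fin r × Fin r, m p with hn
  have hnpos : 0 < n := Finset.prod_pos (fun p _ => hm1 p)
  have hqn : ∀ i j, ((q i j : ℂ)) ^ n = 1 := by
    intro i j
    obtain ⟨k, hk⟩ := Finset.dvd_prod_of_mem m (Finset.mem_univ (i, j))
    have : (q i j) ^ n = 1 := by
      rw [hn, hk, pow_mul, hm2 (i, j), one_pow]
    calc ((q i j : ℂ)) ^ n = (((q i j) ^ n : ℂˣ) : ℂ) := by rw [Units.val_pow_eq_pow_val]
    _ = 1 := by rw [this, Units.val_one]
  set t : Fin r → Module.End ℂ U := fun i => (TU i : Module.End ℂ U) with htdef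
  set C : Fin r → Module.End ℂ U := fun i => (t i) ^ n with hCdef
  have hrel : ∀ i j, t i * t j = (q i j : ℂ) • (t j * t i) := hrelU
  have hCt : ∀ i j, C i * t j = t j * C i := by
    intro i j
    have h := qcomm_pow_right (z := (q j i : ℂ))
      (a := t j) (b := t i) (hrel j i) n
    rw [hCdef]; simp only
    have := h.symm
    rw [hqn j i, one_smul] at this
    exact this
  have hCcomm : ∀ i j, Commute (C i) (C j) := by
    intro i j
    have : Commute (C i) (t j) := hCt i j
    exact this.pow_right n
  have hWt : ∀ i, ∀ u ∈ W, t i u ∈ W := by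
    intro i u hu; exact hW i u hu
  have hWs : ∀ i, ∀ u ∈ W, ((TU i).symm : Module.End ℂ U) u ∈ W := by
    intro i u hu; simpa using symm_inv (TU i) (hW i) u hu
  have hWC : ∀ i, ∀ u ∈ W, C i u ∈ W := fun i u hu => pow_mem_inv (hWt i) n u hu
  -- initial projection
  obtain ⟨V, hV⟩ := Submodule.exists_isCompl W
  set π₀ : Module.End ℂ U := W.subtype ∘ₗ (W.projectionOnto V hV) with hπ₀
  have hπ₀mem : ∀ u, π₀ u ∈ W := fun u => (W.projectionOnto V hV u).2
  have hπ₀id : ∀ u ∈ W, π₀ u = u := by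
    intro u hu
    rw [hπ₀, LinearMap.comp_apply]
    rw [Submodule.linearProjOfIsCompl_apply_left hV ⟨u, hu⟩]
    rfl
  -- Phase 1: make the projection commute with all C i
  have phase1 : ∀ k : ℕ, ∃ π : Module.End ℂ U, (∀ u, π u ∈ W) ∧ (∀ u ∈ W, π u = u) ∧
      ∀ i : Fin r, (i : ℕ) < k → C i * π = π * C i := by
    intro k
    induction k with
    | zero => exact ⟨π₀, hπ₀mem, hπ₀id, fun i hi => absurd hi (Nat.not_lt_zero _)⟩
    | succ k ih =>
      obtain ⟨π, h1, h2, h3⟩ := ih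
      by_cases hk : k < r
      · obtain ⟨π', g1, g2, g3, g4⟩ := spectral_step ((hdiagU ⟨k, hk⟩).pow n)
          (hWC ⟨k, hk⟩) h1 h2
        refine ⟨π', g1, g2, ?_⟩
        intro i hi
        by_cases hik : (i : ℕ) < k
        · exact g4 (C i) (hCcomm i ⟨k, hk⟩) (h3 i hik)
        · have : i = ⟨k, hk⟩ := Fin.ext (Nat.le_antisymm (Nat.lt_succ_iff.mp hi) (Nat.not_lt.mp hik))
          rw [this]
          exact g3
      · refine ⟨π, h1, h2, fun i _ => h3 i (i.isLt.trans_le (Nat.not_lt.mp hk))⟩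
  obtain ⟨π₁, hπ₁mem, hπ₁id, hπ₁C'⟩ := phase1 r
  have hπ₁C : ∀ i, C i * π₁ = π₁ * C i := fun i => hπ₁C' i i.isLt
  -- Phase 2: Maschke averaging over each generator
  have phase2 : ∀ k : ℕ, ∃ P : Module.End ℂ U, (∀ u, P u ∈ W) ∧ (∀ u ∈ W, P u = u) ∧
      (∀ i, C i * P = P * C i) ∧ ∀ i : Fin r, (i : ℕ) < k → t i * P = P * t i := by
    intro k
    induction k with
    | zero => exact ⟨π₁, hπ₁mem, hπ₁id, hπ₁C, fun i hi => absurd hi (Nat.not_lt_zero _)⟩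
    | succ k ih =>
      obtain ⟨P, h1, h2, h3, h4⟩ := ih
      by_cases hk : k < r
      · set i₀ : Fin r := ⟨k, hk⟩ with hi₀
        obtain ⟨P', g1, g2, g3, g4⟩ := maschke_step (TU i₀) hnpos (hW i₀)
          (symm_inv (TU i₀) (hW i₀)) h1 h2 (h3 i₀)
        refine ⟨P', g1, g2, ?_, ?_⟩
        · intro j
          refine g4 (C j) 1 ?_ (h3 j)
          rw [Units.val_one, one_smul]
          exact hCt j i₀
        · intro i hi
          by_cases hik : (i : ℕ) < k
          · exact g4 (t i) (q i i₀) (hrel i i₀) (h4 i hik)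
          · have : i = i₀ := Fin.ext (Nat.le_antisymm (Nat.lt_succ_iff.mp hi) (Nat.not_lt.mp hik))
            rw [this]
            exact g3
      · refine ⟨P, h1, h2, h3, fun i _ => h4 i (i.isLt.trans_le (Nat.not_lt.mp hk))⟩
  obtain ⟨P, hPmem, hPid, _, hPt'⟩ := phase2 r
  have hPt : ∀ i, t i * P = P * t i := fun i => hPt' i i.isLt
  -- conclude
  refine ⟨LinearMap.ker P, ?_, ?_⟩
  · intro i u hu
    rw [LinearMap.mem_ker] at hu ⊢
    have : P (t i u) = t i (P u) := by
      rw [← Module.End.mul_apply, ← hPt i, Module.End.mul_apply]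
    have h2 : P (TU i u) = t i (P u) := by
      rw [← this]; rfl
    rw [h2, hu, map_zero]
  · have hf : ∀ x : W, (LinearMap.codRestrict W P hPmem) (x : U) = x := by
      intro x
      apply Subtype.ext
      rw [LinearMap.codRestrict_apply]
      exact hPid x x.2
    have := LinearMap.isCompl_of_proj hf
    rwa [LinearMap.ker_codRestrict] at this
end partA
section commonEigen

universe u_v
lemma exists_common_eigenvector :
    ∀ (m : ℕ) (V : Type u_v) [AddCommGroup V] [Module ℂ V] [FiniteDimensional ℂ V] [Nontrivial V]
      (f : Fin m → Module.End ℂ V), (∀ i j, Commute (f i) (f j)) →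
      ∃ v : V, v ≠ 0 ∧ ∀ i, ∃ μ : ℂ, f i v = μ • v := by
  intro m
  induction m with
  | zero =>
    intro V _ _ _ _ f _
    obtain ⟨v, hv⟩ := exists_ne (0 : V)
    exact ⟨v, hv, fun i => i.elim0⟩
  | succ k ih =>
    intro V _ _ _ _ f hcomm
    obtain ⟨μ₀, hμ₀⟩ := Module.End.exists_eigenvalue (f 0)
    set E := (f 0).eigenspace μ₀ with hE
    haveI : Nontrivial E := Submodule.nontrivial_iff_ne_bot.mpr hμ₀
    have hinv : ∀ i : Fin k, ∀ x ∈ E, f i.succ x ∈ E := by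
      intro i x hx
      rw [hE, Module.End.mem_eigenspace_iff] at hx ⊢
      have hc := congrFun (congrArg DFunLike.coe (hcomm 0 i.succ)) x
      simp only [Module.End.mul_apply] at hc
      rw [hc, hx, map_smul]
    set g : Fin k → Module.End ℂ E :=
      fun i => ((f i.succ) : V →ₗ[ℂ] V).restrict (hinv i) with hg
    have hgcomm : ∀ i j, Commute (g i) (g j) := by
      intro i j
      apply LinearMap.ext
      intro x
      apply Subtype.ext
      have hc := congrFun (congrArg DFunLike.coe (hcomm i.succ j.succ)) (x : V)
      simp only [Module.End.mul_apply] at hc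
      simp only [Module.End.mul_apply, hg, LinearMap.restrict_apply]
      exact hc
    obtain ⟨v, hv0, hve⟩ := ih E g hgcomm
    refine ⟨(v : V), by simpa using hv0, ?_⟩
    intro i
    refine Fin.cases ?_ ?_ i
    · exact ⟨μ₀, Module.End.mem_eigenspace_iff.mp v.2⟩
    · intro j
      obtain ⟨μ, hμ⟩ := hve j
      refine ⟨μ, ?_⟩
      have := congrArg Subtype.val hμ
      simp only [hg, LinearMap.restrict_apply, SetLike.val_smul] at this
      exact this
end commonEigen
section partC
variable {N N' : Type*} [AddCommGroup N] [Module ℂ N] [FiniteDimensional ℂ N]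
  [AddCommGroup N'] [Module ℂ N'] [FiniteDimensional ℂ N']

lemma partC {r : ℕ} (q : Fin r → Fin r → ℂˣ)
    (TN : Fin r → N ≃ₗ[ℂ] N) (TN' : Fin r → N' ≃ₗ[ℂ] N')
    (hrelN : ∀ i j, ((TN i : Module.End ℂ N) * TN j) =
        (q i j : ℂ) • ((TN j : Module.End ℂ N) * TN i))
    (hrelN' : ∀ i j, ((TN' i : Module.End ℂ N') * TN' j) =
        (q i j : ℂ) • ((TN' j : Module.End ℂ N') * TN' i))
    (hNsimple : Nontrivial N ∧
      ∀ W : Submodule ℂ N, (∀ i, ∀ u ∈ W, TN i u ∈ W) → W = ⊥ ∨ W = ⊤)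
    (hN'simple : Nontrivial N' ∧
      ∀ W : Submodule ℂ N', (∀ i, ∀ u ∈ W, TN' i u ∈ W) → W = ⊥ ∨ W = ⊤) :
    ∃ (α : Fin r → ℂˣ) (e : N ≃ₗ[ℂ] N'),
      ∀ i u, e (TN i u) = (α i : ℂ) • TN' i (e u) := by
  classical
  haveI : Nontrivial N := hNsimple.1
  haveI : Nontrivial N' := hN'simple.1
  -- pointwise versions of the relations
  have hptN : ∀ i j (x : N), TN i (TN j x) = (q i j : ℂ) • TN j (TN i x) := by
    intro i j x
    have := congrFun (congrArg DFunLike.coe (hrelN i j)) x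
    simpa using this
  have hptN' : ∀ i j (x : N'), TN' i (TN' j x) = (q i j : ℂ) • TN' j (TN' i x) := by
    intro i j x
    have := congrFun (congrArg DFunLike.coe (hrelN' i j)) x
    simpa using this
  have hqne : ∀ i j, (q i j : ℂ) ≠ 0 := fun i j => Units.ne_zero (q i j)
  -- the symm version
  have hsymm : ∀ i j (u : N), (TN j).symm ((TN i).symm u)
      = ((q i j : ℂ))⁻¹ • (TN i).symm ((TN j).symm u) := by
    intro i j u
    apply (TN j).injective
    apply (TN i).injective
    have hR : TN i (TN j (((q i j : ℂ))⁻¹ • (TN i).symm ((TN j).symm u))) = u := by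
      rw [map_smul, map_smul, hptN i j]
      rw [LinearEquiv.apply_symm_apply, smul_smul, inv_mul_cancel₀ (hqne i j), one_smul,
        LinearEquiv.apply_symm_apply]
    rw [hR, LinearEquiv.apply_symm_apply, LinearEquiv.apply_symm_apply]
  -- the commuting operators on Hom(N, N')
  set ρ : Fin r → Module.End ℂ (N →ₗ[ℂ] N') := fun i =>
    { toFun := fun g => (TN' i).toLinearMap ∘ₗ g ∘ₗ (TN i).symm.toLinearMap
      map_add' := by intro g h; simp [LinearMap.comp_add, LinearMap.add_comp]
      map_smul' := by intro c g; simp [LinearMap.comp_smul, LinearMap.smul_comp] } with hρ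
  have hρapp : ∀ i (g : N →ₗ[ℂ] N') (u : N), (ρ i g) u = TN' i (g ((TN i).symm u)) := by
    intro i g u; rw [hρ]; rfl
  have hρcomm : ∀ i j, Commute (ρ i) (ρ j) := by
    intro i j
    apply LinearMap.ext
    intro g
    apply LinearMap.ext
    intro u
    simp only [Module.End.mul_apply]
    rw [hρapp, hρapp, hρapp, hρapp]
    rw [hsymm i j u, map_smul, map_smul, map_smul, hptN' i j]
    rw [smul_smul, inv_mul_cancel₀ (hqne i j), one_smul]
  -- a nonzero element of Hom(N, N')
  obtain ⟨y', hy'⟩ := exists_ne (0 : N')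
  have hgne : ∃ g : N →ₗ[ℂ] N', g ≠ 0 := by
    set b := Module.Basis.ofVectorSpace ℂ N with hb
    haveI := b.index_nonempty
    set i₀ := Classical.arbitrary (Module.Basis.ofVectorSpaceIndex ℂ N)
    refine ⟨(b.coord i₀).smulRight y', ?_⟩
    intro hzero
    have : ((b.coord i₀).smulRight y') (b i₀) = 0 := by rw [hzero]; rfl
    rw [LinearMap.smulRight_apply, b.coord_apply, b.repr_self,
      Finsupp.single_eq_same, one_smul] at this
    exact hy' this
  obtain ⟨g₁, hg₁⟩ := hgne
  haveI : Nontrivial (N →ₗ[ℂ] N') := nontrivial_of_ne g₁ 0 hg₁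
  -- common eigenvector
  obtain ⟨g₀, hg₀ne, hg₀⟩ := exists_common_eigenvector r (N →ₗ[ℂ] N') ρ hρcomm
  choose μ hμ using hg₀
  -- each eigenvalue is nonzero
  have hμne : ∀ i, μ i ≠ 0 := by
    intro i hzero
    apply hg₀ne
    have hz : ρ i g₀ = 0 := by rw [hμ i, hzero, zero_smul]
    apply LinearMap.ext
    intro w
    have := congrFun (congrArg DFunLike.coe hz) ((TN i) w)
    rw [hρapp, LinearEquiv.symm_apply_apply] at this
    rw [LinearMap.zero_apply] at this ⊢
    exact (map_eq_zero_iff _ (TN' i).injective).mp this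
  -- the intertwining relations
  have hTg : ∀ i (w : N), TN' i (g₀ w) = μ i • g₀ (TN i w) := by
    intro i w
    have := congrFun (congrArg DFunLike.coe (hμ i)) ((TN i) w)
    rw [hρapp, LinearEquiv.symm_apply_apply, LinearMap.smul_apply] at this
    exact this
  have hint : ∀ i (w : N), g₀ (TN i w) = (μ i)⁻¹ • TN' i (g₀ w) := by
    intro i w
    rw [hTg i w, smul_smul, inv_mul_cancel₀ (hμne i), one_smul]
  -- Schur: g₀ is bijective
  have hker : ∀ i, ∀ u ∈ LinearMap.ker g₀, TN i u ∈ LinearMap.ker g₀ := by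
    intro i u hu
    rw [LinearMap.mem_ker] at hu ⊢
    rw [hint i u, hu, map_zero, smul_zero]
  have hinj : Function.Injective g₀ := by
    rw [← LinearMap.ker_eq_bot]
    rcases hNsimple.2 _ hker with h | h
    · exact h
    · exact absurd (LinearMap.ker_eq_top.mp h) hg₀ne
  have hrange : ∀ i, ∀ x ∈ LinearMap.range g₀, TN' i x ∈ LinearMap.range g₀ := by
    rintro i x ⟨u, rfl⟩
    refine ⟨μ i • TN i u, ?_⟩
    rw [map_smul, hint i u, smul_smul, mul_inv_cancel₀ (hμne i), one_smul]
  have hsurj : Function.Surjective g₀ := by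
    rw [← LinearMap.range_eq_top]
    rcases hN'simple.2 _ hrange with h | h
    · exfalso
      exact hg₀ne (LinearMap.range_eq_bot.mp h)
    · exact h
  set e : N ≃ₗ[ℂ] N' := LinearEquiv.ofBijective g₀ ⟨hinj, hsurj⟩ with he
  refine ⟨fun i => (Units.mk0 (μ i) (hμne i))⁻¹, e, ?_⟩
  intro i u
  have happ : ∀ w, e w = g₀ w := fun w => rfl
  rw [happ, happ, hint i u]
  norm_num

end partC
/-- Proposition 3.5 (Billig–Lau): every finite-dimensional diagonalizable
module over a cyclotomic quantum torus `R_q` (given here by its action: tuples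
of invertible operators `T` with `T i T j = q i j • T j T i`, all `q i j` roots
of unity, each `T i` diagonalizable) is completely reducible, all simple
modules in this category have the same dimension, and any two such simple
modules differ by a twist by a rescaling automorphism `t_j ↦ α_j t_j`. -/
theorem cyclotomic_quantum_torus_reps
    {r : ℕ} (q : Fin r → Fin r → ℂˣ)
    (hq1 : ∀ i, q i i = 1) (hqinv : ∀ i j, q i j = (q j i)⁻¹)
    (hqroot : ∀ i j, ∃ n : ℕ, 0 < n ∧ (q i j) ^ n = 1)
    {U N N' : Type*}
    [AddCommGroup U] [Module ℂ U] [FiniteDimensional ℂ U]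
    [AddCommGroup N] [Module ℂ N] [FiniteDimensional ℂ N]
    [AddCommGroup N'] [Module ℂ N'] [FiniteDimensional ℂ N']
    (TU : Fin r → U ≃ₗ[ℂ] U) (TN : Fin r → N ≃ₗ[ℂ] N) (TN' : Fin r → N' ≃ₗ[ℂ] N')
    (hrelU : ∀ i j, ((TU i : Module.End ℂ U) * TU j) =
        (q i j : ℂ) • ((TU j : Module.End ℂ U) * TU i))
    (hrelN : ∀ i j, ((TN i : Module.End ℂ N) * TN j) =
        (q i j : ℂ) • ((TN j : Module.End ℂ N) * TN i))
    (hrelN' : ∀ i j, ((TN' i : Module.End ℂ N') * TN' j) =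
        (q i j : ℂ) • ((TN' j : Module.End ℂ N') * TN' i))
    (hdiagU : ∀ i, IsDiagonalizable (TU i : Module.End ℂ U))
    (hdiagN : ∀ i, IsDiagonalizable (TN i : Module.End ℂ N))
    (hdiagN' : ∀ i, IsDiagonalizable (TN' i : Module.End ℂ N'))
    (hNsimple : Nontrivial N ∧
      ∀ W : Submodule ℂ N, (∀ i, ∀ u ∈ W, TN i u ∈ W) → W = ⊥ ∨ W = ⊤)
    (hN'simple : Nontrivial N' ∧
      ∀ W : Submodule ℂ N', (∀ i, ∀ u ∈ W, TN' i u ∈ W) → W = ⊥ ∨ W = ⊤) :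
    (∀ W : Submodule ℂ U, (∀ i, ∀ u ∈ W, TU i u ∈ W) →
        ∃ W' : Submodule ℂ U, (∀ i, ∀ u ∈ W', TU i u ∈ W') ∧ IsCompl W W') ∧
      Module.finrank ℂ N = Module.finrank ℂ N' ∧
      ∃ (α : Fin r → ℂˣ) (e : N ≃ₗ[ℂ] N'),
        ∀ i u, e (TN i u) = (α i : ℂ) • TN' i (e u) := by
  obtain ⟨α, e, he⟩ := partC q TN TN' hrelN hrelN' hNsimple hN'simple
  exact ⟨fun W hW => partA q hqroot TU hrelU hdiagU W hW, e.finrank_eq, α, e, he⟩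
end

section
/- Let R_q be a cyclotomic quantum torus with generators t₁, ..., t_r. Every finite-dimensional diagonalizable R_q-module M decomposes as M ≅ N ⊗ (⊕_{α∈(ℂ*)^r} V^α), where N is a fixed simple diagonalizable R_q-module, the V^α are multiplicity spaces (only finitely many nonzero), and t_i acts by t_i(u ⊗ v) = t_i(u) ⊗ α_i v for u ∈ N, v ∈ V^α. -/
open DirectSum

namespace IsoAux

open Module Polynomial Module.End

variable {V M : Type*} [AddCommGroup V] [Module ℂ V] [AddCommGroup M] [Module ℂ M]

/-- The sandwich operator `f ↦ A ∘ f ∘ B` on `Hom(V, M)`. -/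
def sand (A : Module.End ℂ M) (B : Module.End ℂ V) : Module.End ℂ (V →ₗ[ℂ] M) where
  toFun f := A ∘ₗ f ∘ₗ B
  map_add' f g := by ext x; simp
  map_smul' c f := by ext x; simp

@[simp] lemma sand_apply (A : Module.End ℂ M) (B : Module.End ℂ V) (f : V →ₗ[ℂ] M) (x : V) :
    sand A B f x = A (f (B x)) := rfl

lemma sand_mul (A A' : Module.End ℂ M) (B B' : Module.End ℂ V) :
    sand A B * sand A' B' = sand (A * A') (B' * B) := by
  ext f x; simp [Module.End.mul_apply]

lemma sand_smul_left (c : ℂ) (A : Module.End ℂ M) (B : Module.End ℂ V) :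
    sand (c • A) B = c • sand A B := by
  ext f x; simp

lemma sand_smul_right (c : ℂ) (A : Module.End ℂ M) (B : Module.End ℂ V) :
    sand A (c • B) = c • sand A B := by
  ext f x; simp

lemma sand_add_left (A A' : Module.End ℂ M) (B : Module.End ℂ V) :
    sand (A + A') B = sand A B + sand A' B := by
  ext f x; simp

lemma sand_add_right (A : Module.End ℂ M) (B B' : Module.End ℂ V) :
    sand A (B + B') = sand A B + sand A B' := by
  ext f x; simp

lemma sand_one_one : sand (1 : Module.End ℂ M) (1 : Module.End ℂ V) = 1 := by
  ext f x; simp [Module.End.one_apply]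

lemma sand_pow (A : Module.End ℂ M) (B : Module.End ℂ V) (k : ℕ) :
    (sand A B) ^ k = sand (A ^ k) (B ^ k) := by
  induction k with
  | zero => simpa using sand_one_one.symm
  | succ k ih => rw [pow_succ, ih, sand_mul, ← pow_succ, ← pow_succ']

lemma aeval_sand_left (A : Module.End ℂ M) (p : ℂ[X]) :
    aeval (sand A (1 : Module.End ℂ V)) p = sand (aeval A p) 1 := by
  induction p using Polynomial.induction_on' with
  | add p q hp hq => rw [map_add, map_add, hp, hq, sand_add_left]
  | monomial k c =>
      rw [aeval_monomial, aeval_monomial, Algebra.algebraMap_eq_smul_one,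
        Algebra.algebraMap_eq_smul_one, smul_mul_assoc, smul_mul_assoc, one_mul, one_mul,
        sand_pow, sand_smul_left, one_pow]

lemma aeval_sand_right (B : Module.End ℂ V) (p : ℂ[X]) :
    aeval (sand (1 : Module.End ℂ M) B) p = sand 1 (aeval B p) := by
  induction p using Polynomial.induction_on' with
  | add p q hp hq => rw [map_add, map_add, hp, hq, sand_add_right]
  | monomial k c =>
      rw [aeval_monomial, aeval_monomial, Algebra.algebraMap_eq_smul_one,
        Algebra.algebraMap_eq_smul_one, smul_mul_assoc, smul_mul_assoc, one_mul, one_mul,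
        sand_pow, sand_smul_right, one_pow]

end IsoAux
section Part2
open Module Polynomial Module.End
namespace IsoAux

variable {V M : Type*} [AddCommGroup V] [Module ℂ V] [AddCommGroup M] [Module ℂ M]

lemma isSemisimple_of_diag [FiniteDimensional ℂ M] (A : Module.End ℂ M)
    (h : (⨆ μ : ℂ, A.eigenspace μ) = ⊤) : A.IsSemisimple := by
  obtain ⟨s, hs⟩ : ∃ s : Finset ℂ, (⊤ : Submodule ℂ M) ≤ ⨆ μ ∈ s, A.eigenspace μ := by
    refine CompleteLattice.IsCompactElement.exists_finset_of_le_iSup _ ?_ _ (le_of_eq h.symm)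
    exact (Submodule.fg_iff_compact _).mp (Module.finite_def.mp inferInstance)
  have hsq : Squarefree (∏ μ ∈ s, (X - C μ)) := by
    refine Polynomial.Separable.squarefree ?_
    exact Polynomial.separable_prod_X_sub_C_iff'.mpr (fun x _ y _ hxy => hxy)
  refine isSemisimple_of_squarefree_aeval_eq_zero hsq ?_
  have : (⊤ : Submodule ℂ M) ≤ LinearMap.ker (aeval A (∏ μ ∈ s, (X - C μ))) := by
    refine le_trans hs (iSup₂_le fun μ hμ => fun x hx => ?_)
    rw [LinearMap.mem_ker, ← Finset.prod_erase_mul s _ hμ, map_mul, Module.End.mul_apply]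
    have hx0 : (aeval A (X - C μ)) x = 0 := by
      simp [mem_eigenspace_iff.mp hx, Algebra.algebraMap_eq_smul_one, sub_eq_zero]
    rw [hx0, map_zero]
  ext x
  simpa using this (Submodule.mem_top (x := x))

lemma diag_symm (b : V ≃ₗ[ℂ] V)
    (h : (⨆ μ : ℂ, Module.End.eigenspace (b : Module.End ℂ V) μ) = ⊤) :
    (⨆ μ : ℂ, Module.End.eigenspace (b.symm : Module.End ℂ V) μ) = ⊤ := by
  rw [eq_top_iff, ← h]
  refine iSup_le fun μ => ?_
  rcases eq_or_ne μ 0 with rfl | hμ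
  · rw [Module.End.eigenspace_zero]
    intro x hx
    have hx' : b x = 0 := hx
    have : x = 0 := by
      apply b.injective
      simpa using hx'
    simp [this]
  · refine le_trans ?_ (le_iSup _ μ⁻¹)
    intro x hx
    rw [mem_eigenspace_iff] at hx ⊢
    have hbx : b x = μ • x := hx
    have hthis : x = μ • b.symm x := by
      have h3 := congrArg b.symm hbx
      rwa [b.symm_apply_apply, map_smul] at h3
    show b.symm x = μ⁻¹ • x
    exact (eq_inv_smul_iff₀ hμ).mpr hthis.symm

lemma symm_rel {a b : V ≃ₗ[ℂ] V} {γ : ℂ} (hγ : γ ≠ 0)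
    (h : (a : Module.End ℂ V) * b = γ • ((b : Module.End ℂ V) * a)) :
    ((a.symm : Module.End ℂ V) * b.symm) = γ • ((b.symm : Module.End ℂ V) * a.symm) := by
  have hpt : ∀ z, a (b z) = γ • b (a z) := by
    intro z
    have := LinearMap.ext_iff.mp h z
    simpa [Module.End.mul_apply] using this
  ext x
  apply a.injective
  apply b.injective
  simp only [Module.End.mul_apply, LinearMap.smul_apply, map_smul, LinearEquiv.coe_coe]
  rw [LinearEquiv.apply_symm_apply, LinearEquiv.apply_symm_apply]
  have h2 := hpt (b.symm (a.symm x))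
  rw [b.apply_symm_apply] at h2
  rw [a.apply_symm_apply] at h2
  exact h2

end IsoAux
end Part2
section Part3
open Module Polynomial Module.End
namespace IsoAux

variable {V M : Type*} [AddCommGroup V] [Module ℂ V] [AddCommGroup M] [Module ℂ M]

lemma isSemisimple_sand [FiniteDimensional ℂ V] [FiniteDimensional ℂ M]
    {A : Module.End ℂ M} {B : Module.End ℂ V}
    (hA : A.IsSemisimple) (hB : B.IsSemisimple) : (sand A B).IsSemisimple := by
  have h1 : sand A B = sand A 1 * sand 1 B := by
    rw [sand_mul, mul_one, mul_one]
  have hcomm : Commute (sand A (1 : Module.End ℂ V)) (sand (1 : Module.End ℂ M) B) := by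
    show _ * _ = _ * _
    rw [sand_mul, sand_mul]
    simp
  have hA' : (sand A (1 : Module.End ℂ V)).IsSemisimple := by
    refine isSemisimple_of_squarefree_aeval_eq_zero hA.minpoly_squarefree ?_
    rw [aeval_sand_left, minpoly.aeval]
    ext f x; simp
  have hB' : (sand (1 : Module.End ℂ M) B).IsSemisimple := by
    refine isSemisimple_of_squarefree_aeval_eq_zero hB.minpoly_squarefree ?_
    rw [aeval_sand_right, minpoly.aeval]
    ext f x; simp
  rw [h1]
  exact Module.End.IsSemisimple.mul_of_commute hcomm hA' hB'

lemma key [FiniteDimensional ℂ V] [FiniteDimensional ℂ M] {r : ℕ} (c : Fin r → Fin r → ℂˣ)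
    (A : Fin r → M ≃ₗ[ℂ] M) (B : Fin r → V ≃ₗ[ℂ] V)
    (hA : ∀ i j, ((A i : Module.End ℂ M) * A j) = (c i j : ℂ) • ((A j : Module.End ℂ M) * A i))
    (hB : ∀ i j, ((B i : Module.End ℂ V) * B j) = (c i j : ℂ) • ((B j : Module.End ℂ V) * B i))
    (hdA : ∀ i, (⨆ μ : ℂ, Module.End.eigenspace (A i : Module.End ℂ M) μ) = ⊤)
    (hdB : ∀ i, (⨆ μ : ℂ, Module.End.eigenspace (B i : Module.End ℂ V) μ) = ⊤) :
    (⨆ χ : Fin r → ℂ, ⨅ i, Module.End.eigenspace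
        (sand (A i : Module.End ℂ M) ((B i).symm : Module.End ℂ V)) (χ i)) = ⊤ ∧
    iSupIndep (fun χ : Fin r → ℂ => ⨅ i, Module.End.eigenspace
        (sand (A i : Module.End ℂ M) ((B i).symm : Module.End ℂ V)) (χ i)) := by
  set w : Fin r → Module.End ℂ (V →ₗ[ℂ] M) :=
    fun i => sand (A i : Module.End ℂ M) ((B i).symm : Module.End ℂ V) with hw
  have hcomm : ∀ i j, Commute (w i) (w j) := by
    intro i j
    show w i * w j = w j * w i
    rw [hw]
    simp only
    rw [sand_mul, sand_mul, hA i j, symm_rel ((c i j).ne_zero) (hB i j),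
      sand_smul_left, sand_smul_right]
  have hss : ∀ i, (w i).IsSemisimple := by
    intro i
    exact isSemisimple_sand (isSemisimple_of_diag _ (hdA i))
      (isSemisimple_of_diag _ (diag_symm _ (hdB i)))
  have heig : ∀ i μ, (w i).maxGenEigenspace μ = Module.End.eigenspace (w i) μ :=
    fun i μ => ((hss i).isFinitelySemisimple.maxGenEigenspace_eq_eigenspace μ)
  constructor
  · have h1 := Module.End.iSup_iInf_maxGenEigenspace_eq_top_of_iSup_maxGenEigenspace_eq_top_of_commute
      w (fun i j _ => hcomm i j) (fun i => Module.End.iSup_maxGenEigenspace_eq_top (w i))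
    simpa only [heig] using h1
  · have h2 := Module.End.independent_iInf_maxGenEigenspace_of_forall_mapsTo w
      (fun i j φ => Module.End.mapsTo_maxGenEigenspace_of_comm (hcomm j i) φ)
    simpa only [heig] using h2

end IsoAux
end Part3
section Part4
open Module Polynomial Module.End
namespace IsoAux

universe u v

/-- The `Fin.cons` linear equivalence. -/
def consLE (n : ℕ) (N : Type v) [AddCommGroup N] [Module ℂ N] :
    (N × (Fin n → N)) ≃ₗ[ℂ] (Fin (n + 1) → N) where
  toFun p := Fin.cons p.1 p.2
  invFun w := (w 0, Fin.tail w)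
  map_add' p q := by
    funext l
    refine Fin.cases ?_ (fun l' => ?_) l <;> simp
  map_smul' a p := by
    funext l
    refine Fin.cases ?_ (fun l' => ?_) l <;> simp
  left_inv p := by simp [Fin.tail]
  right_inv w := by
    funext l
    refine Fin.cases ?_ (fun l' => ?_) l <;> simp [Fin.tail]

lemma aux {r : ℕ} (q : Fin r → Fin r → ℂˣ)
    {N : Type v} [AddCommGroup N] [Module ℂ N] [FiniteDimensional ℂ N]
    (TN : Fin r → N ≃ₗ[ℂ] N)
    (hrelN : ∀ i j, ((TN i : Module.End ℂ N) * TN j) =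
        (q i j : ℂ) • ((TN j : Module.End ℂ N) * TN i))
    (hdiagN : ∀ i, (⨆ μ : ℂ, Module.End.eigenspace (TN i : Module.End ℂ N) μ) = ⊤)
    (hNtriv : Nontrivial N)
    (hNsimp : ∀ W : Submodule ℂ N, (∀ i, ∀ u ∈ W, TN i u ∈ W) → W = ⊥ ∨ W = ⊤) :
    ∀ (k : ℕ) {M : Type u} [AddCommGroup M] [Module ℂ M] [FiniteDimensional ℂ M],
      Module.finrank ℂ M ≤ k →
      ∀ (TM : Fin r → M ≃ₗ[ℂ] M),
      (∀ i j, ((TM i : Module.End ℂ M) * TM j) =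
        (q i j : ℂ) • ((TM j : Module.End ℂ M) * TM i)) →
      (∀ i, (⨆ μ : ℂ, Module.End.eigenspace (TM i : Module.End ℂ M) μ) = ⊤) →
      ∃ (n : ℕ) (α : Fin n → Fin r → ℂˣ) (e : M ≃ₗ[ℂ] (Fin n → N)),
        ∀ (i : Fin r) (m : M) (l : Fin n), e (TM i m) l = (α l i : ℂ) • TN i (e m l) := by
  intro k
  induction k with
  | zero =>
    intro M _ _ _ hrank TM hrelM hdiagM
    have hsub : Subsingleton M := by
      rw [← Module.finrank_zero_iff (R := ℂ)]
      omega
    haveI := hsub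
    exact ⟨0, Fin.elim0, LinearEquiv.ofSubsingleton M (Fin 0 → N), fun i m l => l.elim0⟩
  | succ k ih =>
    intro M _ _ _ hrank TM hrelM hdiagM
    rcases subsingleton_or_nontrivial M with hsub | hMnt
    · haveI := hsub
      exact ⟨0, Fin.elim0, LinearEquiv.ofSubsingleton M (Fin 0 → N), fun i m l => l.elim0⟩
    -- Step 1: find a twisted copy of N inside M
    obtain ⟨Ksup1, _⟩ := key q TM TN hrelM hrelN hdiagM hdiagN
    set w1 : Fin r → Module.End ℂ (N →ₗ[ℂ] M) :=
      fun i => sand (TM i : Module.End ℂ M) ((TN i).symm : Module.End ℂ N) with hw1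
    -- Hom(N, M) is nontrivial
    have hHomNT : Nontrivial (N →ₗ[ℂ] M) := by
      obtain ⟨x₀, hx₀⟩ := exists_ne (0 : N)
      obtain ⟨m₀, hm₀⟩ := exists_ne (0 : M)
      obtain ⟨φ, hφ⟩ : ∃ φ : Module.Dual ℂ N, φ x₀ ≠ 0 := by
        by_contra hc
        push_neg at hc
        exact hx₀ ((Module.forall_dual_apply_eq_zero_iff ℂ x₀).mp hc)
      refine nontrivial_of_ne (φ.smulRight m₀) 0 ?_
      intro hc
      have := LinearMap.ext_iff.mp hc x₀
      simp only [LinearMap.smulRight_apply, LinearMap.zero_apply] at this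
      exact hm₀ ((smul_eq_zero.mp this).resolve_left hφ)
    obtain ⟨χ, hχne⟩ : ∃ χ : Fin r → ℂ,
        (⨅ i, Module.End.eigenspace (w1 i) (χ i)) ≠ ⊥ := by
      by_contra hc
      push_neg at hc
      rw [show (⨆ χ : Fin r → ℂ, ⨅ i, Module.End.eigenspace (w1 i) (χ i)) = ⊥ by
        simp [hc]] at Ksup1
      exact bot_ne_top (α := Submodule ℂ (N →ₗ[ℂ] M)) (Ksup1.symm ▸ rfl) |>.elim
    obtain ⟨f, hfmem, hf0⟩ := Submodule.exists_mem_ne_zero_of_ne_bot hχne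
    have hweig : ∀ i, w1 i f = χ i • f := by
      intro i
      exact mem_eigenspace_iff.mp (Submodule.mem_iInf _ |>.mp hfmem i)
    have hint : ∀ i x, TM i (f x) = χ i • f (TN i x) := by
      intro i x
      have := LinearMap.ext_iff.mp (hweig i) (TN i x)
      simpa [hw1, LinearEquiv.symm_apply_apply] using this
    have hχ0 : ∀ i, (χ i) ≠ 0 := by
      intro i hc
      apply hf0
      ext x
      have := hint i x
      rw [hc, zero_smul] at this
      have : TM i (f x) = TM i 0 := by simpa using this
      simpa using (TM i).injective this
    have hkerinv : ∀ i, ∀ u ∈ LinearMap.ker f, TN i u ∈ LinearMap.ker f := by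
      intro i u hu
      rw [LinearMap.mem_ker] at hu ⊢
      have := hint i u
      rw [hu, map_zero] at this
      exact (smul_eq_zero.mp this.symm).resolve_left (hχ0 i)
    have hker : LinearMap.ker f = ⊥ := by
      rcases hNsimp (LinearMap.ker f) hkerinv with h | h
      · exact h
      · exact absurd (LinearMap.ker_eq_top.mp h) hf0
    have hinj : Function.Injective f := LinearMap.ker_eq_bot.mp hker
    set S : Submodule ℂ M := LinearMap.range f with hS
    have hSmap : ∀ i, S.map (TM i : M →ₗ[ℂ] M) = S := by
      intro i
      apply le_antisymm
      · rintro y hy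
        obtain ⟨z, hz, rfl⟩ := Submodule.mem_map.mp hy
        obtain ⟨x, rfl⟩ := hz
        refine ⟨χ i • TN i x, ?_⟩
        rw [map_smul, ← hint i x]
        rfl
      · rintro y ⟨x, rfl⟩
        refine Submodule.mem_map.mpr ⟨(χ i)⁻¹ • f ((TN i).symm x), ⟨(χ i)⁻¹ • (TN i).symm x, by
          rw [map_smul]⟩, ?_⟩
        show TM i ((χ i)⁻¹ • f ((TN i).symm x)) = f x
        rw [map_smul, hint i ((TN i).symm x), (TN i).apply_symm_apply, smul_smul,
          inv_mul_cancel₀ (hχ0 i), one_smul]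
    -- Step 2: the quotient module
    set Q := M ⧸ S with hQ
    set TQ : Fin r → Q ≃ₗ[ℂ] Q := fun i => Submodule.Quotient.equiv S S (TM i) (hSmap i) with hTQdef
    have hTQ : ∀ i m, TQ i (S.mkQ m) = S.mkQ (TM i m) := by
      intro i m
      simp [hTQdef, Submodule.Quotient.equiv, Submodule.mkQ_apply, Submodule.mapQ_apply]
      rfl
    have hrelQ : ∀ i j, ((TQ i : Module.End ℂ Q) * TQ j) =
        (q i j : ℂ) • ((TQ j : Module.End ℂ Q) * TQ i) := by
      intro i j
      refine LinearMap.ext fun z => ?_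
      obtain ⟨m, rfl⟩ := S.mkQ_surjective z
      have hm := LinearMap.ext_iff.mp (hrelM i j) m
      simp only [Module.End.mul_apply, LinearMap.smul_apply, LinearEquiv.coe_coe] at hm ⊢
      rw [hTQ, hTQ, hTQ, hTQ, hm, map_smul]
    have hdiagQ : ∀ i, (⨆ μ : ℂ, Module.End.eigenspace (TQ i : Module.End ℂ Q) μ) = ⊤ := by
      intro i
      have hle : ∀ μ : ℂ, (Module.End.eigenspace (TM i : Module.End ℂ M) μ).map S.mkQ ≤
          Module.End.eigenspace (TQ i : Module.End ℂ Q) μ := by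
        intro μ
        rintro z hz
        obtain ⟨v, hv, rfl⟩ := Submodule.mem_map.mp hz
        rw [mem_eigenspace_iff] at hv ⊢
        show TQ i (S.mkQ v) = μ • S.mkQ v
        rw [hTQ]
        have : TM i v = μ • v := hv
        rw [this, map_smul]
      rw [eq_top_iff]
      calc (⊤ : Submodule ℂ Q) = (⊤ : Submodule ℂ M).map S.mkQ := by
              rw [Submodule.map_top, Submodule.range_mkQ]
        _ = (⨆ μ : ℂ, Module.End.eigenspace (TM i : Module.End ℂ M) μ).map S.mkQ := by
              rw [hdiagM i]
        _ = ⨆ μ : ℂ, (Module.End.eigenspace (TM i : Module.End ℂ M) μ).map S.mkQ := by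
              rw [Submodule.map_iSup]
        _ ≤ ⨆ μ : ℂ, Module.End.eigenspace (TQ i : Module.End ℂ Q) μ := iSup_mono hle
    have hrankQ : Module.finrank ℂ Q ≤ k := by
      have hq : Module.finrank ℂ Q + Module.finrank ℂ S = Module.finrank ℂ M :=
        Submodule.finrank_quotient_add_finrank S
      have hSne : S ≠ ⊥ := by
        intro hc
        have hc' : LinearMap.range f = ⊥ := hc
        exact hf0 (LinearMap.range_eq_bot.mp hc')
      have hSpos : 0 < Module.finrank ℂ S := by
        rw [Module.finrank_pos_iff]
        exact Submodule.nontrivial_iff_ne_bot.mpr hSne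
      omega
    obtain ⟨n', α', e', he'⟩ := ih hrankQ TQ hrelQ hdiagQ
    -- Step 3: lift the identity to an equivariant section g : Q →ₗ M
    obtain ⟨Ksup2, _⟩ := key q TM TQ hrelM hrelQ hdiagM hdiagQ
    obtain ⟨_, Kind3⟩ := key q TQ TQ hrelQ hrelQ hdiagQ hdiagQ
    set w2 : Fin r → Module.End ℂ (Q →ₗ[ℂ] M) :=
      fun i => sand (TM i : Module.End ℂ M) ((TQ i).symm : Module.End ℂ Q) with hw2
    set w3 : Fin r → Module.End ℂ (Q →ₗ[ℂ] Q) :=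
      fun i => sand (TQ i : Module.End ℂ Q) ((TQ i).symm : Module.End ℂ Q) with hw3
    set Pi2 : (Q →ₗ[ℂ] M) →ₗ[ℂ] (Q →ₗ[ℂ] Q) := LinearMap.llcomp ℂ Q M Q S.mkQ with hPi2
    have hPi2app : ∀ (h : Q →ₗ[ℂ] M) (z : Q), Pi2 h z = S.mkQ (h z) := fun h z => rfl
    have hPiw : ∀ i h, Pi2 (w2 i h) = w3 i (Pi2 h) := by
      intro i h
      refine LinearMap.ext fun z => ?_
      show S.mkQ (TM i (h ((TQ i).symm z))) = TQ i (S.mkQ (h ((TQ i).symm z)))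
      rw [hTQ]
    have hmapJ : ∀ (χ' : Fin r → ℂ) (h : Q →ₗ[ℂ] M),
        h ∈ (⨅ i, Module.End.eigenspace (w2 i) (χ' i)) →
        Pi2 h ∈ (⨅ i, Module.End.eigenspace (w3 i) (χ' i)) := by
      intro χ' h hh
      rw [Submodule.mem_iInf] at hh ⊢
      intro i
      rw [mem_eigenspace_iff, ← hPiw i h, mem_eigenspace_iff.mp (hh i), map_smul]
    classical
    set χ₁ : Fin r → ℂ := fun _ => (1 : ℂ) with hχ₁
    have hid : LinearMap.id ∈ (⨅ i, Module.End.eigenspace (w3 i) (χ₁ i)) := by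
      rw [Submodule.mem_iInf]
      intro i
      rw [mem_eigenspace_iff]
      refine LinearMap.ext fun z => ?_
      show TQ i ((LinearMap.id : Q →ₗ[ℂ] Q) ((TQ i).symm z)) = χ₁ i • (LinearMap.id : Q →ₗ[ℂ] Q) z
      simp [hχ₁]
    obtain ⟨σ, hσ⟩ := S.mkQ.exists_rightInverse_of_surjective (Submodule.range_mkQ S)
    have hh₀ : Pi2 σ = LinearMap.id := by
      refine LinearMap.ext fun z => ?_
      show S.mkQ (σ z) = z
      have := LinearMap.ext_iff.mp hσ z
      simpa using this
    have hmem : σ ∈ ⨆ χ' : Fin r → ℂ, ⨅ i, Module.End.eigenspace (w2 i) (χ' i) := by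
      rw [Ksup2]; exact Submodule.mem_top
    rw [Submodule.mem_iSup_iff_exists_finsupp] at hmem
    obtain ⟨cf, hcf, hsum⟩ := hmem
    set g : Q →ₗ[ℂ] M := cf χ₁ with hgdef
    have hexp : (LinearMap.id : Q →ₗ[ℂ] Q) = ∑ χ' ∈ cf.support, Pi2 (cf χ') := by
      rw [← hh₀, ← hsum, map_finsuppSum]
      rfl
    have hPig : Pi2 g = LinearMap.id := by
      have hin1 : LinearMap.id - Pi2 g ∈ (⨅ i, Module.End.eigenspace (w3 i) (χ₁ i)) :=
        Submodule.sub_mem _ hid (hmapJ χ₁ g (hcf χ₁))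
      have hin2 : LinearMap.id - Pi2 g ∈
          ⨆ χ', ⨆ (_ : χ' ≠ χ₁), ⨅ i, Module.End.eigenspace (w3 i) (χ' i) := by
        have hsum2 : LinearMap.id - Pi2 g = ∑ χ' ∈ cf.support.erase χ₁, Pi2 (cf χ') := by
          by_cases hmemsup : χ₁ ∈ cf.support
          · rw [hexp, ← Finset.add_sum_erase _ _ hmemsup]
            rw [← hgdef]
            abel
          · rw [Finset.erase_eq_of_notMem hmemsup, ← hexp, hgdef,
              Finsupp.notMem_support_iff.mp hmemsup, map_zero, sub_zero]
        rw [hsum2]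
        refine Submodule.sum_mem _ fun χ' hχ' => ?_
        have hne := (Finset.mem_erase.mp hχ').1
        have hJ : Pi2 (cf χ') ∈ ⨅ i, Module.End.eigenspace (w3 i) (χ' i) :=
          hmapJ χ' (cf χ') (hcf χ')
        exact le_iSup₂ (f := fun (χ'' : Fin r → ℂ) (_ : χ'' ≠ χ₁) =>
          ⨅ i, Module.End.eigenspace (w3 i) (χ'' i)) χ' hne hJ
      have hz := Submodule.disjoint_def.mp (Kind3 χ₁) _ hin1 hin2
      have := sub_eq_zero.mp hz
      exact this.symm
    have hg1 : ∀ i, w2 i g = g := by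
      intro i
      have := mem_eigenspace_iff.mp (Submodule.mem_iInf _ |>.mp (hcf χ₁) i)
      simpa [hχ₁] using this
    have hgTM : ∀ i y, TM i (g y) = g (TQ i y) := by
      intro i y
      have := LinearMap.ext_iff.mp (hg1 i) (TQ i y)
      simpa [hw2, LinearEquiv.symm_apply_apply] using this
    have hgmk : ∀ y, S.mkQ (g y) = y := by
      intro y
      have := LinearMap.ext_iff.mp hPig y
      exact this
    -- Step 4: assemble the isomorphism
    set Ψ : (N × Q) →ₗ[ℂ] M := f ∘ₗ (LinearMap.fst ℂ N Q) + g ∘ₗ (LinearMap.snd ℂ N Q) with hΨdef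
    have hΨapp : ∀ (x : N) (y : Q), Ψ (x, y) = f x + g y := fun x y => rfl
    have hmkf : ∀ x : N, S.mkQ (f x) = 0 := by
      intro x
      rw [Submodule.mkQ_apply, Submodule.Quotient.mk_eq_zero]
      exact ⟨x, rfl⟩
    have hbij : Function.Bijective Ψ := by
      constructor
      · intro a b hab
        rw [show Ψ a = f a.1 + g a.2 from rfl, show Ψ b = f b.1 + g b.2 from rfl] at hab
        have h2 : a.2 = b.2 := by
          have h1 := congrArg S.mkQ hab
          simpa [map_add, hmkf, hgmk] using h1
        have h3 : f a.1 = f b.1 := by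
          rw [h2] at hab
          exact add_right_cancel hab
        exact Prod.ext (hinj h3) h2
      · intro m
        have hz0 : S.mkQ (m - g (S.mkQ m)) = 0 := by
          rw [map_sub, hgmk]
          simp
        have hmem2 : m - g (S.mkQ m) ∈ S := by
          rwa [Submodule.mkQ_apply, Submodule.Quotient.mk_eq_zero] at hz0
        obtain ⟨x, hx⟩ := hmem2
        refine ⟨(x, S.mkQ m), ?_⟩
        rw [hΨapp, hx]
        abel
    set EΨ := LinearEquiv.ofBijective Ψ hbij with hEΨ
    have hEΨapp : ∀ z : N × Q, EΨ z = Ψ z := fun z => rfl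
    set E := EΨ.symm with hEdef
    have hEprop : ∀ i m, E (TM i m) = (χ i • TN i (E m).1, TQ i (E m).2) := by
      intro i m
      rw [hEdef, LinearEquiv.symm_apply_eq]
      have hm : m = Ψ (E m) := by
        rw [hEdef]
        exact (EΨ.apply_symm_apply m).symm
      rw [hEΨapp]
      rw [show Ψ ((χ i • TN i (E m).1, TQ i (E m).2) : N × Q) =
        f (χ i • TN i (E m).1) + g (TQ i (E m).2) from rfl]
      rw [map_smul, ← hint i (E m).1, ← hgTM i (E m).2]
      rw [show (TM i) (f (E m).1) + (TM i) (g (E m).2) = TM i (f (E m).1 + g (E m).2) by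
        rw [map_add]]
      rw [show f (E m).1 + g (E m).2 = Ψ (E m) from rfl, ← hm]
    refine ⟨n' + 1, Fin.cons (fun i => Units.mk0 (χ i) (hχ0 i)) α',
      (E.trans ((LinearEquiv.refl ℂ N).prodCongr e')).trans (consLE n' N), ?_⟩
    intro i m l
    have hE2 : ∀ m' : M, ((E.trans ((LinearEquiv.refl ℂ N).prodCongr e')).trans (consLE n' N)) m' =
        Fin.cons ((E m').1) (e' ((E m').2)) := fun m' => rfl
    rw [hE2, hE2, hEprop i m]
    refine Fin.cases ?_ (fun l' => ?_) l
    · simp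
    · simp only [Fin.cons_succ]
      exact he' i (E m).2 l' 

end IsoAux
end Part4

/-- Corollary 3.6 (Billig–Lau), isotypic decomposition: every finite-dimensional
diagonalizable module `M` over a cyclotomic quantum torus `R_q` decomposes as
`M ≅ N ⊗ (⊕_α V^α)`, where `N` is a fixed simple diagonalizable `R_q`-module
and the `V^α` are multiplicity spaces, with `t_i` acting on `N ⊗ V^α` by
`t_i(u) ⊗ α_i v`.  Equivalently (choosing bases of the multiplicity spaces),
`M` is a finite direct sum of copies of `N` twisted by rescaling automorphisms
`α l : (ℂ*)^r`:  `e (t_i m)ₗ = α_l(i) • t_i((e m)ₗ)`. -/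
theorem isotypic_decomposition
    {r : ℕ} (q : Fin r → Fin r → ℂˣ)
    (hq1 : ∀ i, q i i = 1) (hqinv : ∀ i j, q i j = (q j i)⁻¹)
    (hqroot : ∀ i j, ∃ n : ℕ, 0 < n ∧ (q i j) ^ n = 1)
    {M N : Type*}
    [AddCommGroup M] [Module ℂ M] [FiniteDimensional ℂ M]
    [AddCommGroup N] [Module ℂ N] [FiniteDimensional ℂ N]
    (TM : Fin r → M ≃ₗ[ℂ] M) (TN : Fin r → N ≃ₗ[ℂ] N)
    (hrelM : ∀ i j, ((TM i : Module.End ℂ M) * TM j) =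
        (q i j : ℂ) • ((TM j : Module.End ℂ M) * TM i))
    (hrelN : ∀ i j, ((TN i : Module.End ℂ N) * TN j) =
        (q i j : ℂ) • ((TN j : Module.End ℂ N) * TN i))
    (hdiagM : ∀ i, IsDiagonalizable (TM i : Module.End ℂ M))
    (hdiagN : ∀ i, IsDiagonalizable (TN i : Module.End ℂ N))
    (hNsimple : Nontrivial N ∧
      ∀ W : Submodule ℂ N, (∀ i, ∀ u ∈ W, TN i u ∈ W) → W = ⊥ ∨ W = ⊤) :
    ∃ (n : ℕ) (α : Fin n → Fin r → ℂˣ)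
      (e : M ≃ₗ[ℂ] ⨁ _l : Fin n, N),
      ∀ (i : Fin r) (m : M) (l : Fin n),
        e (TM i m) l = (α l i : ℂ) • TN i (e m l) := by
  obtain ⟨hNtriv, hNsimp⟩ := hNsimple
  obtain ⟨n, α, ePi, hePi⟩ := IsoAux.aux q TN hrelN hdiagN hNtriv hNsimp
    (Module.finrank ℂ M) le_rfl TM hrelM hdiagM
  refine ⟨n, α, ePi.trans (DirectSum.linearEquivFunOnFintype ℂ (Fin n) (fun _ => N)).symm, ?_⟩
  intro i m l
  have hcoe : ∀ (v : Fin n → N),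
      (((DirectSum.linearEquivFunOnFintype ℂ (Fin n) (fun _ => N)).symm v) : ⨁ _l : Fin n, N) l
        = v l := fun v => rfl
  simp only [LinearEquiv.trans_apply, hcoe]
  exact hePi i m l
end

section
/- Let Ĥ be a finite abelian group with generators η₁, ..., η_r of orders s₁, ..., s_r acting by automorphisms on a ℂ-algebra A, let M be a finite-dimensional simple A-module with invertible operators T_j satisfying ρ(η_j(a)) = T_j ρ(a) T_j⁻¹, generating an action of a cyclotomic quantum torus R_q on M. Then in the isotypic decomposition M ≅ N ⊗ (⊕_α V^α) of M as an R_q-module, every α ∈ (ℂ*)^r with V^α ≠ 0 is of the form α_i = h(η_i) for some character h ∈ H = Hom(Ĥ, ℂ*). -/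
/-
The pairs `(σ, c)` of an automorphism of `A` and a scalar such that `σ` is implemented on `M` by
an operator `S` which stabilises `N` and rescales `φ` (extended linearly from `N` to `M`) by `c`,
i.e. `c • φ ∘ S = S ∘ φ` on `N`,
form a group. It contains every `(η i, α i)`, hence the subgroup `K` these generate. If
`(1, c) ∈ K`, the corresponding `S` commutes with `A`, so it is a scalar by Schur's lemma, and
then `φ ≠ 0` forces `c = 1`. Thus the projection `K → ⟨η⟩` is injective, and its inverse followed
by the second coordinate is the required character.
-/

open Function Set

theorem Subgroup.exists_monoidHom_closure_of_graph {G H ι : Type*} [Group G] [Group H]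
    (g : ι → G) (a : ι → H)
    (hgraph : ∀ c : H, ((1 : G), c) ∈ closure (range fun i => (g i, a i)) → c = 1) :
    ∃ f : closure (range g) →* H,
      ∀ i, f ⟨g i, subset_closure (mem_range_self i)⟩ = a i := by
  set K := closure (range fun i => (g i, a i))
  have hmap : K.map (MonoidHom.fst G H) = closure (range g) := by
    rw [MonoidHom.map_closure, ← range_comp]
    rfl
  have hinj : Injective ((MonoidHom.fst G H).subgroupMap K) := by
    rw [injective_iff_map_eq_one]
    rintro ⟨⟨x, c⟩, hk⟩ h1
    obtain rfl : x = 1 := congrArg Subtype.val h1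
    obtain rfl := hgraph c hk
    rfl
  let e : K ≃* closure (range g) :=
    (MulEquiv.ofBijective _ ⟨hinj, (MonoidHom.fst G H).subgroupMap_surjective K⟩).trans
      (MulEquiv.subgroupCongr hmap)
  refine ⟨(MonoidHom.snd G H).comp (K.subtype.comp e.symm.toMonoidHom), fun i => ?_⟩
  have hgen : (g i, a i) ∈ K := subset_closure (mem_range_self i)
  have he : e.symm ⟨g i, subset_closure (mem_range_self i)⟩ = ⟨(g i, a i), hgen⟩ := by
    rw [MulEquiv.symm_apply_eq]
    rfl
  simp only [MonoidHom.comp_apply, MulEquiv.coe_toMonoidHom, he]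
  rfl

theorem Submodule.map_linearEquiv_eq_of_le {K V : Type*} [DivisionRing K] [AddCommGroup V]
    [Module K V] [FiniteDimensional K V] (e : V ≃ₗ[K] V) {N : Submodule K V}
    (h : ∀ u ∈ N, e u ∈ N) : N.map (e : V →ₗ[K] V) = N :=
  Submodule.eq_of_le_of_finrank_eq (Submodule.map_le_iff_le_comap.2 h)
    (LinearEquiv.finrank_map_eq e N)

theorem IsSimpleModule.exists_eq_smul_of_map_smul (k : Type*) {A M : Type*} [Field k]
    [IsAlgClosed k] [Ring A] [Algebra k A] [AddCommGroup M] [Module k M] [Module A M]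
    [IsScalarTower k A M] [IsSimpleModule A M] [FiniteDimensional k M] (S : M →ₗ[k] M)
    (hS : ∀ (a : A) (u : M), S (a • u) = a • S u) : ∃ μ : k, ∀ u, S u = μ • u := by
  obtain ⟨μ, hμ⟩ := (IsSimpleModule.algebraMap_end_bijective_of_isAlgClosed k).2
    { toFun := S, map_add' := S.map_add, map_smul' := hS }
  exact ⟨μ, fun u => by rw [← Module.algebraMap_end_apply k A, hμ]; rfl⟩

section Intertwining

variable {k A M : Type*} [CommRing k] [Ring A] [Algebra k A] [AddCommGroup M] [Module k M]
  [Module A M]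

def intertwiningPairs (N : Submodule k M) (φ : M →ₗ[k] M) : Subgroup ((A ≃ₐ[k] A) × kˣ) where
  carrier := {p | ∃ S : M ≃ₗ[k] M, (∀ (a : A) (u : M), S (a • u) = p.1 a • S u) ∧
    N.map (S : M →ₗ[k] M) = N ∧ ∀ u ∈ N, (p.2 : k) • φ (S u) = S (φ u)}
  one_mem' := ⟨LinearEquiv.refl k M, fun _ _ => rfl, Submodule.map_id N, fun u _ => by simp⟩
  mul_mem' := by
    rintro ⟨σ, c⟩ ⟨σ', c'⟩ ⟨S, hSA, hSN, hSφ⟩ ⟨S', hSA', hSN', hSφ'⟩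
    refine ⟨S'.trans S, fun a u => by simp [hSA, hSA'], ?_, fun u hu => ?_⟩
    · rw [LinearEquiv.coe_trans, Submodule.map_comp, hSN', hSN]
    · have hS'u : S' u ∈ N := hSN' ▸ Submodule.mem_map_of_mem hu
      rw [LinearEquiv.trans_apply, LinearEquiv.trans_apply, Prod.snd_mul, Units.val_mul, mul_comm,
        mul_smul, hSφ _ hS'u, ← map_smul, hSφ' u hu]
  inv_mem' := by
    rintro ⟨σ, c⟩ ⟨S, hSA, hSN, hSφ⟩
    have hSN' : N.map (S.symm : M →ₗ[k] M) = N := (Submodule.map_symm_eq_iff S).2 hSN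
    refine ⟨S.symm, fun a u => S.injective ?_, hSN', fun u hu => S.injective ?_⟩
    · simp [hSA]
    · have hSu : S.symm u ∈ N := hSN' ▸ Submodule.mem_map_of_mem hu
      have := hSφ _ hSu
      simp only [LinearEquiv.apply_symm_apply] at this
      simp [← this, smul_smul]

theorem mem_intertwiningPairs (N : Submodule k M) (φ : M →ₗ[k] M) {p : (A ≃ₐ[k] A) × kˣ} :
    p ∈ intertwiningPairs N φ ↔ ∃ S : M ≃ₗ[k] M, (∀ (a : A) (u : M), S (a • u) = p.1 a • S u) ∧
      N.map (S : M →ₗ[k] M) = N ∧ ∀ u ∈ N, (p.2 : k) • φ (S u) = S (φ u) :=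
  Iff.rfl

end Intertwining

theorem eq_one_of_mk_one_mem_intertwiningPairs {k A M : Type*} [Field k] [IsAlgClosed k] [Ring A]
    [Algebra k A] [AddCommGroup M] [Module k M] [Module A M] [IsScalarTower k A M]
    [IsSimpleModule A M] [FiniteDimensional k M] {N : Submodule k M} {φ : M →ₗ[k] M} {u : M}
    (hu : u ∈ N) (hφu : φ u ≠ 0) {c : kˣ}
    (hc : ((1 : A ≃ₐ[k] A), c) ∈ intertwiningPairs N φ) : c = 1 := by
  obtain ⟨S, hSA, -, hSφ⟩ := (mem_intertwiningPairs N φ).1 hc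
  obtain ⟨μ, hμ⟩ := IsSimpleModule.exists_eq_smul_of_map_smul k S.toLinearMap hSA
  have hμ0 : μ ≠ 0 := by
    rintro rfl
    exact hφu (S.injective (by simpa using hμ (φ u)))
  have hcμ : (c : k) * μ = μ := by
    have h := hSφ u hu
    simp only [LinearEquiv.coe_coe] at hμ
    rw [hμ, hμ, map_smul, smul_smul] at h
    exact smul_left_injective k hφu h
  exact Units.ext ((mul_eq_right₀ hμ0).1 hcμ)

theorem isotypic_eigenvalues_are_characters_general
    {A M : Type*} [Ring A] [Algebra ℂ A]
    [AddCommGroup M] [Module ℂ M] [Module A M] [IsScalarTower ℂ A M]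
    [FiniteDimensional ℂ M] (hM : IsSimpleModule A M)
    {r : ℕ} (η : Fin r → A ≃ₐ[ℂ] A)
    (T : Fin r → M ≃ₗ[ℂ] M)
    (hT : ∀ i, ∀ (a : A) (u : M), T i (a • u) = η i a • T i u)
    (N : Submodule ℂ M) (hNinv : ∀ i, ∀ u ∈ N, T i u ∈ N)
    (α : Fin r → ℂˣ)
    (hα : ∃ φ : N →ₗ[ℂ] M, φ ≠ 0 ∧
      ∀ i (u : N), (α i : ℂ) • φ ⟨T i (u : M), hNinv i u u.2⟩ = T i (φ u)) :
    ∃ h : ↥(Subgroup.closure (Set.range η)) →* ℂˣ,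
      ∀ i, α i = h ⟨η i, Subgroup.subset_closure (Set.mem_range_self i)⟩ := by
  obtain ⟨φ₀, hφ₀, hφ₀T⟩ := hα
  obtain ⟨φ, rfl⟩ := LinearMap.exists_extend φ₀
  have hgen : ∀ i, (η i, α i) ∈ intertwiningPairs N φ := fun i =>
    ⟨T i, hT i, N.map_linearEquiv_eq_of_le (T i) (hNinv i), fun u hu => hφ₀T i ⟨u, hu⟩⟩
  obtain ⟨⟨u, hu⟩, hφu⟩ := DFunLike.ne_iff.1 hφ₀
  obtain ⟨h, hh⟩ := Subgroup.exists_monoidHom_closure_of_graph η α fun c hc =>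
    eq_one_of_mk_one_mem_intertwiningPairs hu hφu
      ((Subgroup.closure_le _).2 (range_subset_iff.2 hgen) hc)
  exact ⟨h, fun i => (hh i).symm⟩

/-- Lemma 3.7 (Billig–Lau): let `M` be a finite-dimensional simple module over
a ℂ-algebra `A`, let `η₁, …, η_r` be commuting finite-order automorphisms of
`A` implemented on `M` by invertible operators `T i` (so `T i (a • u) =
η i (a) • T i u`), which generate the action of a cyclotomic quantum torus on
`M`.  Let `N ⊆ M` be a simple quantum-torus submodule.  Then every `α ∈ (ℂ*)^r`
occurring in the isotypic decomposition of `M` — i.e. every `α` such that the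
`α`-rescaled twist of `N` admits a nonzero quantum-torus homomorphism into `M`
— is of the form `α_i = h(η_i)` for some character `h` of the group `Ĥ`
generated by the `η_i`. -/
theorem isotypic_eigenvalues_are_characters
    {A M : Type*} [Ring A] [Algebra ℂ A]
    [AddCommGroup M] [Module ℂ M] [Module A M] [IsScalarTower ℂ A M]
    [FiniteDimensional ℂ M] (hM : IsSimpleModule A M)
    {r : ℕ} (η : Fin r → A ≃ₐ[ℂ] A)
    (hcomm : ∀ i j, Commute (η i) (η j)) (hfin : ∀ i, IsOfFinOrder (η i))
    (T : Fin r → M ≃ₗ[ℂ] M)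
    (hT : ∀ i, ∀ (a : A) (u : M), T i (a • u) = η i a • T i u)
    (N : Submodule ℂ M) (hNinv : ∀ i, ∀ u ∈ N, T i u ∈ N) (hNne : N ≠ ⊥)
    (hNsimple : ∀ W : Submodule ℂ M, W ≤ N →
      (∀ i, ∀ u ∈ W, T i u ∈ W) → W = ⊥ ∨ W = N)
    (α : Fin r → ℂˣ)
    (hα : ∃ φ : N →ₗ[ℂ] M, φ ≠ 0 ∧
      ∀ i (u : N), (α i : ℂ) • φ ⟨T i (u : M), hNinv i u u.2⟩ = T i (φ u)) :
    ∃ h : ↥(Subgroup.closure (Set.range η)) →* ℂˣ,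
      ∀ i, α i = h ⟨η i, Subgroup.subset_closure (Set.mem_range_self i)⟩ :=
  isotypic_eigenvalues_are_characters_general hM η T hT N hNinv α hα
end

section
/- The map γ: ℤ^r → H = Hom(Ĥ, ℂ*) defined by γ(a)(η^b) = Π_{i,j=1}^r q_{ij}^{a_i b_j} is a well-defined group homomorphism, and its kernel corresponds to the center of the quantum torus: Z(R_q) = Span{t^a | a ∈ ker γ}. -/
lemma aux_central_list_prod {G : Type*} [Group G] :
    ∀ {n : ℕ} (c x : Fin n → G), (∀ i y, Commute (c i) y) →
      (List.ofFn fun i => c i * x i).prod = (List.ofFn c).prod * (List.ofFn x).prod := by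
  intro n
  induction n with
  | zero => intro c x _; simp
  | succ n ih =>
      intro c x hc
      rw [List.ofFn_succ, List.ofFn_succ, List.ofFn_succ, List.prod_cons, List.prod_cons,
        List.prod_cons,
        ih (fun i => c i.succ) (fun i => x i.succ) (fun i y => hc i.succ y)]
      have hcomm : Commute (x 0) (List.ofFn fun i => c i.succ).prod := by
        apply Commute.list_prod_right
        intro y hy
        rw [List.mem_ofFn] at hy
        obtain ⟨i, rfl⟩ := hy
        exact (hc i.succ (x 0)).symm
      calc c 0 * x 0 * ((List.ofFn fun i => c i.succ).prod * (List.ofFn fun i => x i.succ).prod)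
          = c 0 * ((List.ofFn fun i => c i.succ).prod) * (x 0 * (List.ofFn fun i => x i.succ).prod) := by
            rw [mul_assoc (c 0), ← mul_assoc (x 0), hcomm.eq]
            group
        _ = _ := rfl



/-- (Billig–Lau, Section 3): in the setting of a finite-dimensional simple
`A`-module `M`, a finite abelian group `Ĥ` of automorphisms of `A` generated by
`η₁, …, η_r` (acting via `Φ`), implemented on `M` by invertible operators `T i`
satisfying `T i T j = q_{ij} T j T i`, the map
`γ : ℤ^r → H = Hom(Ĥ, ℂ*)`, `γ(a)(η^b) = ∏_{i,j} q_{ij}^{a_i b_j}`,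
is a well-defined group homomorphism, and its kernel corresponds to the centre
of the quantum torus: `γ(a) = 1` iff the monomial `T^a` is central, i.e.
commutes with all the `T j`. -/
theorem gamma_well_defined_and_kernel_center
    {A M : Type*} [Ring A] [Algebra ℂ A]
    [AddCommGroup M] [Module ℂ M] [Module A M] [IsScalarTower ℂ A M]
    [FiniteDimensional ℂ M] (hM : IsSimpleModule A M)
    {Hhat : Type*} [CommGroup Hhat] [Finite Hhat]
    {r : ℕ} (η : Fin r → Hhat) (hgen : Subgroup.closure (Set.range η) = ⊤)
    (Φ : Hhat →* A ≃ₐ[ℂ] A)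
    (T : Fin r → M ≃ₗ[ℂ] M)
    (hT : ∀ i, ∀ (a : A) (u : M), T i (a • u) = Φ (η i) a • T i u)
    (q : Fin r → Fin r → ℂˣ)
    (hq : ∀ i j, ((T i : Module.End ℂ M) * T j) =
        (q i j : ℂ) • ((T j : Module.End ℂ M) * T i)) :
    ∃ γ : (Fin r → ℤ) → (Hhat →* ℂˣ),
      (∀ a b : Fin r → ℤ, γ (a + b) = γ a * γ b) ∧
      (∀ a b : Fin r → ℤ, γ a (∏ i, η i ^ b i) = ∏ i, ∏ j, q i j ^ (a i * b j)) ∧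
      (∀ a : Fin r → ℤ, γ a = 1 ↔
        ∀ j, Commute ((List.ofFn fun i => T i ^ a i).prod : M ≃ₗ[ℂ] M) (T j)) := by
  classical
  have hMnt : Nontrivial M := IsSimpleModule.nontrivial A M
  set E := Module.End ℂ M with hE
  let ψ : (M →ₗ[ℂ] M)ˣ ≃* (M ≃ₗ[ℂ] M) :=
    LinearMap.GeneralLinearGroup.generalLinearEquiv ℂ M
  let U : Fin r → Eˣ := fun i => ψ.symm (T i)
  have hUval : ∀ i, ((U i : Eˣ) : E) = (T i : M →ₗ[ℂ] M) := fun i => rfl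
  have hψU : ∀ i, ψ (U i) = T i := fun i => ψ.apply_symm_apply (T i)
  let s : ℂˣ →* Eˣ := Units.map (algebraMap ℂ E).toMonoidHom
  have hsval : ∀ c : ℂˣ, ((s c : Eˣ) : E) = algebraMap ℂ E (c : ℂ) := fun c => rfl
  have hscomm : ∀ (c : ℂˣ) (x : Eˣ), Commute (s c) x := by
    intro c x
    apply Units.ext
    simpa [hsval] using (Algebra.commutes (c : ℂ) (x : E))
  have hsinj : Function.Injective s :=
    Units.map_injective (algebraMap ℂ E).injective
  -- commutation relations in units
  have hqU : ∀ i j, U i * U j = s (q i j) * (U j * U i) := by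
    intro i j
    apply Units.ext
    simpa [hsval, hUval, Algebra.smul_def] using hq i j
  have hq1 : ∀ i j, q i j * q j i = 1 := by
    intro i j
    have hx : ((T i : E) * (T j : E)) ≠ 0 := by
      have h0 : ((U i * U j : Eˣ) : E) = (T i : E) * (T j : E) := by
        rw [Units.val_mul, hUval, hUval]
      rw [← h0]
      exact Units.ne_zero _
    have h2 := hq i j
    rw [hq j i, smul_smul] at h2
    have h3 : ((q i j : ℂ) * (q j i : ℂ)) • ((T i : E) * (T j : E)) =
        (1 : ℂ) • ((T i : E) * (T j : E)) := by rw [← h2, one_smul]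
    have h4 := smul_left_injective ℂ hx h3
    exact Units.ext (by rw [Units.val_mul]; simpa using h4)
  -- monomials and π
  let Upow : (Fin r → ℤ) → Eˣ := fun a => (List.ofFn fun i => U i ^ a i).prod
  let π : (Fin r → ℤ) → Hhat := fun b => ∏ i, η i ^ b i
  let δ : (Fin r → ℤ) → (Fin r → ℤ) → ℂˣ := fun a b => ∏ i, ∏ j, q i j ^ (a i * b j)
  -- conjugation
  have hconj : ∀ j b, U j * Upow b * (U j)⁻¹ = s (∏ i, q j i ^ b i) * Upow b := by
    intro j b
    have step1 : U j * Upow b * (U j)⁻¹ =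
        (List.ofFn fun i => MulAut.conj (U j) (U i ^ b i)).prod := by
      show MulAut.conj (U j) ((List.ofFn fun i => U i ^ b i).prod) = _
      rw [map_list_prod, List.map_ofFn]
      rfl
    have step2 : ∀ i, MulAut.conj (U j) (U i ^ b i) = s (q j i ^ b i) * U i ^ b i := by
      intro i
      rw [map_zpow]
      have h2 : MulAut.conj (U j) (U i) = s (q j i) * U i := by
        show U j * U i * (U j)⁻¹ = _
        rw [hqU j i]
        group
      rw [h2, (hscomm (q j i) (U i)).mul_zpow, ← map_zpow]
    have step3 : (List.ofFn fun i => MulAut.conj (U j) (U i ^ b i)).prod =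
        (List.ofFn fun i => s (q j i ^ b i) * U i ^ b i).prod := by
      exact congrArg List.prod (congrArg List.ofFn (funext step2))
    have step4 : (List.ofFn fun i => s (q j i ^ b i) * U i ^ b i).prod =
        (List.ofFn fun i => s (q j i ^ b i)).prod * Upow b :=
      aux_central_list_prod _ _ (fun i y => hscomm _ y)
    have step5 : (List.ofFn fun i => s (q j i ^ b i)).prod = s (∏ i, q j i ^ b i) := by
      have h3 := map_list_prod s (List.ofFn fun i => q j i ^ b i)
      rw [List.map_ofFn, List.prod_ofFn] at h3
      exact h3.symm
    rw [step1, step3, step4, step5]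
  have hcommute_iff : ∀ j b, Commute (Upow b) (U j) ↔ (∏ i, q j i ^ b i) = 1 := by
    intro j b
    constructor
    · intro hc
      have h1 : U j * Upow b * (U j)⁻¹ = Upow b := by
        rw [← hc.eq]
        exact mul_inv_cancel_right _ _
      rw [hconj] at h1
      apply hsinj
      rw [map_one]
      exact mul_eq_right.mp h1
    · intro h1
      have h2 : U j * Upow b * (U j)⁻¹ = Upow b := by
        rw [hconj, h1, map_one, one_mul]
      have h3 : Upow b * U j = U j * Upow b := by
        calc Upow b * U j = (U j * Upow b * (U j)⁻¹) * U j := by rw [h2]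
          _ = U j * Upow b := inv_mul_cancel_right _ _
      exact h3
  -- semilinearity
  have hSpow : ∀ b (a : A) (u : M), ((Upow b : Eˣ) : E) (a • u) =
      Φ (π b) a • ((Upow b : Eˣ) : E) u := by
    intro b
    let S : Subgroup (Eˣ × Hhat) :=
      { carrier := {p | ∀ (a : A) (u : M),
          ((p.1 : Eˣ) : E) (a • u) = Φ p.2 a • ((p.1 : Eˣ) : E) u}
        one_mem' := by
          intro a u
          show ((1 : Eˣ) : E) (a • u) = Φ 1 a • ((1 : Eˣ) : E) u
          rw [Units.val_one, Module.End.one_apply, Module.End.one_apply, map_one]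
          rfl
        mul_mem' := by
          rintro p p' hp hp' a u
          show ((p.1 * p'.1 : Eˣ) : E) (a • u) =
            Φ (p.2 * p'.2) a • ((p.1 * p'.1 : Eˣ) : E) u
          rw [Units.val_mul, Module.End.mul_apply, hp' a u, hp _ _, map_mul,
            AlgEquiv.mul_apply, Module.End.mul_apply]
        inv_mem' := by
          rintro p hp a u
          show ((p.1⁻¹ : Eˣ) : E) (a • u) = Φ p.2⁻¹ a • ((p.1⁻¹ : Eˣ) : E) u
          have hPhi : Φ p.2 (Φ p.2⁻¹ a) = a := by
            rw [← AlgEquiv.mul_apply, ← map_mul, mul_inv_cancel, map_one]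
            rfl
          have hUU : ∀ x : M, ((p.1 : Eˣ) : E) (((p.1⁻¹ : Eˣ) : E) x) = x := by
            intro x
            rw [← Module.End.mul_apply, ← Units.val_mul, mul_inv_cancel,
              Units.val_one, Module.End.one_apply]
          have hUU' : ∀ x : M, ((p.1⁻¹ : Eˣ) : E) (((p.1 : Eˣ) : E) x) = x := by
            intro x
            rw [← Module.End.mul_apply, ← Units.val_mul, inv_mul_cancel,
              Units.val_one, Module.End.one_apply]
          have key : ((p.1 : Eˣ) : E) (Φ p.2⁻¹ a • ((p.1⁻¹ : Eˣ) : E) u) = a • u := by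
            rw [hp, hPhi, hUU]
          have h3 := congrArg (fun x => ((p.1⁻¹ : Eˣ) : E) x) key
          rw [hUU'] at h3
          exact h3.symm }
    have hS : ∀ i, (U i, η i) ∈ S := by
      intro i a u
      show ((U i : Eˣ) : E) (a • u) = Φ (η i) a • ((U i : Eˣ) : E) u
      rw [hUval]
      exact hT i a u
    have hl : (List.ofFn fun i => ((U i ^ b i : Eˣ), η i ^ b i)).prod ∈ S := by
      apply Subgroup.list_prod_mem
      intro p hp
      rw [List.mem_ofFn] at hp
      obtain ⟨i, rfl⟩ := hp
      exact Subgroup.zpow_mem S (hS i) (b i)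
    have hfst : ((List.ofFn fun i => ((U i ^ b i : Eˣ), η i ^ b i)).prod).1 = Upow b := by
      have h5 := map_list_prod (MonoidHom.fst Eˣ Hhat)
        (List.ofFn fun i => ((U i ^ b i : Eˣ), η i ^ b i))
      rw [List.map_ofFn] at h5
      exact h5
    have hsnd : ((List.ofFn fun i => ((U i ^ b i : Eˣ), η i ^ b i)).prod).2 = π b := by
      have h5 := map_list_prod (MonoidHom.snd Eˣ Hhat)
        (List.ofFn fun i => ((U i ^ b i : Eˣ), η i ^ b i))
      rw [List.map_ofFn] at h5
      exact h5.trans List.prod_ofFn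
    intro a u
    have h6 := hl a u
    rw [hfst, hsnd] at h6
    exact h6
  -- Schur
  have hscalar : ∀ b, π b = 1 → ∀ j, (∏ i, q j i ^ b i) = 1 := by
    intro b hb j
    haveI := hM
    have hsemi := hSpow b
    rw [hb] at hsemi
    set f : Module.End ℂ M := ((Upow b : Eˣ) : E) with hf
    have hlin : ∀ (a : A) (u : M), f (a • u) = a • f u := by
      intro a u
      simpa using hsemi a u
    obtain ⟨μ, hμ⟩ := Module.End.exists_eigenvalue f
    obtain ⟨v, hv⟩ := hμ.exists_hasEigenvector
    have hsmulcomm : ∀ (a : A) (m : M), a • (μ • m) = μ • (a • m) := by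
      intro a m
      rw [← algebraMap_smul A μ m, ← algebraMap_smul A μ (a • m), smul_smul,
        smul_smul, Algebra.commutes]
    let N : Submodule A M :=
      { carrier := {u | f u = μ • u}
        add_mem' := by
          intro x y hx hy
          simp only [Set.mem_setOf_eq] at *
          rw [map_add, hx, hy, smul_add]
        zero_mem' := by simp
        smul_mem' := by
          intro a x hx
          simp only [Set.mem_setOf_eq] at *
          rw [hlin, hx, hsmulcomm] }
    have hvN : v ∈ N := hv.apply_eq_smul
    have hN : N = ⊤ := by
      rcases eq_bot_or_eq_top N with h | h
      · exfalso
        rw [h] at hvN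
        exact hv.2 ((Submodule.mem_bot A).mp hvN)
      · exact h
    have hfu : ∀ u : M, f u = μ • u := by
      intro u
      have : u ∈ N := hN ▸ Submodule.mem_top
      exact this
    have hcomm : Commute (Upow b) (U j) := by
      apply Units.ext
      rw [Units.val_mul, Units.val_mul, hUval, ← hf]
      apply LinearMap.ext
      intro u
      rw [Module.End.mul_apply, Module.End.mul_apply, hfu, hfu]
      exact (map_smul (T j : M →ₗ[ℂ] M) μ u).symm
    exact (hcommute_iff j b).mp hcomm
  -- δ rewritings
  have hdelta_b : ∀ a b, δ a b = ∏ j, (∏ i, q i j ^ a i) ^ (b j) := by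
    intro a b
    show (∏ i, ∏ j, q i j ^ (a i * b j)) = _
    rw [Finset.prod_comm]
    refine Finset.prod_congr rfl fun j _ => ?_
    rw [← Finset.prod_zpow]
    exact Finset.prod_congr rfl fun i _ => by rw [zpow_mul]
  have hdelta_a : ∀ a b, δ a b = ∏ i, (∏ j, q i j ^ b j) ^ (a i) := by
    intro a b
    refine Finset.prod_congr rfl fun i _ => ?_
    rw [← Finset.prod_zpow]
    exact Finset.prod_congr rfl fun j _ => by rw [← zpow_mul, mul_comm]
  have hcinv : ∀ (a : Fin r → ℤ) j, (∏ i, q i j ^ a i) = (∏ i, q j i ^ a i)⁻¹ := by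
    intro a j
    rw [← Finset.prod_inv_distrib]
    refine Finset.prod_congr rfl fun i _ => ?_
    rw [show q i j = (q j i)⁻¹ from eq_inv_of_mul_eq_one_right (hq1 j i), inv_zpow]
  have hpi_add : ∀ x y, π (x + y) = π x * π y := by
    intro x y
    show (∏ i, η i ^ (x + y) i) = (∏ i, η i ^ x i) * ∏ i, η i ^ y i
    rw [← Finset.prod_mul_distrib]
    exact Finset.prod_congr rfl fun i _ => by rw [Pi.add_apply, zpow_add]
  have hdelta_addb : ∀ a b b', δ a (b + b') = δ a b * δ a b' := by
    intro a b b'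
    show (∏ i, ∏ j, q i j ^ (a i * (b + b') j)) = _
    rw [← Finset.prod_mul_distrib]
    refine Finset.prod_congr rfl fun i _ => ?_
    rw [← Finset.prod_mul_distrib]
    exact Finset.prod_congr rfl fun j _ => by
      rw [Pi.add_apply, mul_add, zpow_add]
  have hdelta_adda : ∀ a a' b, δ (a + a') b = δ a b * δ a' b := by
    intro a a' b
    show (∏ i, ∏ j, q i j ^ ((a + a') i * b j)) = _
    rw [← Finset.prod_mul_distrib]
    refine Finset.prod_congr rfl fun i _ => ?_
    rw [← Finset.prod_mul_distrib]
    exact Finset.prod_congr rfl fun j _ => by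
      rw [Pi.add_apply, add_mul, zpow_add]
  have hdelta_ker : ∀ a b, π b = 1 → δ a b = 1 := by
    intro a b hb
    rw [hdelta_a]
    have h1 : ∀ i, (∏ j, q i j ^ b j) = 1 := fun i => hscalar b hb i
    simp [h1]
  have hdelta_pi : ∀ a b b', π b = π b' → δ a b = δ a b' := by
    intro a b b' h
    have h1 : π (b - b') = 1 := by
      have := hpi_add (b - b') b'
      rw [sub_add_cancel, h] at this
      exact mul_right_cancel (by rw [← this, one_mul])
    have h2 := hdelta_ker a (b - b') h1
    have h3 : δ a b = δ a (b - b') * δ a b' := by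
      rw [← hdelta_addb, sub_add_cancel]
    rw [h3, h2, one_mul]
  -- surjectivity of π
  have hπsurj : Function.Surjective π := by
    intro h
    let Sπ : Subgroup Hhat :=
      { carrier := Set.range π
        one_mem' := ⟨0, by show (∏ i, η i ^ (0 : ℤ)) = 1; simp⟩
        mul_mem' := by
          rintro x y ⟨b, rfl⟩ ⟨b', rfl⟩
          exact ⟨b + b', hpi_add b b'⟩
        inv_mem' := by
          rintro x ⟨b, rfl⟩
          refine ⟨-b, ?_⟩
          have h1 := hpi_add b (-b)
          have h2 : π (b + -b) = 1 := by
            show (∏ i, η i ^ (b + -b) i) = 1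
            simp
          rw [h2] at h1
          exact eq_inv_of_mul_eq_one_right h1.symm
        }
    have hle : Subgroup.closure (Set.range η) ≤ Sπ := by
      rw [Subgroup.closure_le]
      rintro x ⟨i, rfl⟩
      refine ⟨Pi.single i (1:ℤ), ?_⟩
      have hπdef : ∀ b : Fin r → ℤ, π b = ∏ k, η k ^ b k := fun b => rfl
      rw [hπdef]
      rw [Finset.prod_eq_single i
        (fun k _ hk => by rw [Pi.single_eq_of_ne hk, zpow_zero])
        (fun hh => absurd (Finset.mem_univ i) hh), Pi.single_eq_same, zpow_one]
    rw [hgen] at hle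
    exact hle (Subgroup.mem_top h)
  obtain ⟨σ, hσ⟩ := hπsurj.hasRightInverse
  -- transfer to linear equivs
  have hψT : ∀ a, ψ (Upow a) = ((List.ofFn fun i => T i ^ a i).prod : M ≃ₗ[ℂ] M) := by
    intro a
    show ψ ((List.ofFn fun i => U i ^ a i).prod) = _
    rw [map_list_prod, List.map_ofFn]
    refine congrArg List.prod (congrArg List.ofFn (funext fun i => ?_))
    show ψ (U i ^ a i) = T i ^ a i
    rw [map_zpow, hψU]
  -- define γ
  refine ⟨fun a => MonoidHom.mk' (fun h => δ a (σ h)) ?_, ?_, ?_, ?_⟩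
  · intro h1 h2
    rw [← hdelta_addb]
    exact hdelta_pi a _ _ (by rw [hpi_add, hσ, hσ, hσ])
  · intro a b
    ext h
    exact congrArg Units.val (hdelta_adda a b (σ h))
  · intro a b
    exact hdelta_pi a (σ (π b)) b (hσ (π b))
  · intro a
    constructor
    · intro hγ j
      have h1 : δ a (Pi.single j 1) = 1 := by
        have h2 : δ a (σ (π (Pi.single j 1))) = 1 := by
          exact DFunLike.congr_fun hγ (π (Pi.single j 1))
        rwa [hdelta_pi a (σ (π (Pi.single j 1))) (Pi.single j 1) (hσ _)] at h2
      have hsingle : δ a (Pi.single j (1:ℤ)) = ∏ i, q i j ^ a i := by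
        refine Finset.prod_congr rfl fun i _ => ?_
        rw [Finset.prod_eq_single j
            (fun k _ hk => by rw [Pi.single_eq_of_ne hk, mul_zero, zpow_zero])
            (fun h => absurd (Finset.mem_univ j) h), Pi.single_eq_same, mul_one]
      have h3 : (∏ i, q i j ^ a i) = 1 := by rw [← hsingle]; exact h1
      have h4 : (∏ i, q j i ^ a i) = 1 := by
        rw [hcinv] at h3
        exact inv_injective (by rw [h3, inv_one])
      have h5 : Commute (Upow a) (U j) := (hcommute_iff j a).mpr h4
      have h6 := h5.map ψ.toMonoidHom
      simp only [MulEquiv.toMonoidHom_eq_coe, MonoidHom.coe_coe] at h6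
      rwa [hψT, hψU] at h6
    · intro hcm
      have h4 : ∀ j, (∏ i, q j i ^ a i) = 1 := by
        intro j
        apply (hcommute_iff j a).mp
        have h6 := (hcm j).map ψ.symm.toMonoidHom
        simp only [MulEquiv.toMonoidHom_eq_coe, MonoidHom.coe_coe] at h6
        have e1 : ψ.symm ((List.ofFn fun i => T i ^ a i).prod : M ≃ₗ[ℂ] M) = Upow a := by
          rw [← hψT]; exact ψ.symm_apply_apply _
        have e2 : ψ.symm (T j) = U j := rfl
        rwa [e1, e2] at h6
      ext h
      have h7 : δ a (σ h) = 1 := by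
        rw [hdelta_b]
        apply Finset.prod_eq_one
        intro j _
        rw [hcinv, h4, inv_one, one_zpow]
      exact congrArg Units.val h7
end

section
/- Let M be a finite-dimensional simple A-module, Ĥ a finite abelian group of automorphisms of A with M^η ≅ M for all η ∈ Ĥ, and let {M_h | h ∈ H} and {M'_h | h ∈ H} be two thin coverings of M. Then there exists g ∈ H such that the graded-simple modules ⊕_{h∈H} M_h and ⊕_{h∈H} M'_{h+g} are isomorphic as H-graded A-modules. -/
/-- A covering of an `A`-module `M` indexed by the (multiplicative) character
group `H`. -/
def IsCoveringMul {H A M : Type*} [CommGroup H] [Ring A] [Algebra ℂ A]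
    [AddCommGroup M] [Module ℂ M] [Module A M] [IsScalarTower ℂ A M]
    (𝒜 : H → Submodule ℂ A) (C : H → Submodule ℂ M) : Prop :=
  (⨆ h, C h) = ⊤ ∧ ∀ g h : H, ∀ a ∈ 𝒜 g, ∀ m ∈ C h, a • m ∈ C (g * h)

/-- `C ⪯ D` in the poset of coverings. -/
def CoveringLEMul {H M : Type*} [CommGroup H] [AddCommGroup M] [Module ℂ M]
    (C D : H → Submodule ℂ M) : Prop :=
  ∃ k : H, ∀ h, C (h * k) ≤ D h

/-- Thin = minimal covering. -/
def IsThinCoveringMul {H A M : Type*} [CommGroup H] [Ring A] [Algebra ℂ A]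
    [AddCommGroup M] [Module ℂ M] [Module A M] [IsScalarTower ℂ A M]
    (𝒜 : H → Submodule ℂ A) (C : H → Submodule ℂ M) : Prop :=
  IsCoveringMul 𝒜 C ∧
    ∀ D : H → Submodule ℂ M, IsCoveringMul 𝒜 D → CoveringLEMul D C → CoveringLEMul C D


section aux
variable {G : Type*} [CommGroup G] [Fintype G]

-- sum of a nontrivial character over a finite commutative group vanishes
lemma sum_char_eq_zero {ψ : G →* ℂˣ} (hψ : ψ ≠ 1) : ∑ σ : G, (ψ σ : ℂ) = 0 := by
  obtain ⟨τ, hτ⟩ : ∃ τ, ψ τ ≠ 1 := by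
    by_contra hcon
    push_neg at hcon
    exact hψ (MonoidHom.ext fun σ => by simpa using hcon σ)
  have h1 : ∑ σ : G, (ψ σ : ℂ) = ∑ σ : G, (ψ (τ * σ) : ℂ) :=
    (Fintype.sum_equiv (Equiv.mulLeft τ) _ _ (fun σ => rfl)).symm
  have h2 : ∑ σ : G, (ψ (τ * σ) : ℂ) = (ψ τ : ℂ) * ∑ σ : G, (ψ σ : ℂ) := by
    rw [Finset.mul_sum]
    refine Finset.sum_congr rfl fun σ _ => ?_
    rw [map_mul]; push_cast; ring
  have h3 : ((ψ τ : ℂ) - 1) * ∑ σ : G, (ψ σ : ℂ) = 0 := by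
    rw [sub_mul, one_mul, ← h2, ← h1, sub_self]
  rcases mul_eq_zero.mp h3 with h | h
  · exfalso
    apply hτ
    have : (ψ τ : ℂ) = 1 := by linear_combination h
    exact Units.ext (by simpa using this)
  · exact h

lemma sum_eval_eq_zero {σ : G} (hσ : σ ≠ 1) [Fintype (G →* ℂˣ)] :
    ∑ g : G →* ℂˣ, (g σ : ℂ) = 0 := by
  obtain ⟨g₀, hg₀⟩ : ∃ g₀ : G →* ℂˣ, g₀ σ ≠ 1 := by
    have : NeZero ((Monoid.exponent G : ℂ)) :=
      ⟨by exact_mod_cast Monoid.exponent_ne_zero_of_finite⟩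
    exact CommGroup.exists_apply_ne_one_of_hasEnoughRootsOfUnity G ℂ hσ
  have h1 : ∑ g : G →* ℂˣ, (g σ : ℂ) = ∑ g : G →* ℂˣ, ((g₀ * g) σ : ℂ) :=
    (Fintype.sum_equiv (Equiv.mulLeft g₀) _ _ (fun g => rfl)).symm
  have h2 : ∑ g : G →* ℂˣ, ((g₀ * g) σ : ℂ) = (g₀ σ : ℂ) * ∑ g : G →* ℂˣ, (g σ : ℂ) := by
    rw [Finset.mul_sum]
    refine Finset.sum_congr rfl fun g _ => ?_
    rw [MonoidHom.mul_apply]; push_cast; ring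
  have h3 : ((g₀ σ : ℂ) - 1) * ∑ g : G →* ℂˣ, (g σ : ℂ) = 0 := by
    rw [sub_mul, one_mul, ← h2, ← h1, sub_self]
  rcases mul_eq_zero.mp h3 with h | h
  · exfalso
    apply hg₀
    have : (g₀ σ : ℂ) = 1 := by linear_combination h
    exact Units.ext (by simpa using this)
  · exact h

lemma finite_charGroup : Finite (G →* ℂˣ) := by
  have hn : (Fintype.card G : ℕ) ≠ 0 := Fintype.card_ne_zero
  let f : (G →* ℂˣ) → (G → rootsOfUnity (Fintype.card G) ℂ) := fun g σ =>
    ⟨g σ, by rw [mem_rootsOfUnity, ← map_pow, pow_card_eq_one, map_one]⟩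
  have hf : Function.Injective f := by
    intro g g' h
    ext σ
    have := congrFun h σ
    simpa [f, Subtype.ext_iff, Units.ext_iff] using this
  exact Finite.of_injective f hf

-- the order trick
lemma covering_shift_eq {H M : Type*} [CommGroup H] [Finite H] [AddCommGroup M] [Module ℂ M]
    (C : H → Submodule ℂ M) (k : H) (hle : ∀ h, C (h * k) ≤ C h) (h : H) : C (h * k) = C h := by
  have key : ∀ j : ℕ, ∀ h : H, C (h * k ^ (j + 1)) ≤ C (h * k) := by
    intro j
    induction j with
    | zero => intro h; simp
    | succ j ih =>
      intro h
      have e1 : h * k ^ (j + 2) = (h * k) * k ^ (j + 1) := by group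
      calc C (h * k ^ (j + 2)) = C ((h * k) * k ^ (j + 1)) := by rw [e1]
        _ ≤ C ((h * k) * k) := ih (h * k)
        _ ≤ C (h * k) := hle (h * k)
  refine le_antisymm (hle h) ?_
  have hord : k ^ orderOf k = 1 := pow_orderOf_eq_one k
  have hpos : 0 < orderOf k := orderOf_pos k
  have : C h = C (h * k ^ ((orderOf k - 1) + 1)) := by
    rw [Nat.sub_add_cancel hpos, hord, mul_one]
  rw [this]
  exact key _ h

end aux

section grading
variable {Hhat A : Type*} [CommGroup Hhat] [Fintype Hhat] [Ring A] [Algebra ℂ A]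
variable (Φ : Hhat →* A ≃ₐ[ℂ] A)

/-- the `g`-component of `a` -/
noncomputable def dcomp (g : Hhat →* ℂˣ) (a : A) : A :=
  (Fintype.card Hhat : ℂ)⁻¹ • ∑ σ : Hhat, ((g σ : ℂ))⁻¹ • Φ σ a

variable (𝒜 : (Hhat →* ℂˣ) → Submodule ℂ A)
variable (h𝒜 : ∀ (h : Hhat →* ℂˣ) (a : A), a ∈ 𝒜 h ↔ ∀ σ : Hhat, Φ σ a = (h σ : ℂ) • a)

include h𝒜

lemma dcomp_mem (g : Hhat →* ℂˣ) (a : A) : dcomp Φ g a ∈ 𝒜 g := by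
  rw [h𝒜]
  intro τ
  have comp : ∀ σ : Hhat, Φ τ (Φ σ a) = Φ (τ * σ) a := fun σ => by
    rw [map_mul]; rfl
  have step1 : Φ τ (dcomp Φ g a)
      = (Fintype.card Hhat : ℂ)⁻¹ • ∑ σ : Hhat, ((g σ : ℂ))⁻¹ • Φ (τ * σ) a := by
    rw [dcomp, map_smul, map_sum]
    congr 1
    refine Finset.sum_congr rfl fun σ _ => ?_
    rw [map_smul, comp]
  have step2 : ∑ σ : Hhat, ((g σ : ℂ))⁻¹ • Φ (τ * σ) a
      = ∑ σ : Hhat, ((g (τ⁻¹ * σ) : ℂ))⁻¹ • Φ σ a := by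
    refine Fintype.sum_equiv (Equiv.mulLeft τ) _ _ fun σ => ?_
    simp [inv_mul_cancel_left]
  have step3 : ∑ σ : Hhat, ((g (τ⁻¹ * σ) : ℂ))⁻¹ • Φ σ a
      = (g τ : ℂ) • ∑ σ : Hhat, ((g σ : ℂ))⁻¹ • Φ σ a := by
    rw [Finset.smul_sum]
    refine Finset.sum_congr rfl fun σ _ => ?_
    rw [smul_smul]
    congr 1
    rw [map_mul, map_inv]
    push_cast
    field_simp
  rw [step1, step2, step3, dcomp, smul_comm]

lemma dcomp_pure {χ : Hhat →* ℂˣ} {a : A} (ha : a ∈ 𝒜 χ) (g : Hhat →* ℂˣ) :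
    dcomp Φ g a = if g = χ then a else 0 := by
  classical
  have hΦ := (h𝒜 χ a).mp ha
  have step1 : dcomp Φ g a
      = (Fintype.card Hhat : ℂ)⁻¹ • (∑ σ : Hhat, ((χ * g⁻¹) σ : ℂ)) • a := by
    rw [dcomp, Finset.sum_smul]
    congr 1
    refine Finset.sum_congr rfl fun σ _ => ?_
    rw [hΦ σ, smul_smul]
    congr 1
    simp only [MonoidHom.mul_apply, MonoidHom.inv_apply, Units.val_mul,
      Units.val_inv_eq_inv_val]
    ring
  rw [step1]
  by_cases hg : g = χ
  · rw [if_pos hg]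
    subst hg
    have hsum : ∑ σ : Hhat, (((g * g⁻¹)) σ : ℂ) = (Fintype.card Hhat : ℂ) := by
      simp [Finset.card_univ]
    rw [hsum, smul_smul, inv_mul_cancel₀ (by exact_mod_cast Fintype.card_ne_zero), one_smul]
  · rw [if_neg hg]
    have hne : χ * g⁻¹ ≠ 1 := by
      intro hcon
      exact hg (mul_inv_eq_one.mp hcon).symm
    rw [sum_char_eq_zero hne, zero_smul, smul_zero]

lemma one_mem_component : (1 : A) ∈ 𝒜 1 := by
  rw [h𝒜]
  intro σ
  simp

lemma dcomp_total [Fintype (Hhat →* ℂˣ)] (a : A) :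
    ∑ g : Hhat →* ℂˣ, dcomp Φ g a
      = ((Fintype.card (Hhat →* ℂˣ) : ℂ) * (Fintype.card Hhat : ℂ)⁻¹) • a := by
  classical
  have swap : ∑ g : Hhat →* ℂˣ, dcomp Φ g a
      = (Fintype.card Hhat : ℂ)⁻¹ •
        ∑ σ : Hhat, (∑ g : Hhat →* ℂˣ, ((g σ : ℂ))⁻¹) • Φ σ a := by
    conv_lhs => simp only [dcomp]
    rw [← Finset.smul_sum]
    congr 1
    rw [Finset.sum_comm]
    exact Finset.sum_congr rfl fun σ _ => (Finset.sum_smul).symm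
  have inner : ∀ σ : Hhat, (∑ g : Hhat →* ℂˣ, ((g σ : ℂ))⁻¹)
      = if σ = 1 then (Fintype.card (Hhat →* ℂˣ) : ℂ) else 0 := by
    intro σ
    have e1 : ∀ g : Hhat →* ℂˣ, ((g σ : ℂ))⁻¹ = ((g σ⁻¹ : ℂ)) := fun g => by
      rw [map_inv]
      push_cast
      ring
    rw [Finset.sum_congr rfl fun g _ => e1 g]
    by_cases hσ : σ = 1
    · subst hσ
      simp [Finset.card_univ]
    · rw [if_neg hσ]
      exact sum_eval_eq_zero (inv_ne_one.mpr hσ)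
  rw [swap, Finset.sum_congr rfl fun σ _ => by rw [inner σ]]
  simp only [ite_smul, zero_smul]
  rw [Finset.sum_ite_eq' Finset.univ (1 : Hhat)
    (fun σ => (Fintype.card (Hhat →* ℂˣ) : ℂ) • Φ σ a)]
  simp only [Finset.mem_univ, if_pos, map_one, AlgEquiv.one_apply]
  rw [smul_smul, mul_comm]

lemma dcomp_sum [Fintype (Hhat →* ℂˣ)] [Nontrivial A] (a : A) :
    ∑ g : Hhat →* ℂˣ, dcomp Φ g a = a := by
  have hconst : ((Fintype.card (Hhat →* ℂˣ) : ℂ) * (Fintype.card Hhat : ℂ)⁻¹) = 1 := by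
    have h1 : ∑ g : Hhat →* ℂˣ, dcomp Φ g (1 : A) = (1 : A) := by
      have hp : ∀ g : Hhat →* ℂˣ, dcomp Φ g (1:A) = if g = 1 then (1:A) else 0 :=
        fun g => dcomp_pure Φ 𝒜 h𝒜 (one_mem_component Φ 𝒜 h𝒜) g
      rw [Finset.sum_congr rfl fun g _ => hp g]
      simp
    have h2 := dcomp_total Φ 𝒜 h𝒜 (a := (1 : A))
    rw [h1] at h2
    have h3 : algebraMap ℂ A ((Fintype.card (Hhat →* ℂˣ) : ℂ) * (Fintype.card Hhat : ℂ)⁻¹)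
        = algebraMap ℂ A 1 := by
      rw [map_one, Algebra.algebraMap_eq_smul_one, ← h2]
    exact (algebraMap ℂ A).injective h3
  rw [dcomp_total Φ 𝒜 h𝒜, hconst, one_smul]

lemma dcomp_twist [Fintype (Hhat →* ℂˣ)] [Nontrivial A] (σ : Hhat) (a : A) :
    Φ σ a = ∑ g : Hhat →* ℂˣ, ((g σ : ℂ)) • dcomp Φ g a := by
  conv_lhs => rw [← dcomp_sum Φ 𝒜 h𝒜 a]
  rw [map_sum]
  refine Finset.sum_congr rfl fun g _ => ?_
  exact (h𝒜 g (dcomp Φ g a)).mp (dcomp_mem Φ 𝒜 h𝒜 g a) σ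

end grading

/-- Corollary 3.10 (Billig–Lau): let `M` be a finite-dimensional simple module
over a ℂ-algebra `A`, let `Ĥ` be a finite abelian group of automorphisms of `A`
(acting via `Φ`, with `A` graded by the character group `H = Hom(Ĥ, ℂ*)` via
eigenspaces) such that every twist `M^η` (η ∈ Ĥ) is isomorphic to `M`.  If
`{C h}` and `{C' h}` are two thin coverings of `M`, then for some `g ∈ H` the
associated graded-simple modules `⊕_h C h` and `⊕_h C' (h·g)` are isomorphic as
`H`-graded `A`-modules: there are linear bijections `e h : C h ≃ C' (h·g)`
intertwining the homogeneous action of `A`. -/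
theorem thin_coverings_give_isomorphic_graded_modules
    {Hhat A M : Type*} [CommGroup Hhat] [Finite Hhat] [Ring A] [Algebra ℂ A]
    [AddCommGroup M] [Module ℂ M] [Module A M] [IsScalarTower ℂ A M]
    [FiniteDimensional ℂ M] (hM : IsSimpleModule A M)
    (Φ : Hhat →* A ≃ₐ[ℂ] A)
    (𝒜 : (Hhat →* ℂˣ) → Submodule ℂ A)
    (h𝒜 : ∀ (h : Hhat →* ℂˣ) (a : A), a ∈ 𝒜 h ↔ ∀ σ : Hhat, Φ σ a = (h σ : ℂ) • a)
    (htwist : ∀ σ : Hhat, ∃ T : M ≃ₗ[ℂ] M,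
      ∀ (a : A) (m : M), T (a • m) = Φ σ a • T m)
    (C C' : (Hhat →* ℂˣ) → Submodule ℂ M)
    (hC : IsThinCoveringMul 𝒜 C) (hC' : IsThinCoveringMul 𝒜 C') :
    ∃ g : Hhat →* ℂˣ, ∃ e : ∀ h : Hhat →* ℂˣ, ↥(C h) ≃ₗ[ℂ] ↥(C' (h * g)),
      ∀ (k h : Hhat →* ℂˣ) (a : A) (ha : a ∈ 𝒜 k) (m : M) (hm : m ∈ C h),
        (e (k * h) ⟨a • m, hC.1.2 k h a ha m hm⟩ : M) = a • (e h ⟨m, hm⟩ : M) := by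

  classical
  obtain ⟨_⟩ := nonempty_fintype Hhat
  haveI : Finite (Hhat →* ℂˣ) := finite_charGroup
  obtain ⟨_⟩ := nonempty_fintype (Hhat →* ℂˣ)
  haveI := hM
  haveI : Nontrivial M := IsSimpleModule.nontrivial A M
  haveI : Nontrivial A := by
    by_contra hcon
    rw [not_nontrivial_iff_subsingleton] at hcon
    have h10 : (1 : A) = 0 := Subsingleton.elim _ _
    have hz : ∀ x : M, x = 0 := by
      intro x
      calc x = (1 : A) • x := (one_smul A x).symm
        _ = (0 : A) • x := by rw [h10]
        _ = 0 := zero_smul A x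
    obtain ⟨m, m', hmm'⟩ := exists_pair_ne M
    exact hmm' ((hz m).trans (hz m').symm)
  -- scalar commutation
  have hsmulcomm : ∀ (c : ℂ) (a : A) (x : M), a • c • x = c • a • x := by
    intro c a x
    rw [← algebraMap_smul A c x, ← mul_smul, ← Algebra.commutes, mul_smul, algebraMap_smul]
  -- membership helper for the action
  have hmemC' : ∀ (g v : Hhat →* ℂˣ) (a : A), a ∈ 𝒜 g →
      ∀ x : M, x ∈ C' (g⁻¹ * v) → a • x ∈ C' v := by
    intro g v a ha x hx
    have := hC'.1.2 g (g⁻¹ * v) a ha x hx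
    have e : g * (g⁻¹ * v) = v := mul_inv_cancel_left g v
    rwa [e] at this
  -- the homogeneous action on the direct sum of the covering C'
  let act : A → (∀ v : Hhat →* ℂˣ, ↥(C' v)) → (∀ v : Hhat →* ℂˣ, ↥(C' v)) := fun a y v =>
    ⟨∑ g : Hhat →* ℂˣ, dcomp Φ g a • ((y (g⁻¹ * v) : M)),
     Submodule.sum_mem _ fun g _ =>
       hmemC' g v _ (dcomp_mem Φ 𝒜 h𝒜 g a) _ (y (g⁻¹ * v)).2⟩
  have act_val : ∀ (a : A) y (v : Hhat →* ℂˣ),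
      ((act a y v) : M) = ∑ g : Hhat →* ℂˣ, dcomp Φ g a • ((y (g⁻¹ * v) : M)) :=
    fun a y v => rfl
  have act_pure : ∀ (k : Hhat →* ℂˣ) (a : A), a ∈ 𝒜 k → ∀ y (v : Hhat →* ℂˣ),
      ((act a y v) : M) = a • ((y (k⁻¹ * v)) : M) := by
    intro k a ha y v
    rw [act_val]
    rw [Finset.sum_eq_single k]
    · rw [dcomp_pure Φ 𝒜 h𝒜 ha k, if_pos rfl]
    · intro g _ hg
      rw [dcomp_pure Φ 𝒜 h𝒜 ha g, if_neg hg, zero_smul]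
    · intro hk; exact absurd (Finset.mem_univ k) hk
  -- the twisted evaluation maps
  let θ : Hhat → ((∀ v : Hhat →* ℂˣ, ↥(C' v)) →ₗ[ℂ] M) := fun σ =>
    ∑ v : Hhat →* ℂˣ, (v σ : ℂ) • ((C' v).subtype ∘ₗ LinearMap.proj v)
  have θ_apply : ∀ (σ : Hhat) y, θ σ y = ∑ v : Hhat →* ℂˣ, (v σ : ℂ) • ((y v) : M) := by
    intro σ y
    simp [θ, LinearMap.sum_apply, LinearMap.smul_apply]
  have θ_twist : ∀ (σ : Hhat) (a : A) y, θ σ (act a y) = Φ σ a • θ σ y := by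
    intro σ a y
    rw [θ_apply]
    have e1 : ∀ v : Hhat →* ℂˣ, (v σ : ℂ) • ((act a y v) : M)
        = ∑ g : Hhat →* ℂˣ, (v σ : ℂ) • (dcomp Φ g a • ((y (g⁻¹ * v)) : M)) := by
      intro v; rw [act_val, Finset.smul_sum]
    rw [Finset.sum_congr rfl fun v _ => e1 v, Finset.sum_comm]
    have e2 : ∀ g : Hhat →* ℂˣ,
        (∑ v : Hhat →* ℂˣ, (v σ : ℂ) • (dcomp Φ g a • ((y (g⁻¹ * v)) : M)))
        = (g σ : ℂ) • (dcomp Φ g a • θ σ y) := by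
      intro g
      have e3 : ∑ v : Hhat →* ℂˣ, (v σ : ℂ) • (dcomp Φ g a • ((y (g⁻¹ * v)) : M))
          = ∑ w : Hhat →* ℂˣ, ((g * w) σ : ℂ) • (dcomp Φ g a • ((y w) : M)) := by
        refine (Fintype.sum_equiv (Equiv.mulLeft g) _ _ fun w => ?_).symm
        show ((g * w) σ : ℂ) • (dcomp Φ g a • ((y w) : M))
          = ((g * w) σ : ℂ) • (dcomp Φ g a • ((y (g⁻¹ * (g * w))) : M))
        have e : g⁻¹ * (g * w) = w := inv_mul_cancel_left g w
        rw [e]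
      rw [e3]
      have e4 : ∀ w : Hhat →* ℂˣ, ((g * w) σ : ℂ) • (dcomp Φ g a • ((y w) : M))
          = (g σ : ℂ) • (dcomp Φ g a • ((w σ : ℂ) • ((y w) : M))) := by
        intro w
        rw [hsmulcomm ((w σ : ℂ)) (dcomp Φ g a), smul_smul]
        congr 1
      rw [Finset.sum_congr rfl fun w _ => e4 w, ← Finset.smul_sum, ← Finset.smul_sum,
        θ_apply]
    rw [Finset.sum_congr rfl fun g _ => e2 g]
    rw [dcomp_twist Φ 𝒜 h𝒜 σ a, Finset.sum_smul]
    exact Finset.sum_congr rfl fun g _ => (smul_assoc _ _ _).symm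
  -- joint kernel of the twisted evaluations is trivial
  have θ_kernel : ∀ y : (∀ v : Hhat →* ℂˣ, ↥(C' v)), (∀ σ : Hhat, θ σ y = 0) → y = 0 := by
    intro y hy
    funext v₀
    have hsum : ∑ σ : Hhat, ((v₀ σ : ℂ))⁻¹ • θ σ y
        = (Fintype.card Hhat : ℂ) • ((y v₀) : M) := by
      have c1 : ∑ σ : Hhat, ((v₀ σ : ℂ))⁻¹ • θ σ y
          = ∑ σ : Hhat, ∑ v : Hhat →* ℂˣ, (((v * v₀⁻¹) σ : ℂ)) • ((y v) : M) := by
        refine Finset.sum_congr rfl fun σ _ => ?_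
        rw [θ_apply, Finset.smul_sum]
        refine Finset.sum_congr rfl fun v _ => ?_
        rw [smul_smul]
        congr 1
        simp only [MonoidHom.mul_apply, MonoidHom.inv_apply, Units.val_mul,
          Units.val_inv_eq_inv_val]
        ring
      rw [c1, Finset.sum_comm]
      have c2 : ∀ v : Hhat →* ℂˣ, ∑ σ : Hhat, (((v * v₀⁻¹) σ : ℂ)) • ((y v) : M)
          = (∑ σ : Hhat, (((v * v₀⁻¹) σ : ℂ))) • ((y v) : M) := by
        intro v; rw [Finset.sum_smul]
      rw [Finset.sum_congr rfl fun v _ => c2 v]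
      rw [Finset.sum_eq_single v₀]
      · congr 1
        have : v₀ * v₀⁻¹ = 1 := mul_inv_cancel v₀
        rw [this]
        simp [Finset.card_univ]
      · intro v _ hv
        have hne : v * v₀⁻¹ ≠ 1 := by
          intro hcon; exact hv (mul_inv_eq_one.mp hcon)
        rw [sum_char_eq_zero hne, zero_smul]
      · intro hk; exact absurd (Finset.mem_univ v₀) hk
    have hz : (Fintype.card Hhat : ℂ) • ((y v₀) : M) = 0 := by
      rw [← hsum]
      refine Finset.sum_eq_zero fun σ _ => ?_
      rw [hy σ, smul_zero]
    have hcard : (Fintype.card Hhat : ℂ) ≠ 0 := by exact_mod_cast Fintype.card_ne_zero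
    have hv : ((y v₀) : M) = 0 := by
      rcases smul_eq_zero.mp hz with h | h
      · exact absurd h hcard
      · exact h
    exact Subtype.ext hv
  -- a nonzero component of C'
  have hCv : ∃ v₀ : Hhat →* ℂˣ, C' v₀ ≠ ⊥ := by
    by_contra hcon
    push_neg at hcon
    have hbot : (⨆ v, C' v) = (⊥ : Submodule ℂ M) := by
      simp [hcon]
    rw [hC'.1.1] at hbot
    obtain ⟨m, hm⟩ := exists_ne (0 : M)
    exact hm ((Submodule.mem_bot ℂ).mp (hbot ▸ Submodule.mem_top))
  obtain ⟨v₀, hv₀⟩ := hCv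
  obtain ⟨x₀, hx₀mem, hx₀⟩ := (Submodule.ne_bot_iff _).mp hv₀
  have hy₀ : (Pi.single v₀ ⟨x₀, hx₀mem⟩ : ∀ v : Hhat →* ℂˣ, ↥(C' v)) ≠ 0 := by
    intro hcon
    have h1 := congrFun hcon v₀
    rw [Pi.single_eq_same] at h1
    exact hx₀ (congrArg Subtype.val h1)
  haveI : Nontrivial (∀ v : Hhat →* ℂˣ, ↥(C' v)) := ⟨_, _, hy₀⟩
  -- a minimal nonzero act-stable submodule S₀
  have hS : ∃ S : Submodule ℂ (∀ v : Hhat →* ℂˣ, ↥(C' v)),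
      (S ≠ ⊥ ∧ ∀ (a : A) (y : ∀ v : Hhat →* ℂˣ, ↥(C' v)), y ∈ S → act a y ∈ S) ∧
      ∀ S' : Submodule ℂ (∀ v : Hhat →* ℂˣ, ↥(C' v)),
        (S' ≠ ⊥ ∧ ∀ (a : A) (y : ∀ v : Hhat →* ℂˣ, ↥(C' v)), y ∈ S' → act a y ∈ S') →
        S' ≤ S → S' = S := by
    have hne : {r : ℕ | ∃ S : Submodule ℂ (∀ v : Hhat →* ℂˣ, ↥(C' v)),
        (S ≠ ⊥ ∧ ∀ (a : A) (y : ∀ v : Hhat →* ℂˣ, ↥(C' v)), y ∈ S → act a y ∈ S) ∧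
        Module.finrank ℂ S = r}.Nonempty := by
      refine ⟨Module.finrank ℂ (⊤ : Submodule ℂ (∀ v : Hhat →* ℂˣ, ↥(C' v))),
        ⟨⊤, ⟨⟨?_, fun a y _ => Submodule.mem_top⟩, rfl⟩⟩⟩
      exact top_ne_bot
    obtain ⟨S, hSprop, hSrank⟩ := Nat.sInf_mem hne
    refine ⟨S, hSprop, fun S' hS' hle => ?_⟩
    have h1 : Module.finrank ℂ S ≤ Module.finrank ℂ S' := by
      rw [hSrank]
      exact Nat.sInf_le ⟨S', hS', rfl⟩
    exact Submodule.eq_of_le_of_finrank_le hle h1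
  obtain ⟨S₀, ⟨hS₀ne, hS₀stab⟩, hS₀min⟩ := hS
  obtain ⟨y₁, hy₁mem, hy₁ne⟩ := (Submodule.ne_bot_iff S₀).mp hS₀ne
  obtain ⟨σ₀, hσ₀⟩ : ∃ σ : Hhat, θ σ y₁ ≠ 0 := by
    by_contra hcon
    push_neg at hcon
    exact hy₁ne (θ_kernel y₁ hcon)
  obtain ⟨T, hT⟩ := htwist σ₀
  -- the untwisted evaluation map
  set ξ : (∀ v : Hhat →* ℂˣ, ↥(C' v)) →ₗ[ℂ] M := T.symm.toLinearMap ∘ₗ θ σ₀ with hξdef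
  have ξ_twist : ∀ (a : A) (y : ∀ v : Hhat →* ℂˣ, ↥(C' v)), ξ (act a y) = a • ξ y := by
    intro a y
    simp only [hξdef, LinearMap.comp_apply, LinearEquiv.coe_coe]
    rw [θ_twist]
    apply T.injective
    rw [hT, T.apply_symm_apply, T.apply_symm_apply]
  have hξy₁ : ξ y₁ ≠ 0 := by
    intro hcon
    apply hσ₀
    have h1 : T.symm (θ σ₀ y₁) = 0 := hcon
    have h2 := congrArg T h1
    rw [T.apply_symm_apply, map_zero] at h2
    exact h2
  -- S₀ ∩ ker ξ = ⊥
  have hker : S₀ ⊓ LinearMap.ker ξ = ⊥ := by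
    by_contra hcon
    have hstab : ∀ (a : A) (y : ∀ v : Hhat →* ℂˣ, ↥(C' v)),
        y ∈ S₀ ⊓ LinearMap.ker ξ → act a y ∈ S₀ ⊓ LinearMap.ker ξ := by
      intro a y hy
      rw [Submodule.mem_inf] at hy ⊢
      refine ⟨hS₀stab a y hy.1, ?_⟩
      have h0 : ξ y = 0 := LinearMap.mem_ker.mp hy.2
      rw [LinearMap.mem_ker, ξ_twist, h0, smul_zero]
    have heq := hS₀min _ ⟨hcon, hstab⟩ inf_le_left
    apply hξy₁
    have hy₁' : y₁ ∈ S₀ ⊓ LinearMap.ker ξ := by rw [heq]; exact hy₁mem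
    rw [Submodule.mem_inf] at hy₁'
    exact LinearMap.mem_ker.mp hy₁'.2
  -- ξ maps S₀ onto M
  have hsurj : ∀ m : M, ∃ y, y ∈ S₀ ∧ ξ y = m := by
    have hImA : ∀ m : M, m ∈ Submodule.map ξ S₀ := by
      let ImA : Submodule A M :=
        { carrier := Submodule.map ξ S₀
          add_mem' := fun hx hy => (Submodule.map ξ S₀).add_mem hx hy
          zero_mem' := (Submodule.map ξ S₀).zero_mem
          smul_mem' := by
            rintro a x ⟨y, hy, rfl⟩
            exact ⟨act a y, hS₀stab a y hy, ξ_twist a y⟩ }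
      have hbt : ImA = ⊥ ∨ ImA = ⊤ := eq_bot_or_eq_top ImA
      rcases hbt with hbot | htop
      · exfalso
        apply hξy₁
        have h1 : ξ y₁ ∈ ImA := ⟨y₁, hy₁mem, rfl⟩
        rw [hbot] at h1
        simpa using h1
      · intro m
        have h1 : m ∈ ImA := by rw [htop]; trivial
        exact h1
    intro m
    obtain ⟨y, hy, hξy⟩ := hImA m
    exact ⟨y, hy, hξy⟩
  -- the inverse q of ξ|S₀
  have hq₀bij : Function.Bijective (ξ ∘ₗ S₀.subtype) := by
    constructor
    · intro y y' hyy'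
      have h1 : ((y : ∀ v : Hhat →* ℂˣ, ↥(C' v)) - (y' : ∀ v : Hhat →* ℂˣ, ↥(C' v))) ∈
          S₀ ⊓ LinearMap.ker ξ := by
        rw [Submodule.mem_inf]
        refine ⟨sub_mem y.2 y'.2, ?_⟩
        rw [LinearMap.mem_ker, map_sub]
        have : ξ (y : ∀ v : Hhat →* ℂˣ, ↥(C' v)) = ξ (y' : ∀ v : Hhat →* ℂˣ, ↥(C' v)) := hyy'
        rw [this, sub_self]
      rw [hker] at h1
      have h2 : (y : ∀ v : Hhat →* ℂˣ, ↥(C' v)) = (y' : ∀ v : Hhat →* ℂˣ, ↥(C' v)) := by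
        have := (Submodule.mem_bot ℂ).mp h1
        exact sub_eq_zero.mp this
      exact Subtype.ext h2
    · intro m
      obtain ⟨y, hy, hξy⟩ := hsurj m
      exact ⟨⟨y, hy⟩, hξy⟩
  set Q := LinearEquiv.ofBijective (ξ ∘ₗ S₀.subtype) hq₀bij with hQdef
  set q : M →ₗ[ℂ] (∀ v : Hhat →* ℂˣ, ↥(C' v)) := S₀.subtype ∘ₗ Q.symm.toLinearMap with hqdef
  have hqm_mem : ∀ m : M, q m ∈ S₀ := fun m => (Q.symm m).2
  have hξq : ∀ m : M, ξ (q m) = m := by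
    intro m
    have h1 := Q.apply_symm_apply m
    have h2 : Q (Q.symm m) = ξ ((Q.symm m : ↥S₀) : ∀ v : Hhat →* ℂˣ, ↥(C' v)) := rfl
    rw [h2] at h1
    exact h1
  have hq_equiv : ∀ (a : A) (m : M), q (a • m) = act a (q m) := by
    intro a m
    have h1 : act a (q m) ∈ S₀ := hS₀stab a (q m) (hqm_mem m)
    have h2 : Q ⟨act a (q m), h1⟩ = a • m := by
      have h3 : Q ⟨act a (q m), h1⟩ = ξ (act a (q m)) := rfl
      rw [h3, ξ_twist, hξq]
    have h4 : Q.symm (a • m) = ⟨act a (q m), h1⟩ := by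
      apply Q.injective
      rw [Q.apply_symm_apply, h2]
    show S₀.subtype (Q.symm (a • m)) = act a (q m)
    rw [h4]
    rfl
  -- components of q
  set qc : (Hhat →* ℂˣ) → (M →ₗ[ℂ] M) :=
    fun v => (C' v).subtype ∘ₗ (LinearMap.proj v) ∘ₗ q with hqcdef
  have qc_val : ∀ (v : Hhat →* ℂˣ) (m : M), qc v m = ((q m v) : M) := fun v m => rfl
  have qc_mem : ∀ (v : Hhat →* ℂˣ) (m : M), qc v m ∈ C' v := fun v m => (q m v).2
  have qc_step : ∀ (k : Hhat →* ℂˣ) (a : A), a ∈ 𝒜 k → ∀ (m : M) (v : Hhat →* ℂˣ),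
      qc v (a • m) = a • qc (k⁻¹ * v) m := by
    intro k a ha m v
    rw [qc_val, qc_val, hq_equiv, act_pure k a ha]
  -- q does not vanish on all components of C
  have hnv : ∃ (h₀ v₁ : Hhat →* ℂˣ) (x : M), x ∈ C h₀ ∧ qc v₁ x ≠ 0 := by
    by_contra hcon
    push_neg at hcon
    have hall : ∀ m : M, ∀ v : Hhat →* ℂˣ, qc v m = 0 := by
      intro m
      have hm : m ∈ (⨆ h, C h) := by rw [hC.1.1]; trivial
      refine Submodule.iSup_induction (motive := fun m : M => ∀ v : Hhat →* ℂˣ, qc v m = 0)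
        _ hm ?_ ?_ ?_
      · intro h x hx
        show ∀ v : Hhat →* ℂˣ, qc v x = 0
        intro v
        exact hcon h v x hx
      · show ∀ v : Hhat →* ℂˣ, qc v (0 : M) = 0
        intro v; rw [map_zero]
      · intro x y hx hy
        show ∀ v : Hhat →* ℂˣ, qc v (x + y) = 0
        intro v
        rw [map_add, hx v, hy v, add_zero]
    apply hy₁ne
    have hqval : q (ξ y₁) = y₁ := by
      have h1 : Q ⟨y₁, hy₁mem⟩ = ξ y₁ := rfl
      have h2 := Q.symm_apply_apply ⟨y₁, hy₁mem⟩
      rw [h1] at h2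
      show (S₀.subtype (Q.symm (ξ y₁)) : ∀ v : Hhat →* ℂˣ, ↥(C' v)) = y₁
      rw [h2]
      rfl
    rw [← hqval]
    funext v
    exact Subtype.ext (hall (ξ y₁) v)
  obtain ⟨h₀, v₁, x, hxC, hqcne⟩ := hnv
  set g0 : Hhat →* ℂˣ := h₀⁻¹ * v₁ with hg0def
  have e4 : h₀ * g0 = v₁ := by rw [hg0def]; exact mul_inv_cancel_left h₀ v₁
  have e5 : v₁ * g0⁻¹ = h₀ := by rw [← e4]; exact mul_inv_cancel_right h₀ g0
  -- the kernels are trivial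
  have Kstep : ∀ (k h : Hhat →* ℂˣ) (a : A), a ∈ 𝒜 k →
      ∀ x' ∈ C h ⊓ LinearMap.ker (qc (h * g0)),
      a • x' ∈ C (k * h) ⊓ LinearMap.ker (qc ((k * h) * g0)) := by
    intro k h a ha x' hx'
    rw [Submodule.mem_inf] at hx' ⊢
    refine ⟨hC.1.2 k h a ha x' hx'.1, ?_⟩
    rw [LinearMap.mem_ker]
    have e1 : qc ((k * h) * g0) (a • x') = a • qc (k⁻¹ * ((k * h) * g0)) x' :=
      qc_step k a ha x' _
    have t1 : (k * h) * g0 = k * (h * g0) := mul_assoc k h g0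
    have e2 : k⁻¹ * ((k * h) * g0) = h * g0 := by
      rw [t1]; exact inv_mul_cancel_left k (h * g0)
    rw [e1, e2, LinearMap.mem_ker.mp hx'.2, smul_zero]
  have hKbot : ∀ h : Hhat →* ℂˣ, C h ⊓ LinearMap.ker (qc (h * g0)) = ⊥ := by
    by_contra hcon
    push_neg at hcon
    obtain ⟨h₁, hh₁⟩ := hcon
    have hWtop : (⨆ h, C h ⊓ LinearMap.ker (qc (h * g0))) = (⊤ : Submodule ℂ M) := by
      let WA : Submodule A M :=
        { carrier := (⨆ h, C h ⊓ LinearMap.ker (qc (h * g0)) : Submodule ℂ M)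
          add_mem' := fun hx hy => add_mem hx hy
          zero_mem' := zero_mem _
          smul_mem' := by
            intro a x' hx'
            show a • x' ∈ (⨆ h, C h ⊓ LinearMap.ker (qc (h * g0)) : Submodule ℂ M)
            refine Submodule.iSup_induction
              (motive := fun x' : M =>
                a • x' ∈ (⨆ h, C h ⊓ LinearMap.ker (qc (h * g0)) : Submodule ℂ M))
              _ hx' ?_ ?_ ?_
            · intro h z hz
              show a • z ∈ (⨆ h, C h ⊓ LinearMap.ker (qc (h * g0)) : Submodule ℂ M)
              have hdecomp : a • z = ∑ g' : Hhat →* ℂˣ, dcomp Φ g' a • z := by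
                conv_lhs => rw [← dcomp_sum Φ 𝒜 h𝒜 a]
                rw [Finset.sum_smul]
              rw [hdecomp]
              refine Submodule.sum_mem _ fun g' _ => ?_
              exact Submodule.mem_iSup_of_mem (g' * h)
                (Kstep g' h _ (dcomp_mem Φ 𝒜 h𝒜 g' a) z hz)
            · show a • (0 : M) ∈ (⨆ h, C h ⊓ LinearMap.ker (qc (h * g0)) : Submodule ℂ M)
              rw [smul_zero]; exact zero_mem _
            · intro z w hz hw
              show a • (z + w) ∈ (⨆ h, C h ⊓ LinearMap.ker (qc (h * g0)) : Submodule ℂ M)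
              have hz' : a • z ∈ (⨆ h, C h ⊓ LinearMap.ker (qc (h * g0)) : Submodule ℂ M) := hz
              have hw' : a • w ∈ (⨆ h, C h ⊓ LinearMap.ker (qc (h * g0)) : Submodule ℂ M) := hw
              rw [smul_add]; exact add_mem hz' hw' }
      have hbt : WA = ⊥ ∨ WA = ⊤ := eq_bot_or_eq_top WA
      rcases hbt with hbot | htop
      · exfalso
        obtain ⟨z, hzK, hzne⟩ := (Submodule.ne_bot_iff _).mp hh₁
        have hzW : z ∈ WA := Submodule.mem_iSup_of_mem h₁ hzK
        rw [hbot] at hzW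
        exact hzne ((Submodule.mem_bot A).mp hzW)
      · ext x'
        simp only [Submodule.mem_top, iff_true]
        have hx'W : x' ∈ WA := by rw [htop]; trivial
        exact hx'W
    have hKcov : IsCoveringMul 𝒜 (fun h => C h ⊓ LinearMap.ker (qc (h * g0))) :=
      ⟨hWtop, fun k h a ha m hm => Kstep k h a ha m hm⟩
    have hKle : CoveringLEMul (fun h => C h ⊓ LinearMap.ker (qc (h * g0))) C :=
      ⟨1, fun h => le_trans inf_le_left (le_of_eq (congrArg C (mul_one h)))⟩
    obtain ⟨k₁, hk₁⟩ := hC.2 _ hKcov hKle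
    have heqC : ∀ h, C (h * k₁) = C h :=
      covering_shift_eq C k₁ (fun h => le_trans (hk₁ h) inf_le_left)
    have hKeq : C h₀ ⊓ LinearMap.ker (qc (h₀ * g0)) = C h₀ :=
      le_antisymm inf_le_left (by
        have h1 := hk₁ h₀
        rw [heqC h₀] at h1
        exact h1)
    apply hqcne
    have hx' : x ∈ C h₀ ⊓ LinearMap.ker (qc (h₀ * g0)) := by rw [hKeq]; exact hxC
    rw [Submodule.mem_inf] at hx'
    have h00 := LinearMap.mem_ker.mp hx'.2
    rwa [e4] at h00
  -- the images are everything
  have J_le : ∀ v : Hhat →* ℂˣ, Submodule.map (qc v) (C (v * g0⁻¹)) ≤ C' v := by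
    rintro v y ⟨x', hx', rfl⟩
    exact qc_mem v x'
  have Jstep : ∀ (k v : Hhat →* ℂˣ) (a : A), a ∈ 𝒜 k →
      ∀ y ∈ Submodule.map (qc v) (C (v * g0⁻¹)),
        a • y ∈ Submodule.map (qc (k * v)) (C ((k * v) * g0⁻¹)) := by
    rintro k v a ha y ⟨x', hx', rfl⟩
    refine ⟨a • x', ?_, ?_⟩
    · have h1 := hC.1.2 k (v * g0⁻¹) a ha x' hx'
      have e1 : k * (v * g0⁻¹) = (k * v) * g0⁻¹ := (mul_assoc k v g0⁻¹).symm
      rwa [e1] at h1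
    · have e2 : qc (k * v) (a • x') = a • qc (k⁻¹ * (k * v)) x' := qc_step k a ha x' _
      have e3 : k⁻¹ * (k * v) = v := inv_mul_cancel_left k v
      rw [e2, e3]
  have hJtop : (⨆ v, Submodule.map (qc v) (C (v * g0⁻¹))) = (⊤ : Submodule ℂ M) := by
    let WA : Submodule A M :=
      { carrier := (⨆ v, Submodule.map (qc v) (C (v * g0⁻¹)) : Submodule ℂ M)
        add_mem' := fun hx hy => add_mem hx hy
        zero_mem' := zero_mem _
        smul_mem' := by
          intro a y hy
          show a • y ∈ (⨆ v, Submodule.map (qc v) (C (v * g0⁻¹)) : Submodule ℂ M)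
          refine Submodule.iSup_induction
            (motive := fun y : M =>
              a • y ∈ (⨆ v, Submodule.map (qc v) (C (v * g0⁻¹)) : Submodule ℂ M))
            _ hy ?_ ?_ ?_
          · intro v z hz
            show a • z ∈ (⨆ v, Submodule.map (qc v) (C (v * g0⁻¹)) : Submodule ℂ M)
            have hdecomp : a • z = ∑ g' : Hhat →* ℂˣ, dcomp Φ g' a • z := by
              conv_lhs => rw [← dcomp_sum Φ 𝒜 h𝒜 a]
              rw [Finset.sum_smul]
            rw [hdecomp]
            refine Submodule.sum_mem _ fun g' _ => ?_
            exact Submodule.mem_iSup_of_mem (g' * v)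
              (Jstep g' v _ (dcomp_mem Φ 𝒜 h𝒜 g' a) z hz)
          · show a • (0 : M) ∈ (⨆ v, Submodule.map (qc v) (C (v * g0⁻¹)) : Submodule ℂ M)
            rw [smul_zero]; exact zero_mem _
          · intro z w hz hw
            show a • (z + w) ∈ (⨆ v, Submodule.map (qc v) (C (v * g0⁻¹)) : Submodule ℂ M)
            have hz' : a • z ∈ (⨆ v, Submodule.map (qc v) (C (v * g0⁻¹)) : Submodule ℂ M) := hz
            have hw' : a • w ∈ (⨆ v, Submodule.map (qc v) (C (v * g0⁻¹)) : Submodule ℂ M) := hw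
            rw [smul_add]; exact add_mem hz' hw' }
    have hbt : WA = ⊥ ∨ WA = ⊤ := eq_bot_or_eq_top WA
    rcases hbt with hbot | htop
    · exfalso
      apply hqcne
      have hzW : qc v₁ x ∈ WA := by
        refine Submodule.mem_iSup_of_mem v₁ ?_
        exact ⟨x, by rw [e5]; exact hxC, rfl⟩
      rw [hbot] at hzW
      exact (Submodule.mem_bot A).mp hzW
    · ext y
      simp only [Submodule.mem_top, iff_true]
      have hyW : y ∈ WA := by rw [htop]; trivial
      exact hyW
  have hJcov : IsCoveringMul 𝒜 (fun v => Submodule.map (qc v) (C (v * g0⁻¹))) :=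
    ⟨hJtop, fun k v a ha m hm => Jstep k v a ha m hm⟩
  have hJle : CoveringLEMul (fun v => Submodule.map (qc v) (C (v * g0⁻¹))) C' :=
    ⟨1, fun v => le_trans (J_le (v * 1)) (le_of_eq (congrArg C' (mul_one v)))⟩
  obtain ⟨k₂, hk₂⟩ := hC'.2 _ hJcov hJle
  have heqC' : ∀ v, C' (v * k₂) = C' v :=
    covering_shift_eq C' k₂ (fun v => le_trans (hk₂ v) (J_le v))
  have hJeq : ∀ v : Hhat →* ℂˣ, Submodule.map (qc v) (C (v * g0⁻¹)) = C' v := fun v =>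
    le_antisymm (J_le v) (by
      have h1 := hk₂ v
      rw [heqC' v] at h1
      exact h1)
  -- assembly
  have hrange : ∀ (h : Hhat →* ℂˣ), ∀ x' ∈ C h, qc (h * g0) x' ∈ C' (h * g0) :=
    fun h x' _ => qc_mem _ x'
  have hbij : ∀ h : Hhat →* ℂˣ, Function.Bijective
      ((qc (h * g0)).restrict (p := C h) (q := C' (h * g0)) (hrange h)) := by
    intro h
    constructor
    · intro z z' hzz'
      have h1 : qc (h * g0) (z : M) = qc (h * g0) (z' : M) := by
        have h2 := congrArg Subtype.val hzz'
        simpa [LinearMap.restrict_apply] using h2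
      have h3 : ((z : M) - (z' : M)) ∈ C h ⊓ LinearMap.ker (qc (h * g0)) := by
        rw [Submodule.mem_inf]
        exact ⟨sub_mem z.2 z'.2, by rw [LinearMap.mem_ker, map_sub, h1, sub_self]⟩
      rw [hKbot h] at h3
      exact Subtype.ext (sub_eq_zero.mp ((Submodule.mem_bot ℂ).mp h3))
    · rintro ⟨y, hy⟩
      have hy' : y ∈ Submodule.map (qc (h * g0)) (C ((h * g0) * g0⁻¹)) := by
        rw [hJeq (h * g0)]; exact hy
      obtain ⟨x', hx', hqx⟩ := hy'
      have e6 : (h * g0) * g0⁻¹ = h := mul_inv_cancel_right h g0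
      rw [e6] at hx'
      exact ⟨⟨x', hx'⟩, Subtype.ext (by simpa [LinearMap.restrict_apply] using hqx)⟩
  refine ⟨g0, fun h => LinearEquiv.ofBijective _ (hbij h), ?_⟩
  intro k h a ha m hm
  show ((qc ((k * h) * g0)).restrict (hrange (k * h)) ⟨a • m, hC.1.2 k h a ha m hm⟩ : M)
      = a • ((qc (h * g0)).restrict (hrange h) ⟨m, hm⟩ : M)
  have e7 := qc_step k a ha m ((k * h) * g0)
  have t8 : (k * h) * g0 = k * (h * g0) := mul_assoc k h g0
  have e8 : k⁻¹ * ((k * h) * g0) = h * g0 := by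
    rw [t8]; exact inv_mul_cancel_left k (h * g0)
  simp only [LinearMap.restrict_apply]
  rw [e7, e8]
end

section
/- Let A be a semisimple associative ℂ-algebra graded by an abelian group G such that 1 ∈ A_g A_{-g} for all g ∈ G and each A_g is an irreducible left A_0-module. If {M_g} and {N_g} are two thin coverings of a simple A-module M, then there exists h ∈ G with ⊕_{g∈G} M_g ≅ ⊕_{g∈G} N_{g-h} as graded A-modules; moreover each such graded module is isomorphic to the induced module A ⊗_{A_0} M_{h'} for any nonzero component M_{h'}. -/
section Aux

variable {G A M : Type*} [AddCommGroup G] [Ring A] [Algebra ℂ A]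
    [AddCommGroup M] [Module ℂ M] [Module A M] [IsScalarTower ℂ A M]

/-- The ℂ-linear map `a ↦ a • u`. -/
def mulAct (u : M) : A →ₗ[ℂ] M where
  toFun a := a • u
  map_add' a b := add_smul a b u
  map_smul' c a := smul_assoc c a u

@[simp] lemma mulAct_apply (u : M) (a : A) : mulAct u a = a • u := rfl

variable (𝒜 : G → Submodule ℂ A)

/-- The restriction of `mulAct u` to the homogeneous component `𝒜 d`. -/
def actF (d : G) (u : M) : ↥(𝒜 d) →ₗ[ℂ] M := (mulAct u).comp (𝒜 d).subtype

@[simp] lemma actF_apply (d : G) (u : M) (a : ↥(𝒜 d)) : actF 𝒜 d u a = (a : A) • u := rfl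

lemma range_actF (d : G) (u : M) :
    LinearMap.range (actF 𝒜 d u) = (𝒜 d).map (mulAct u) := by
  rw [actF, LinearMap.range_comp, Submodule.range_subtype]

/-- "Strong fact": every component of a covering is recovered from any other
component, thanks to `1 ∈ 𝒜 d * 𝒜 (-d)`. -/
lemma covering_le_span (hunit : ∀ g : G, (1 : A) ∈ 𝒜 g * 𝒜 (-g))
    {C : G → Submodule ℂ M} (hcov : IsCovering 𝒜 C) (g d : G) :
    C g ≤ Submodule.span ℂ {x : M | ∃ a ∈ 𝒜 d, ∃ m ∈ C (g - d), x = a • m} := by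
  intro x hx
  have key : ∀ z ∈ 𝒜 d * 𝒜 (-d),
      z • x ∈ Submodule.span ℂ {x : M | ∃ a ∈ 𝒜 d, ∃ m ∈ C (g - d), x = a • m} := by
    intro z hz
    refine Submodule.mul_induction_on hz (fun a ha b hb => ?_) (fun y z hy hz => ?_)
    · rw [mul_smul]
      refine Submodule.subset_span ⟨a, ha, b • x, ?_, rfl⟩
      have := hcov.2 (-d) g b hb x hx
      rwa [neg_add_eq_sub] at this
    · rw [add_smul]; exact Submodule.add_mem _ hy hz
  have := key 1 (hunit d)
  rwa [one_smul] at this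

/-- Every component of a covering of a simple module is nonzero. -/
lemma comp_ne_bot (hunit : ∀ g : G, (1 : A) ∈ 𝒜 g * 𝒜 (-g))
    (hM : IsSimpleModule A M)
    {C : G → Submodule ℂ M} (hcov : IsCovering 𝒜 C) (g : G) : C g ≠ ⊥ := by
  intro hbot
  have hall : ∀ g', C g' = ⊥ := by
    intro g'
    have h1 := covering_le_span 𝒜 hunit hcov g' (g' - g)
    rw [sub_sub_cancel, hbot] at h1
    refine le_bot_iff.mp (h1.trans ?_)
    rw [Submodule.span_le]
    rintro x ⟨a, _, m, hm, rfl⟩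
    rw [Submodule.mem_bot] at hm
    simp [hm]
  have htop : (⊤ : Submodule ℂ M) = ⊥ := by
    rw [← hcov.1]; simp [hall]
  have hzero : ∀ m : M, m = 0 := by
    intro m
    have : m ∈ (⊤ : Submodule ℂ M) := Submodule.mem_top
    rw [htop, Submodule.mem_bot] at this
    exact this
  have : Nontrivial M := IsSimpleModule.nontrivial A M
  obtain ⟨x, y, hxy⟩ := this
  exact hxy ((hzero x).trans (hzero y).symm)

/-- The family `g ↦ 𝒜 (g - g₀) • u` is a covering, for any `u ≠ 0`. -/
lemma orbit_covering (hmul : ∀ g h : G, ∀ a ∈ 𝒜 g, ∀ b ∈ 𝒜 h, a * b ∈ 𝒜 (g + h))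
    (hsup : (⨆ g, 𝒜 g) = ⊤) (hM : IsSimpleModule A M)
    {u : M} (hu : u ≠ 0) (g₀ : G) :
    IsCovering 𝒜 (fun g => (𝒜 (g - g₀)).map (mulAct u)) := by
  constructor
  · rw [eq_top_iff]
    intro x _
    have hspan : Submodule.span A {u} = ⊤ := by
      rcases eq_bot_or_eq_top (Submodule.span A {u}) with h | h
      · exact absurd (by simpa [h] using Submodule.mem_span_singleton_self (R := A) u) hu
      · exact h
    have hx : x ∈ Submodule.span A {u} := by rw [hspan]; exact Submodule.mem_top
    obtain ⟨a, rfl⟩ := (Submodule.mem_span_singleton (R := A)).mp hx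
    have ha : a ∈ ⨆ g, 𝒜 g := hsup ▸ Submodule.mem_top
    refine Submodule.iSup_induction 𝒜 (motive := fun z : A =>
      z • u ∈ ⨆ g, (𝒜 (g - g₀)).map (mulAct u)) ha (fun d b hb => ?_) ?_ ?_
    · show b • u ∈ ⨆ g, (𝒜 (g - g₀)).map (mulAct u)
      refine Submodule.mem_iSup_of_mem (d + g₀) ?_
      refine Submodule.mem_map.mpr ⟨b, ?_, rfl⟩
      rwa [add_sub_cancel_right]
    · show (0 : A) • u ∈ ⨆ g, (𝒜 (g - g₀)).map (mulAct u)
      rw [zero_smul]; exact Submodule.zero_mem _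
    · intro x y hx hy
      show (x + y) • u ∈ ⨆ g, (𝒜 (g - g₀)).map (mulAct u)
      rw [add_smul]
      exact Submodule.add_mem _ hx hy
  · intro k g a ha m hm
    obtain ⟨b, hb, rfl⟩ := Submodule.mem_map.mp hm
    refine Submodule.mem_map.mpr ⟨a * b, ?_, ?_⟩
    · have := hmul k (g - g₀) a ha b hb
      rwa [← add_sub_assoc] at this
    · simp [mul_smul]

/-- `a ↦ a • u` is injective on each homogeneous component, for `u ≠ 0`. -/
lemma actF_injective (hmul : ∀ g h : G, ∀ a ∈ 𝒜 g, ∀ b ∈ 𝒜 h, a * b ∈ 𝒜 (g + h))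
    (hsup : (⨆ g, 𝒜 g) = ⊤)
    (hunit : ∀ g : G, (1 : A) ∈ 𝒜 g * 𝒜 (-g))
    (hirr : ∀ g : G, 𝒜 g ≠ ⊥ ∧ ∀ W : Submodule ℂ A, W ≤ 𝒜 g →
      (∀ a ∈ 𝒜 (0 : G), ∀ b ∈ W, a * b ∈ W) → W = ⊥ ∨ W = 𝒜 g)
    (hM : IsSimpleModule A M) {u : M} (hu : u ≠ 0) (d : G) :
    Function.Injective (actF 𝒜 d u) := by
  rw [← LinearMap.ker_eq_bot]
  rw [eq_bot_iff]
  intro a ha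
  rw [LinearMap.mem_ker] at ha
  have hWstab : ∀ x ∈ 𝒜 (0 : G), ∀ b ∈ 𝒜 d ⊓ LinearMap.ker (mulAct u),
      x * b ∈ 𝒜 d ⊓ LinearMap.ker (mulAct u) := by
    intro x hx b hb
    rw [Submodule.mem_inf] at hb ⊢
    obtain ⟨hb1, hb2⟩ := hb
    refine ⟨?_, ?_⟩
    · have := hmul 0 d x hx b hb1
      rwa [zero_add] at this
    · rw [LinearMap.mem_ker] at hb2 ⊢
      rw [mulAct_apply] at hb2
      rw [mulAct_apply, mul_smul, hb2, smul_zero]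
  rcases (hirr d).2 (𝒜 d ⊓ LinearMap.ker (mulAct u)) inf_le_left hWstab with hbot | htop
  · have : (a : A) ∈ 𝒜 d ⊓ LinearMap.ker (mulAct u) :=
      Submodule.mem_inf.mpr ⟨a.2, by rw [LinearMap.mem_ker]; exact ha⟩
    rw [hbot, Submodule.mem_bot] at this
    exact Submodule.mem_bot ℂ |>.mpr (Subtype.ext this)
  · -- then the whole component acts as zero, contradicting nonzero components
    exfalso
    have hcov := orbit_covering 𝒜 hmul hsup hM hu (0 : G)
    have hne := comp_ne_bot 𝒜 hunit hM hcov d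
    apply hne
    rw [eq_bot_iff]
    rintro x hx
    obtain ⟨b, hb, rfl⟩ := Submodule.mem_map.mp hx
    have hbW : b ∈ 𝒜 d ⊓ LinearMap.ker (mulAct u) := by
      rw [htop]; rwa [sub_zero] at hb
    have := (Submodule.mem_inf.mp hbW).2
    rw [LinearMap.mem_ker] at this
    simp only [mulAct_apply] at this ⊢
    simp [this]

/-- Structure of thin coverings of a simple module: each is given by the orbit
of a single nonzero vector. -/
lemma thin_struct (hmul : ∀ g h : G, ∀ a ∈ 𝒜 g, ∀ b ∈ 𝒜 h, a * b ∈ 𝒜 (g + h))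
    (hsup : (⨆ g, 𝒜 g) = ⊤)
    (hunit : ∀ g : G, (1 : A) ∈ 𝒜 g * 𝒜 (-g))
    (hirr : ∀ g : G, 𝒜 g ≠ ⊥ ∧ ∀ W : Submodule ℂ A, W ≤ 𝒜 g →
      (∀ a ∈ 𝒜 (0 : G), ∀ b ∈ W, a * b ∈ W) → W = ⊥ ∨ W = 𝒜 g)
    (hM : IsSimpleModule A M) {C : G → Submodule ℂ M}
    (hC : IsThinCovering 𝒜 C) :
    ∃ (h₁ : G) (u : M), u ≠ 0 ∧ ∀ g, C g = (𝒜 (g - h₁)).map (mulAct u) := by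
  -- pick a nonzero vector in some component
  obtain ⟨g₀⟩ : Nonempty G := ⟨0⟩
  have hne := comp_ne_bot 𝒜 hunit hM hC.1 g₀
  obtain ⟨u, huC, hu⟩ := Submodule.exists_mem_ne_zero_of_ne_bot hne
  set N : G → Submodule ℂ M := fun g => (𝒜 (g - g₀)).map (mulAct u) with hN
  have hNcov : IsCovering 𝒜 N := orbit_covering 𝒜 hmul hsup hM hu g₀
  have hNle : ∀ g, N g ≤ C g := by
    intro g x hx
    obtain ⟨b, hb, rfl⟩ := Submodule.mem_map.mp hx
    have := hC.1.2 (g - g₀) g₀ b hb u huC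
    rwa [sub_add_cancel] at this
  have hle : CoveringLE N C := ⟨0, fun g => by rw [add_zero]; exact hNle g⟩
  obtain ⟨k, hk⟩ := hC.2 N hNcov hle
  -- C (g + k) = N g for all g
  have heq : ∀ g, C (g + k) = N g := by
    intro g
    refine le_antisymm (hk g) ?_
    have hWstab : ∀ x ∈ 𝒜 (0 : G), ∀ b ∈ 𝒜 (g - g₀) ⊓ Submodule.comap (mulAct u) (C (g + k)),
        x * b ∈ 𝒜 (g - g₀) ⊓ Submodule.comap (mulAct u) (C (g + k)) := by
      intro x hx b hb
      rw [Submodule.mem_inf] at hb ⊢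
      obtain ⟨hb1, hb2⟩ := hb
      refine ⟨?_, ?_⟩
      · have := hmul 0 (g - g₀) x hx b hb1
        rwa [zero_add] at this
      · rw [Submodule.mem_comap] at hb2 ⊢
        rw [mulAct_apply, mul_smul]
        have := hC.1.2 0 (g + k) x hx _ hb2
        rwa [zero_add] at this
    rcases (hirr (g - g₀)).2 (𝒜 (g - g₀) ⊓ Submodule.comap (mulAct u) (C (g + k)))
      inf_le_left hWstab with hbot | htop
    · exfalso
      have hCne := comp_ne_bot 𝒜 hunit hM hC.1 (g + k)
      obtain ⟨x, hxC, hx⟩ := Submodule.exists_mem_ne_zero_of_ne_bot hCne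
      have hxN : x ∈ N g := hk g hxC
      obtain ⟨b, hb, rfl⟩ := Submodule.mem_map.mp hxN
      have hbW : b ∈ 𝒜 (g - g₀) ⊓ Submodule.comap (mulAct u) (C (g + k)) :=
        Submodule.mem_inf.mpr ⟨hb, by rw [Submodule.mem_comap]; exact hxC⟩
      rw [hbot, Submodule.mem_bot] at hbW
      exact hx (by simp [hbW])
    · intro x hx
      obtain ⟨b, hb, rfl⟩ := Submodule.mem_map.mp hx
      have hbW : b ∈ 𝒜 (g - g₀) ⊓ Submodule.comap (mulAct u) (C (g + k)) := by
        rw [htop]; exact hb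
      exact (Submodule.mem_inf.mp hbW).2
  refine ⟨g₀ + k, u, hu, fun g => ?_⟩
  have := heq (g - k)
  rw [sub_add_cancel] at this
  rw [this, hN]
  congr 1
  abel_nf

variable {𝒜}

/-- The canonical equivalence between the orbits of two nonzero vectors under a
homogeneous component. -/
noncomputable def compEquiv (d : G) (u w : M)
    (hinju : Function.Injective (actF 𝒜 d u))
    (hinjw : Function.Injective (actF 𝒜 d w)) :
    ↥((𝒜 d).map (mulAct u)) ≃ₗ[ℂ] ↥((𝒜 d).map (mulAct w)) :=
  ((LinearEquiv.ofEq _ _ (range_actF 𝒜 d u).symm).trans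
      (LinearEquiv.ofInjective (actF 𝒜 d u) hinju).symm).trans
    ((LinearEquiv.ofInjective (actF 𝒜 d w) hinjw).trans
      (LinearEquiv.ofEq _ _ (range_actF 𝒜 d w)))

lemma compEquiv_spec (d : G) (u w : M)
    (hinju : Function.Injective (actF 𝒜 d u))
    (hinjw : Function.Injective (actF 𝒜 d w))
    (b : A) (hb : b ∈ 𝒜 d) (x : ↥((𝒜 d).map (mulAct u)))
    (hx : (x : M) = b • u) :
    ((compEquiv d u w hinju hinjw x : ↥((𝒜 d).map (mulAct w))) : M) = b • w := by
  have hb' : (LinearEquiv.ofInjective (actF 𝒜 d u) hinju) ⟨b, hb⟩ =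
      (LinearEquiv.ofEq _ _ (range_actF 𝒜 d u).symm) x := by
    apply Subtype.ext
    rw [LinearEquiv.ofInjective_apply]
    simp [hx]
  rw [compEquiv]
  simp only [LinearEquiv.trans_apply]
  rw [← hb', LinearEquiv.symm_apply_apply]
  simp

end Aux

/-- Theorem 2.2 (Billig–Lau): let `A` be a semisimple associative ℂ-algebra
graded by an abelian group `G` with `1 ∈ 𝒜 g * 𝒜 (-g)` for all `g` and each
`𝒜 g` irreducible as a module over the identity component `𝒜 0`.  If `{C g}`
and `{D g}` are two thin coverings of a simple `A`-module `M`, then for some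
`h ∈ G` the associated graded modules satisfy `⊕_g C g ≅ ⊕_g D (g - h)` as
graded `A`-modules (a family of linear bijections intertwining the homogeneous
action); moreover each graded module is the module induced from any nonzero
component: for every `h'` with `C h' ≠ ⊥`, every component satisfies
`C g = 𝒜 (g - h') • C h'`, identifying `⊕_g C g` with `A ⊗_{A₀} C h'`. -/
theorem thin_coverings_unique_graded_module_semisimple
    {G A M : Type*} [AddCommGroup G] [Ring A] [Algebra ℂ A] [IsSemisimpleRing A]
    [AddCommGroup M] [Module ℂ M] [Module A M] [IsScalarTower ℂ A M]
    (𝒜 : G → Submodule ℂ A)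
    (hmul : ∀ g h : G, ∀ a ∈ 𝒜 g, ∀ b ∈ 𝒜 h, a * b ∈ 𝒜 (g + h))
    (hone : (1 : A) ∈ 𝒜 (0 : G)) (hsup : (⨆ g, 𝒜 g) = ⊤)
    (hunit : ∀ g : G, (1 : A) ∈ 𝒜 g * 𝒜 (-g))
    (hirr : ∀ g : G, 𝒜 g ≠ ⊥ ∧ ∀ W : Submodule ℂ A, W ≤ 𝒜 g →
      (∀ a ∈ 𝒜 (0 : G), ∀ b ∈ W, a * b ∈ W) → W = ⊥ ∨ W = 𝒜 g)
    (hM : IsSimpleModule A M)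
    (C D : G → Submodule ℂ M)
    (hC : IsThinCovering 𝒜 C) (hD : IsThinCovering 𝒜 D) :
    (∃ h : G, ∃ e : ∀ g : G, ↥(C g) ≃ₗ[ℂ] ↥(D (g - h)),
      ∀ (k g : G) (a : A) (ha : a ∈ 𝒜 k) (m : M) (hm : m ∈ C g),
        (e (k + g) ⟨a • m, hC.1.2 k g a ha m hm⟩ : M) = a • (e g ⟨m, hm⟩ : M)) ∧
    ∀ h' : G, C h' ≠ ⊥ → ∀ g : G,
      C g = Submodule.span ℂ {x : M | ∃ a ∈ 𝒜 (g - h'), ∃ m ∈ C h', x = a • m} := by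
  constructor
  · obtain ⟨h₁, u, hu, hCu⟩ := thin_struct 𝒜 hmul hsup hunit hirr hM hC
    obtain ⟨h₂, w, hw, hDw⟩ := thin_struct 𝒜 hmul hsup hunit hirr hM hD
    have hinju := fun d => actF_injective 𝒜 hmul hsup hunit hirr hM hu d
    have hinjw := fun d => actF_injective 𝒜 hmul hsup hunit hirr hM hw d
    have hDeq : ∀ g : G, D (g - (h₁ - h₂)) = (𝒜 (g - h₁)).map (mulAct w) := by
      intro g
      rw [hDw]
      congr 1
      abel_nf
    refine ⟨h₁ - h₂, fun g =>
      ((LinearEquiv.ofEq _ _ (hCu g)).trans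
        (compEquiv (g - h₁) u w (hinju _) (hinjw _))).trans
        (LinearEquiv.ofEq _ _ (hDeq g).symm), ?_⟩
    intro k g a ha m hm
    have hm' : m ∈ (𝒜 (g - h₁)).map (mulAct u) := (hCu g) ▸ hm
    obtain ⟨b, hb, hbu⟩ := Submodule.mem_map.mp hm'
    rw [mulAct_apply] at hbu
    have hab : a * b ∈ 𝒜 ((k + g) - h₁) := by
      have := hmul k (g - h₁) a ha b hb
      rwa [← add_sub_assoc] at this
    have lhs : (((((LinearEquiv.ofEq _ _ (hCu (k + g))).trans
        (compEquiv ((k + g) - h₁) u w (hinju _) (hinjw _))).trans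
        (LinearEquiv.ofEq _ _ (hDeq (k + g)).symm))
          ⟨a • m, hC.1.2 k g a ha m hm⟩ : ↥(D (k + g - (h₁ - h₂)))) : M)
        = (a * b) • w := by
      simp only [LinearEquiv.trans_apply]
      rw [LinearEquiv.coe_ofEq_apply]
      rw [compEquiv_spec ((k + g) - h₁) u w (hinju _) (hinjw _) (a * b) hab _ ?_]
      · rw [LinearEquiv.coe_ofEq_apply]
        rw [mul_smul, hbu]
    have rhs : ((((LinearEquiv.ofEq _ _ (hCu g)).trans
        (compEquiv (g - h₁) u w (hinju _) (hinjw _))).trans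
        (LinearEquiv.ofEq _ _ (hDeq g).symm)) ⟨m, hm⟩ : M) = b • w := by
      simp only [LinearEquiv.trans_apply]
      rw [LinearEquiv.coe_ofEq_apply]
      rw [compEquiv_spec (g - h₁) u w (hinju _) (hinjw _) b hb _ ?_]
      · rw [LinearEquiv.coe_ofEq_apply]
        exact hbu.symm
    rw [lhs, rhs, mul_smul]
  · intro h' _ g
    refine le_antisymm ?_ ?_
    · have := covering_le_span 𝒜 hunit hC.1 g (g - h')
      rwa [sub_sub_cancel] at this
    · rw [Submodule.span_le]
      rintro x ⟨a, ha, m, hm, rfl⟩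
      have := hC.1.2 (g - h') h' a ha m hm
      rwa [sub_add_cancel] at this
end

section
/- Let A be a semisimple associative algebra graded by an abelian group G with 1 ∈ A_g A_{-g} for all g and each A_g irreducible as an A_0-module. Then every graded-simple A-module M = ⊕_{g∈G} M_g arises from a thin covering of a simple ungraded A-module: there is a simple A-module N with a thin covering {N_g} such that ⊕_g N_g ≅ ⊕_g M_g as graded A-modules. -/
/-- A `G`-covering of the `A`-submodule `N ⊆ M`: a family of subspaces of `M`
spanning `N` with `𝒜 g • C h ⊆ C (g + h)`. -/
def IsCoveringOf {G A M : Type*} [AddCommGroup G] [Ring A] [Algebra ℂ A]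
    [AddCommGroup M] [Module ℂ M] [Module A M] [IsScalarTower ℂ A M]
    (𝒜 : G → Submodule ℂ A) (N : Submodule A M) (C : G → Submodule ℂ M) : Prop :=
  (⨆ g, C g) = Submodule.restrictScalars ℂ N ∧
    ∀ g h : G, ∀ a ∈ 𝒜 g, ∀ m ∈ C h, a • m ∈ C (g + h)

/-- A thin covering of `N` is a minimal covering of `N`. -/
def IsThinCoveringOf {G A M : Type*} [AddCommGroup G] [Ring A] [Algebra ℂ A]
    [AddCommGroup M] [Module ℂ M] [Module A M] [IsScalarTower ℂ A M]
    (𝒜 : G → Submodule ℂ A) (N : Submodule A M) (C : G → Submodule ℂ M) : Prop :=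
  IsCoveringOf 𝒜 N C ∧
    ∀ D : G → Submodule ℂ M, IsCoveringOf 𝒜 N D → CoveringLE D C → CoveringLE C D

/-- Theorem 2.3 (Billig–Lau): let `A` be a semisimple associative ℂ-algebra
graded by an abelian group `G`, with `1 ∈ 𝒜 g * 𝒜 (-g)` and each `𝒜 g`
irreducible over `𝒜 0`.  Then every graded-simple `A`-module `M = ⊕_g ℳ g`
comes from a thin covering of a simple ungraded `A`-module `N`: there is a
simple submodule `N` of `M` with a thin covering `{C g}` and linear bijections
`C g ≃ ℳ g` intertwining the homogeneous action of `A`, i.e.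
`⊕_g C g ≅ ⊕_g ℳ g` as graded `A`-modules. -/
theorem graded_simple_comes_from_thin_covering
    {G A M : Type*} [AddCommGroup G] [DecidableEq G]
    [Ring A] [Algebra ℂ A] [IsSemisimpleRing A]
    [AddCommGroup M] [Module ℂ M] [Module A M] [IsScalarTower ℂ A M]
    (𝒜 : G → Submodule ℂ A)
    (hmul : ∀ g h : G, ∀ a ∈ 𝒜 g, ∀ b ∈ 𝒜 h, a * b ∈ 𝒜 (g + h))
    (hone : (1 : A) ∈ 𝒜 (0 : G)) (hsup : (⨆ g, 𝒜 g) = ⊤)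
    (hunit : ∀ g : G, (1 : A) ∈ 𝒜 g * 𝒜 (-g))
    (hirr : ∀ g : G, 𝒜 g ≠ ⊥ ∧ ∀ W : Submodule ℂ A, W ≤ 𝒜 g →
      (∀ a ∈ 𝒜 (0 : G), ∀ b ∈ W, a * b ∈ W) → W = ⊥ ∨ W = 𝒜 g)
    (ℳ : G → Submodule ℂ M) (hint : DirectSum.IsInternal ℳ)
    (hact : ∀ g h : G, ∀ a ∈ 𝒜 g, ∀ m ∈ ℳ h, a • m ∈ ℳ (g + h))
    (hnezero : ∃ g, ℳ g ≠ ⊥)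
    (hgrsimple : ∀ P : G → Submodule ℂ M, (∀ g, P g ≤ ℳ g) →
      (∀ g h : G, ∀ a ∈ 𝒜 g, ∀ m ∈ P h, a • m ∈ P (g + h)) →
      (∃ g, P g ≠ ⊥) → ∀ g, P g = ℳ g) :
    ∃ N : Submodule A M, IsSimpleModule A ↥N ∧
      ∃ C : G → Submodule ℂ M, ∃ hthin : IsThinCoveringOf 𝒜 N C,
        ∃ e : ∀ g : G, ↥(C g) ≃ₗ[ℂ] ↥(ℳ g),
          ∀ (k g : G) (a : A) (ha : a ∈ 𝒜 k) (m : M) (hm : m ∈ C g),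
            (e (k + g) ⟨a • m, hthin.1.2 k g a ha m hm⟩ : M) = a • (e g ⟨m, hm⟩ : M) := by
  classical
  have hMsup : (⨆ g, ℳ g) = ⊤ := hint.submodule_iSup_eq_top
  have hMntriv : Nontrivial M := by
    obtain ⟨g₀, hg₀⟩ := hnezero
    obtain ⟨x, hx, hx0⟩ := (Submodule.ne_bot_iff _).mp hg₀
    exact nontrivial_of_ne x 0 hx0
  obtain ⟨N, hN⟩ := IsSemisimpleModule.exists_simple_submodule A M
  have hNbot : N ≠ ⊥ := by
    have := IsSimpleModule.nontrivial A ↥N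
    exact (Submodule.nontrivial_iff_ne_bot).mp this
  obtain ⟨N', hcompl⟩ := exists_isCompl N
  set π : M →ₗ[A] M := N.subtype ∘ₗ N.linearProjOfIsCompl N' hcompl with hπdef
  have hπmem : ∀ x : M, π x ∈ N := fun x => (N.linearProjOfIsCompl N' hcompl x).2
  have hπid : ∀ y ∈ N, π y = y := by
    intro y hy
    have := Submodule.linearProjOfIsCompl_apply_left hcompl ⟨y, hy⟩
    exact congrArg Subtype.val this
  set π' : M →ₗ[ℂ] M := LinearMap.restrictScalars ℂ π with hπ'def
  have hπ'eq : ∀ x : M, π' x = π x := fun _ => rfl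
  have hπ'smul : ∀ (a : A) (x : M), π' (a • x) = a • π' x := fun a x => π.map_smul a x
  -- injectivity of π on each homogeneous component
  have hinj : ∀ g : G, ∀ x ∈ ℳ g, π x = 0 → x = 0 := by
    intro g x hx hπx
    by_contra hx0
    have hP := hgrsimple (fun h => ℳ h ⊓ LinearMap.ker π') (fun h => inf_le_left)
      (by
        intro j h a ha m hm
        refine ⟨hact j h a ha m hm.1, ?_⟩
        have hm2 : π' m = 0 := hm.2
        exact LinearMap.mem_ker.mpr (by rw [hπ'smul, hm2, smul_zero]))
      ⟨g, by
        refine (Submodule.ne_bot_iff _).mpr ⟨x, ⟨hx, ?_⟩, hx0⟩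
        exact LinearMap.mem_ker.mpr (by rw [hπ'eq, hπx])⟩
    have hker : LinearMap.ker π' = ⊤ := by
      rw [eq_top_iff, ← hMsup, iSup_le_iff]
      intro h
      rw [← hP h]
      exact inf_le_right
    obtain ⟨y, hy, hy0⟩ := (Submodule.ne_bot_iff _).mp hNbot
    have : π' y = 0 := by
      rw [← LinearMap.mem_ker, hker]; exact Submodule.mem_top
    rw [hπ'eq, hπid y hy] at this
    exact hy0 this
  have hinj' : ∀ g : G, ∀ x y : M, x ∈ ℳ g → y ∈ ℳ g → π x = π y → x = y := by
    intro g x y hx hy h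
    have := hinj g (x - y) (sub_mem hx hy) (by rw [map_sub, h, sub_self])
    exact sub_eq_zero.mp this
  -- the covering
  set C : G → Submodule ℂ M := fun g => (ℳ g).map π' with hCdef
  have hC2 : ∀ g h : G, ∀ a ∈ 𝒜 g, ∀ m ∈ C h, a • m ∈ C (g + h) := by
    intro g h a ha m hm
    obtain ⟨x, hx, rfl⟩ := hm
    exact ⟨a • x, hact g h a ha x hx, hπ'smul a x⟩
  have hC1 : (⨆ g, C g) = Submodule.restrictScalars ℂ N := by
    rw [hCdef, ← Submodule.map_iSup, hMsup]
    apply le_antisymm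
    · rintro m ⟨x, -, rfl⟩
      exact hπmem x
    · intro y hy
      exact ⟨y, Submodule.mem_top, by rw [hπ'eq, hπid y hy]⟩
  have hCsub : ∀ g : G, ∀ x ∈ ℳ g, π' x ∈ C g := fun g x hx => Submodule.mem_map_of_mem hx
  -- the isomorphisms
  set f : ∀ g : G, (ℳ g) →ₗ[ℂ] (C g) := fun g =>
    LinearMap.codRestrict (C g) (π'.domRestrict (ℳ g)) (fun x => hCsub g x x.2) with hfdef
  have hfval : ∀ (g : G) (x : ↥(ℳ g)), ((f g x : ↥(C g)) : M) = π (x : M) := fun g x => rfl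
  have hfbij : ∀ g, Function.Bijective (f g) := by
    intro g
    constructor
    · intro x y hxy
      have : π (x : M) = π (y : M) := by rw [← hfval g x, ← hfval g y, hxy]
      exact Subtype.ext (hinj' g x y x.2 y.2 this)
    · rintro ⟨m, x, hx, rfl⟩
      exact ⟨⟨x, hx⟩, rfl⟩
  set e : ∀ g : G, ↥(C g) ≃ₗ[ℂ] ↥(ℳ g) := fun g =>
    (LinearEquiv.ofBijective (f g) (hfbij g)).symm with hedef
  have hfe : ∀ (g : G) (z : ↥(C g)), π ((e g z : ↥(ℳ g)) : M) = (z : M) := by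
    intro g z
    have := (LinearEquiv.ofBijective (f g) (hfbij g)).apply_symm_apply z
    rw [← hfval g (e g z)]
    exact congrArg Subtype.val this
  -- thinness
  have hthin : IsThinCoveringOf 𝒜 N C := by
    refine ⟨⟨hC1, hC2⟩, ?_⟩
    rintro D hD ⟨k, hk⟩
    have hclaim : ∀ g : G, C g ≤ D (g + k) := by
      have hDne : ∃ h, D h ≠ ⊥ := by
        by_contra hall
        push_neg at hall
        have : (⨆ g, D g) = ⊥ := by simp [hall]
        rw [hD.1] at this
        exact hNbot ((Submodule.restrictScalars_eq_bot_iff ℂ A M).mp this)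
      obtain ⟨h, hh⟩ := hDne
      obtain ⟨y, hy, hy0⟩ := (Submodule.ne_bot_iff _).mp hh
      have hyC : y ∈ C (h - k) := by
        have := hk (h - k)
        rw [sub_add_cancel] at this
        exact this hy
      obtain ⟨x, hxM, hxy⟩ := hyC
      have hx0 : x ≠ 0 := by
        intro h0
        rw [h0, map_zero] at hxy
        exact hy0 hxy.symm
      have hP := hgrsimple (fun g => ℳ g ⊓ Submodule.comap π' (D (g + k)))
        (fun g => inf_le_left)
        (by
          intro j g a ha m hm
          refine ⟨hact j g a ha m hm.1, ?_⟩
          have h1 : π' (a • m) = a • π' m := hπ'smul a m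
          have h2 : a • π' m ∈ D (j + (g + k)) := hD.2 j (g + k) a ha (π' m) hm.2
          show π' (a • m) ∈ D (j + g + k)
          rw [h1, add_assoc]
          exact h2)
        ⟨h - k, by
          refine (Submodule.ne_bot_iff _).mpr ⟨x, ⟨hxM, ?_⟩, hx0⟩
          show π' x ∈ D (h - k + k)
          rw [sub_add_cancel, hxy]
          exact hy⟩
      intro g m hm
      obtain ⟨x', hx', rfl⟩ := hm
      have : x' ∈ ℳ g ⊓ Submodule.comap π' (D (g + k)) := by
        rw [show ℳ g ⊓ Submodule.comap π' (D (g + k)) = ℳ g from hP g]; exact hx'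
      exact this.2
    refine ⟨-k, fun g => ?_⟩
    have := hclaim (g + -k)
    rwa [neg_add_cancel_right] at this
  refine ⟨N, hN, C, hthin, e, ?_⟩
  intro k g a ha m hm
  have h1 : ((e (k + g) ⟨a • m, hthin.1.2 k g a ha m hm⟩ : ↥(ℳ (k + g))) : M) ∈ ℳ (k + g) :=
    (e (k + g) ⟨a • m, hthin.1.2 k g a ha m hm⟩).2
  have h2 : a • ((e g ⟨m, hm⟩ : ↥(ℳ g)) : M) ∈ ℳ (k + g) :=
    hact k g a ha _ (e g ⟨m, hm⟩).2
  refine hinj' (k + g) _ _ h1 h2 ?_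
  rw [hfe (k + g) ⟨a • m, hthin.1.2 k g a ha m hm⟩]
  show a • m = π (a • ((e g ⟨m, hm⟩ : ↥(ℳ g)) : M))
  rw [π.map_smul, hfe g ⟨m, hm⟩]
end
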